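/- arXiv:2101.08932 — 5 statements merged into one kernel-verified Lean document; each statement's English description precedes it below -/
import Mathlib

section
/- Let v be a smooth solution of the inhomogeneous heat equation v_t − v_xx = f on (0,T] × Ω with initial data v(0,x) = g(x) on Ω and homogeneous Dirichlet boundary condition v(t,x) = 0 on [0,T] × ∂Ω. Then there exists a constant C₃ (depending only on Ω and T) such that esssup_{0≤t≤T} ‖v(t)‖_{H²(Ω)} ≤ C₃ (‖f‖_{H¹(0,T;L²(Ω))} + ‖g‖_{H²(Ω)}). -/
open MeasureTheory Set
open Filter Topology

namespace Stmt2

/-- time derivative of a function `v : ℝ → ℝ → ℝ` of (time, space). -/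
noncomputable def pt (v : ℝ → ℝ → ℝ) (t x : ℝ) : ℝ := deriv (fun s => v s x) t

/-- first spatial derivative. -/
noncomputable def px (v : ℝ → ℝ → ℝ) (t x : ℝ) : ℝ := deriv (fun y => v t y) x

/-- second spatial derivative. -/
noncomputable def pxx (v : ℝ → ℝ → ℝ) (t x : ℝ) : ℝ := deriv (deriv (fun y => v t y)) x

noncomputable def Dt (U : ℝ × ℝ → ℝ) (p : ℝ × ℝ) : ℝ := fderiv ℝ U p (1, 0)
noncomputable def Dx (U : ℝ × ℝ → ℝ) (p : ℝ × ℝ) : ℝ := fderiv ℝ U p (0, 1)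

lemma hasDerivAt_uncurry_fst {U : ℝ × ℝ → ℝ} {t x : ℝ} (hU : DifferentiableAt ℝ U (t, x)) :
    HasDerivAt (fun s => U (s, x)) (Dt U (t, x)) t := by
  have h1 : HasDerivAt (fun s : ℝ => (s, x)) ((1 : ℝ), (0 : ℝ)) t :=
    (hasDerivAt_id t).prodMk (hasDerivAt_const t x)
  exact hU.hasFDerivAt.comp_hasDerivAt t h1

lemma hasDerivAt_uncurry_snd {U : ℝ × ℝ → ℝ} {t x : ℝ} (hU : DifferentiableAt ℝ U (t, x)) :
    HasDerivAt (fun y => U (t, y)) (Dx U (t, x)) x := by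
  have h1 : HasDerivAt (fun y : ℝ => (t, y)) ((0 : ℝ), (1 : ℝ)) x :=
    (hasDerivAt_const x t).prodMk (hasDerivAt_id x)
  exact hU.hasFDerivAt.comp_hasDerivAt x h1

lemma contDiff_Dt_top {U : ℝ × ℝ → ℝ} (hU : ContDiff ℝ (⊤ : ℕ∞) U) : ContDiff ℝ (⊤ : ℕ∞) (Dt U) :=
  (hU.fderiv_right (m := (⊤ : ℕ∞)) (by simp)).clm_apply contDiff_const

lemma contDiff_Dx_top {U : ℝ × ℝ → ℝ} (hU : ContDiff ℝ (⊤ : ℕ∞) U) : ContDiff ℝ (⊤ : ℕ∞) (Dx U) :=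
  (hU.fderiv_right (m := (⊤ : ℕ∞)) (by simp)).clm_apply contDiff_const

lemma continuous_Dt {U : ℝ × ℝ → ℝ} (hU : ContDiff ℝ 1 U) : Continuous (Dt U) :=
  ((hU.fderiv_right (m := 0) le_rfl).clm_apply contDiff_const).continuous

/-- Clairaut / Schwarz symmetry for smooth functions. -/
lemma Dx_Dt_eq_Dt_Dx {U : ℝ × ℝ → ℝ} (hU : ContDiff ℝ (⊤ : ℕ∞) U) (p : ℝ × ℝ) :
    Dx (Dt U) p = Dt (Dx U) p := by
  have hfd : Differentiable ℝ (fderiv ℝ U) :=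
    (hU.fderiv_right (m := (⊤ : ℕ∞)) (by simp)).differentiable (by simp)
  have hsymm : IsSymmSndFDerivAt ℝ U p := by
    refine (hU.contDiffAt).isSymmSndFDerivAt ?_
    rw [minSmoothness_of_isRCLikeNormedField]
    exact WithTop.coe_le_coe.mpr le_top
  have h1 : ∀ (e : ℝ × ℝ) (q : ℝ × ℝ) (e' : ℝ × ℝ),
      fderiv ℝ (fun r => fderiv ℝ U r e) q e' = fderiv ℝ (fderiv ℝ U) q e' e := by
    intro e q e'
    have : HasFDerivAt (fun r => fderiv ℝ U r e)
        ((ContinuousLinearMap.apply ℝ ℝ e).comp (fderiv ℝ (fderiv ℝ U) q)) q :=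
      (ContinuousLinearMap.apply ℝ ℝ e).hasFDerivAt.comp q (hfd q).hasFDerivAt
    rw [this.fderiv]; rfl
  unfold Dt Dx
  rw [h1, h1]
  exact hsymm.eq _ _

lemma pt_eq {u : ℝ → ℝ → ℝ} {t x : ℝ}
    (hU : DifferentiableAt ℝ (fun p : ℝ × ℝ => u p.1 p.2) (t, x)) :
    pt u t x = Dt (fun p : ℝ × ℝ => u p.1 p.2) (t, x) :=
  (hasDerivAt_uncurry_fst hU).deriv

lemma px_eq {u : ℝ → ℝ → ℝ} {t x : ℝ}
    (hU : DifferentiableAt ℝ (fun p : ℝ × ℝ => u p.1 p.2) (t, x)) :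
    px u t x = Dx (fun p : ℝ × ℝ => u p.1 p.2) (t, x) :=
  (hasDerivAt_uncurry_snd hU).deriv

lemma pxx_eq {u : ℝ → ℝ → ℝ} {t x : ℝ}
    (hU : ContDiff ℝ (⊤ : ℕ∞) (fun p : ℝ × ℝ => u p.1 p.2)) :
    pxx u t x = Dx (Dx (fun p : ℝ × ℝ => u p.1 p.2)) (t, x) := by
  set U : ℝ × ℝ → ℝ := fun p => u p.1 p.2 with hUdef
  have hdU : Differentiable ℝ U := hU.differentiable (by simp)
  have hDx : ContDiff ℝ (⊤ : ℕ∞) (Dx U) := contDiff_Dx_top hU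
  have h1 : deriv (fun y => u t y) = fun y => Dx U (t, y) := by
    funext y; exact (hasDerivAt_uncurry_snd (hdU (t, y))).deriv
  unfold pxx
  rw [h1]
  exact (hasDerivAt_uncurry_snd ((hDx.differentiable (by simp)) (t, x))).deriv

lemma hasDerivAt_param_integral {U Ut : ℝ → ℝ → ℝ}
    (hU : Continuous fun p : ℝ × ℝ => U p.1 p.2)
    (hUt : Continuous fun p : ℝ × ℝ => Ut p.1 p.2)
    (hd : ∀ t x, HasDerivAt (fun s => U s x) (Ut t x) t)
    (a b t₀ : ℝ) :
    HasDerivAt (fun t => ∫ x in a..b, U t x) (∫ x in a..b, Ut t₀ x) t₀ := by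
  have hcont : ∀ t, Continuous fun x => U t x := fun t =>
    hU.comp (continuous_const.prodMk continuous_id)
  have hcont' : ∀ t, Continuous fun x => Ut t x := fun t =>
    hUt.comp (continuous_const.prodMk continuous_id)
  have hKc : IsCompact (Metric.closedBall t₀ 1 ×ˢ uIcc a b) :=
    (isCompact_closedBall _ _).prod isCompact_uIcc
  obtain ⟨M, hM⟩ := hKc.exists_bound_of_continuousOn hUt.continuousOn
  have := intervalIntegral.hasDerivAt_integral_of_dominated_loc_of_deriv_le
    (F := fun t x => U t x) (F' := fun t x => Ut t x) (x₀ := t₀) (a := a) (b := b)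
    (μ := volume) (bound := fun _ => M) (Metric.ball_mem_nhds t₀ one_pos)
    (Filter.Eventually.of_forall fun t => (hcont t).aestronglyMeasurable)
    ((hcont t₀).intervalIntegrable a b)
    ((hcont' t₀).aestronglyMeasurable)
    (Filter.Eventually.of_forall fun x hx t' ht' =>
      hM (t', x) ⟨Metric.ball_subset_closedBall ht', Ioc_subset_Icc_self hx⟩)
    (intervalIntegrable_const)
    (Filter.Eventually.of_forall fun x _ t' _ => hd t' x)
  exact this.2

lemma sq_intervalIntegral_le {h : ℝ → ℝ} (hc : Continuous h) {c d : ℝ} (hcd : c ≤ d) :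
    (∫ u in c..d, h u) ^ 2 ≤ (d - c) * ∫ u in c..d, (h u) ^ 2 := by
  have h2 : Continuous fun u => (h u) ^ 2 := hc.fun_pow 2
  set I := ∫ u in c..d, h u with hI
  set I2 := ∫ u in c..d, (h u) ^ 2 with hI2
  have key : I ^ 2 = ∫ u' in c..d, h u' * I := by
    rw [intervalIntegral.integral_mul_const]; ring
  have step1 : ∀ u' : ℝ, h u' * I ≤ ((d - c) * (h u') ^ 2 + I2) / 2 := by
    intro u'
    have hrw : h u' * I = ∫ u in c..d, h u' * h u := by
      rw [intervalIntegral.integral_const_mul]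
    rw [hrw]
    have mono : ∫ u in c..d, h u' * h u ≤ ∫ u in c..d, ((h u') ^ 2 + (h u) ^ 2) / 2 := by
      apply intervalIntegral.integral_mono_on hcd
        ((continuous_const.fun_mul hc).intervalIntegrable _ _)
        (((continuous_const.fun_add h2).div_const 2).intervalIntegrable _ _)
      intro u _
      show h u' * h u ≤ ((h u') ^ 2 + (h u) ^ 2) / 2
      nlinarith [sq_nonneg (h u' - h u)]
    calc ∫ u in c..d, h u' * h u ≤ ∫ u in c..d, ((h u') ^ 2 + (h u) ^ 2) / 2 := mono
      _ = ((d - c) * (h u') ^ 2 + I2) / 2 := by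
          rw [intervalIntegral.integral_div, intervalIntegral.integral_add
            (intervalIntegrable_const) (h2.intervalIntegrable _ _),
            intervalIntegral.integral_const]
          simp [smul_eq_mul]
          exact hI2.symm
  have mono2 : ∫ u' in c..d, h u' * I ≤ ∫ u' in c..d, ((d - c) * (h u') ^ 2 + I2) / 2 := by
    apply intervalIntegral.integral_mono_on hcd
      ((hc.fun_mul continuous_const).intervalIntegrable _ _)
      ((((continuous_const.fun_mul h2).fun_add continuous_const).div_const 2).intervalIntegrable _ _)
    exact fun u _ => step1 u
  have final : ∫ u' in c..d, ((d - c) * (h u') ^ 2 + I2) / 2 = (d - c) * I2 := by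
    rw [intervalIntegral.integral_div, intervalIntegral.integral_add
      ((continuous_const.fun_mul h2).intervalIntegrable _ _) (intervalIntegrable_const),
      intervalIntegral.integral_const_mul, intervalIntegral.integral_const]
    simp only [smul_eq_mul, ← hI2]
    ring
  rw [key]
  calc ∫ u' in c..d, h u' * I ≤ ∫ u' in c..d, ((d - c) * (h u') ^ 2 + I2) / 2 := mono2
    _ = (d - c) * I2 := final

lemma intervalIntegral_swap_cont {G : ℝ → ℝ → ℝ}
    (hG : Continuous fun p : ℝ × ℝ => G p.1 p.2)
    {c d e r : ℝ} (hcd : c ≤ d) (her : e ≤ r) :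
    ∫ x in e..r, (∫ u in c..d, G u x) = ∫ u in c..d, ∫ x in e..r, G u x := by
  have hint : Integrable (fun q : ℝ × ℝ => G q.2 q.1)
      ((volume.restrict (Ioc e r)).prod (volume.restrict (Ioc c d))) := by
    rw [Measure.prod_restrict]
    have hcont : Continuous fun q : ℝ × ℝ => G q.2 q.1 :=
      hG.comp (continuous_snd.prodMk continuous_fst)
    have : IntegrableOn (fun q : ℝ × ℝ => G q.2 q.1) (Icc e r ×ˢ Icc c d) := by
      exact hcont.continuousOn.integrableOn_compact (isCompact_Icc.prod isCompact_Icc)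
    exact this.mono_set (prod_mono Ioc_subset_Icc_self Ioc_subset_Icc_self)
  rw [intervalIntegral.integral_of_le her, intervalIntegral.integral_of_le hcd]
  simp_rw [intervalIntegral.integral_of_le hcd, intervalIntegral.integral_of_le her]
  exact integral_integral_swap hint

lemma integral_congr_Ioo {f g : ℝ → ℝ} {c d : ℝ} (hcd : c ≤ d)
    (h : ∀ x ∈ Ioo c d, f x = g x) :
    ∫ x in c..d, f x = ∫ x in c..d, g x := by
  apply intervalIntegral.integral_congr_ae
  filter_upwards [measure_eq_zero_iff_ae_notMem.mp ((Set.toFinite {d}).measure_zero volume)]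
    with x hx hxI
  rw [uIoc_of_le hcd] at hxI
  exact h x ⟨hxI.1, lt_of_le_of_ne hxI.2 (by simpa using hx)⟩

lemma integral_mono_Ioo {f g : ℝ → ℝ} {c d : ℝ} (hcd : c ≤ d)
    (hf : IntervalIntegrable f volume c d) (hg : IntervalIntegrable g volume c d)
    (h : ∀ x ∈ Ioo c d, f x ≤ g x) :
    (∫ x in c..d, f x) ≤ ∫ x in c..d, g x := by
  apply intervalIntegral.integral_mono_ae_restrict hcd hf hg
  rw [Filter.EventuallyLE, ae_restrict_iff' measurableSet_Icc]
  filter_upwards [measure_eq_zero_iff_ae_notMem.mp ((Set.toFinite ({c, d} : Set ℝ)).measure_zero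
    volume)] with x hx hxI
  simp only [mem_insert_iff, mem_singleton_iff, not_or] at hx
  exact h x ⟨lt_of_le_of_ne hxI.1 (Ne.symm hx.1), lt_of_le_of_ne hxI.2 hx.2⟩

set_option maxHeartbeats 2000000 in
/-- For a smooth solution `v` of `v_t - v_xx = f` on `(0,T] × Ω`
(with `Ω = (a,b)`), initial data `g` and homogeneous Dirichlet boundary conditions,
there is a constant `C₃` depending only on `Ω` and `T` with
`esssup_{0 ≤ t ≤ T} ‖v(t)‖_{H²(Ω)} ≤ C₃ (‖f‖_{H¹(0,T;L²(Ω))} + ‖g‖_{H²(Ω)})`. -/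
theorem heat_H2_estimate (a b T : ℝ) (hab : a < b) (hT : 0 < T) :
    ∃ C₃ : ℝ, 0 < C₃ ∧
      ∀ (v f : ℝ → ℝ → ℝ) (g : ℝ → ℝ),
        ContDiff ℝ (⊤ : ℕ∞) (fun p : ℝ × ℝ => v p.1 p.2) →
        ContDiff ℝ 1 (fun p : ℝ × ℝ => f p.1 p.2) →
        ContDiff ℝ 2 g →
        (∀ t ∈ Ioc (0 : ℝ) T, ∀ x ∈ Ioo a b, pt v t x - pxx v t x = f t x) →
        (∀ x ∈ Ioo a b, v 0 x = g x) →
        (∀ t ∈ Icc (0 : ℝ) T, v t a = 0 ∧ v t b = 0) →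
        essSup
            (fun t =>
              Real.sqrt (∫ x in a..b,
                ((v t x) ^ 2 + (px v t x) ^ 2 + (pxx v t x) ^ 2)))
            (volume.restrict (Icc (0 : ℝ) T)) ≤
          C₃ * (Real.sqrt (∫ s in (0 : ℝ)..T,
                ((∫ x in a..b, (f s x) ^ 2) + ∫ x in a..b, (pt f s x) ^ 2)) +
            Real.sqrt (∫ x in a..b,
              ((g x) ^ 2 + (deriv g x) ^ 2 + (deriv (deriv g) x) ^ 2))) := by
  have hab' : a ≤ b := hab.le
  have hT' : (0:ℝ) ≤ T := hT.le
  set L : ℝ := b - a with hLdef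
  have hL : 0 < L := sub_pos.2 hab
  set cT : ℝ := 2 / T + 2 * T with hcdef
  have hc : 0 < cT := by positivity
  set E : ℝ := Real.exp T with hEdef
  have hE : 1 ≤ E := Real.one_le_exp hT'
  have hE0 : 0 < E := lt_of_lt_of_le one_pos hE
  set M : ℝ := L ^ 4 + L ^ 2 + 1 with hMdef
  have hM : 1 ≤ M := by nlinarith [pow_pos hL 4, pow_pos hL 2]
  set C₀ : ℝ := 2 * M * E * (3 + 3 * cT) with hC0def
  have hC0 : 0 < C₀ := by rw [hC0def]; positivity
  refine ⟨Real.sqrt C₀ + 1, by positivity, ?_⟩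
  intro v f g hv hf hg hpde hinit hbc
  -- uncurried functions and their derivatives
  set V : ℝ × ℝ → ℝ := fun p => v p.1 p.2 with hVdef
  set F : ℝ × ℝ → ℝ := fun p => f p.1 p.2 with hFdef
  set W : ℝ × ℝ → ℝ := Dt V with hWdef
  set Vx : ℝ × ℝ → ℝ := Dx V with hVxdef
  set Vxx : ℝ × ℝ → ℝ := Dx (Dx V) with hVxxdef
  set Wx : ℝ × ℝ → ℝ := Dx (Dt V) with hWxdef
  set Wxx : ℝ × ℝ → ℝ := Dx (Dx (Dt V)) with hWxxdef
  set Wt : ℝ × ℝ → ℝ := Dt (Dt V) with hWtdef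
  set Ft : ℝ × ℝ → ℝ := Dt F with hFtdef
  have hVsm : ContDiff ℝ (⊤ : ℕ∞) V := hv
  have hWsm : ContDiff ℝ (⊤ : ℕ∞) W := contDiff_Dt_top hVsm
  have hVxsm : ContDiff ℝ (⊤ : ℕ∞) Vx := contDiff_Dx_top hVsm
  have hVxxsm : ContDiff ℝ (⊤ : ℕ∞) Vxx := contDiff_Dx_top hVxsm
  have hWxsm : ContDiff ℝ (⊤ : ℕ∞) Wx := contDiff_Dx_top hWsm
  have hWxxsm : ContDiff ℝ (⊤ : ℕ∞) Wxx := contDiff_Dx_top hWxsm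
  have hWtsm : ContDiff ℝ (⊤ : ℕ∞) Wt := contDiff_Dt_top hWsm
  have hFc : Continuous F := hf.continuous
  have hg'sm : ContDiff ℝ 1 (deriv g) := by
    have h2 : ContDiff ℝ (1 + 1) g := by exact_mod_cast hg
    exact (contDiff_succ_iff_deriv.mp h2).2.2
  have hgc : Continuous g := hg.continuous
  have hg'c : Continuous (deriv g) := hg'sm.continuous
  have hg''c : Continuous (deriv (deriv g)) := hg'sm.continuous_deriv le_rfl
  have hFtc : Continuous Ft := continuous_Dt hf
  have dV : Differentiable ℝ V := hVsm.differentiable (by simp)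
  -- pointwise derivative facts
  have hdWt : ∀ t x, HasDerivAt (fun s => W (s, x)) (Wt (t, x)) t := fun t x =>
    hasDerivAt_uncurry_fst ((hWsm.differentiable (by simp)) _)
  have hdVx : ∀ t x, HasDerivAt (fun y => V (t, y)) (Vx (t, x)) x := fun t x =>
    hasDerivAt_uncurry_snd (dV _)
  have hdVxx : ∀ t x, HasDerivAt (fun y => Vx (t, y)) (Vxx (t, x)) x := fun t x =>
    hasDerivAt_uncurry_snd ((hVxsm.differentiable (by simp)) _)
  have hdWx : ∀ t x, HasDerivAt (fun y => W (t, y)) (Wx (t, x)) x := fun t x =>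
    hasDerivAt_uncurry_snd ((hWsm.differentiable (by simp)) _)
  have hdWxx : ∀ t x, HasDerivAt (fun y => Wx (t, y)) (Wxx (t, x)) x := fun t x =>
    hasDerivAt_uncurry_snd ((hWxsm.differentiable (by simp)) _)
  have hdF : ∀ t x, HasDerivAt (fun s => F (s, x)) (Ft (t, x)) t := fun t x =>
    hasDerivAt_uncurry_fst ((hf.differentiable one_ne_zero) _)
  -- translations
  have hpxv : ∀ t x, px v t x = Vx (t, x) := fun t x => px_eq (dV _)
  have hpxxv : ∀ t x, pxx v t x = Vxx (t, x) := fun t x => pxx_eq hv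
  have hptf : ∀ t x, pt f t x = Ft (t, x) := fun t x => pt_eq ((hf.differentiable one_ne_zero) _)
  -- the energy functionals
  set Φ : ℝ → ℝ := fun t => ∫ x in a..b, W (t, x) ^ 2 with hΦdef
  set dl : ℝ → ℝ := fun t => ∫ x in a..b, Ft (t, x) ^ 2 with hdldef
  set Q : ℝ → ℝ := fun t => ∫ x in a..b, F (t, x) ^ 2 with hQdef
  set Ψ : ℝ → ℝ := fun t => ∫ u in (0:ℝ)..t, dl u with hΨdef
  set Kf2 : ℝ := ∫ s in (0:ℝ)..T, Q s with hKf2def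
  set Kt2 : ℝ := ∫ s in (0:ℝ)..T, dl s with hKt2def
  set Gxx : ℝ := ∫ x in a..b, (deriv (deriv g) x) ^ 2 with hGxxdef
  set G2 : ℝ := ∫ x in a..b, ((g x) ^ 2 + (deriv g x) ^ 2 + (deriv (deriv g) x) ^ 2) with hG2def
  -- PDE in uncurried form
  have hPDE : ∀ t ∈ Ioc (0:ℝ) T, ∀ x ∈ Ioo a b, W (t, x) - Vxx (t, x) = F (t, x) := by
    intro t ht x hx
    have h := hpde t ht x hx
    rwa [pt_eq (dV (t, x)), hpxxv] at h
  have hDtVxx : ∀ p, Dt Vxx p = Wxx p := by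
    intro p
    have h2 : Dt Vx = Dx W := by
      funext q; exact (Dx_Dt_eq_Dt_Dx hv q).symm
    have h1 : Dt Vxx p = Dx (Dt Vx) p := (Dx_Dt_eq_Dt_Dx hVxsm p).symm
    rw [h1, h2]
  have hPDEt : ∀ t ∈ Ioo (0:ℝ) T, ∀ x ∈ Ioo a b, Wt (t, x) - Wxx (t, x) = Ft (t, x) := by
    intro t ht x hx
    have hmem : Ioc (0:ℝ) T ∈ 𝓝 t :=
      Filter.mem_of_superset (Ioo_mem_nhds ht.1 ht.2) Ioo_subset_Ioc_self
    have heq : (fun s => W (s, x) - Vxx (s, x)) =ᶠ[𝓝 t] (fun s => F (s, x)) :=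
      Filter.eventually_of_mem hmem fun s hs => hPDE s hs x hx
    have hLd : HasDerivAt (fun s => W (s, x) - Vxx (s, x)) (Wt (t, x) - Dt Vxx (t, x)) t :=
      (hdWt t x).sub (hasDerivAt_uncurry_fst ((hVxxsm.differentiable (by simp)) _))
    have hder : Wt (t, x) - Dt Vxx (t, x) = Ft (t, x) := by
      have hde := heq.deriv_eq
      rw [hLd.deriv, (hdF t x).deriv] at hde
      exact hde
    rwa [hDtVxx (t, x)] at hder
  have hWa : ∀ t ∈ Ioo (0:ℝ) T, W (t, a) = 0 := by
    intro t ht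
    have heq : (fun s => V (s, a)) =ᶠ[𝓝 t] (fun _ => (0:ℝ)) :=
      Filter.eventually_of_mem (Ioo_mem_nhds ht.1 ht.2) fun s hs =>
        (hbc s ⟨hs.1.le, hs.2.le⟩).1
    have h1 : W (t, a) = deriv (fun s => V (s, a)) t :=
      (hasDerivAt_uncurry_fst (dV _)).deriv.symm
    rw [h1, heq.deriv_eq, deriv_const]
  have hWb : ∀ t ∈ Ioo (0:ℝ) T, W (t, b) = 0 := by
    intro t ht
    have heq : (fun s => V (s, b)) =ᶠ[𝓝 t] (fun _ => (0:ℝ)) :=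
      Filter.eventually_of_mem (Ioo_mem_nhds ht.1 ht.2) fun s hs =>
        (hbc s ⟨hs.1.le, hs.2.le⟩).2
    have h1 : W (t, b) = deriv (fun s => V (s, b)) t :=
      (hasDerivAt_uncurry_fst (dV _)).deriv.symm
    rw [h1, heq.deriv_eq, deriv_const]
  -- basic nonnegativity and continuity of the functionals
  have hΦnn : ∀ t, 0 ≤ Φ t := fun t =>
    intervalIntegral.integral_nonneg hab' fun x _ => sq_nonneg _
  have hdlnn : ∀ t, 0 ≤ dl t := fun t =>
    intervalIntegral.integral_nonneg hab' fun x _ => sq_nonneg _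
  have hQnn : ∀ t, 0 ≤ Q t := fun t =>
    intervalIntegral.integral_nonneg hab' fun x _ => sq_nonneg _
  have hQc : Continuous Q := by
    have hco : Continuous fun p : ℝ × ℝ => F p ^ 2 := hFc.fun_pow 2
    exact intervalIntegral.continuous_parametric_intervalIntegral_of_continuous'
      (f := fun t x => F (t, x) ^ 2) hco a b
  have hdlc : Continuous dl := by
    have hco : Continuous fun p : ℝ × ℝ => Ft p ^ 2 := hFtc.fun_pow 2
    exact intervalIntegral.continuous_parametric_intervalIntegral_of_continuous'
      (f := fun t x => Ft (t, x) ^ 2) hco a b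
  have hKf2nn : 0 ≤ Kf2 := intervalIntegral.integral_nonneg hT' fun s _ => hQnn s
  have hKt2nn : 0 ≤ Kt2 := intervalIntegral.integral_nonneg hT' fun s _ => hdlnn s
  -- derivative of Φ
  have hΦd : ∀ t₀, HasDerivAt Φ (∫ x in a..b, 2 * W (t₀, x) * Wt (t₀, x)) t₀ := by
    intro t₀
    have hUc : Continuous fun p : ℝ × ℝ => W p ^ 2 := hWsm.continuous.fun_pow 2
    have hUtc : Continuous fun p : ℝ × ℝ => 2 * W p * Wt p :=
      (continuous_const.fun_mul hWsm.continuous).fun_mul hWtsm.continuous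
    exact hasDerivAt_param_integral (U := fun t x => W (t, x) ^ 2)
      (Ut := fun t x => 2 * W (t, x) * Wt (t, x)) hUc hUtc
      (fun t x => by simpa using (hdWt t x).fun_pow 2) a b t₀
  have hΦ'le : ∀ t ∈ Ioo (0:ℝ) T, (∫ x in a..b, 2 * W (t, x) * Wt (t, x)) ≤ Φ t + dl t := by
    intro t ht
    have hcW : Continuous fun x => W (t, x) :=
      hWsm.continuous.comp (continuous_const.prodMk continuous_id)
    have hcWxx : Continuous fun x => Wxx (t, x) :=
      hWxxsm.continuous.comp (continuous_const.prodMk continuous_id)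
    have hcWxp : Continuous fun x => Wx (t, x) :=
      hWxsm.continuous.comp (continuous_const.prodMk continuous_id)
    have hcFt : Continuous fun x => Ft (t, x) :=
      hFtc.comp (continuous_const.prodMk continuous_id)
    have h1 : ∫ x in a..b, 2 * W (t, x) * Wt (t, x) =
        ∫ x in a..b, (2 * W (t, x) * Wxx (t, x) + 2 * W (t, x) * Ft (t, x)) := by
      apply integral_congr_Ioo hab'
      intro x hx
      have h := hPDEt t ht x hx
      have h2 : Wt (t, x) = Wxx (t, x) + Ft (t, x) := by linarith
      rw [h2]; ring
    have hsplit : ∫ x in a..b, (2 * W (t, x) * Wxx (t, x) + 2 * W (t, x) * Ft (t, x)) =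
        (∫ x in a..b, 2 * W (t, x) * Wxx (t, x)) + ∫ x in a..b, 2 * W (t, x) * Ft (t, x) :=
      intervalIntegral.integral_add
        (((continuous_const.fun_mul hcW).fun_mul hcWxx).intervalIntegrable _ _)
        (((continuous_const.fun_mul hcW).fun_mul hcFt).intervalIntegrable _ _)
    have hIBP : (∫ x in a..b, (Wx (t, x) ^ 2 + W (t, x) * Wxx (t, x))) =
        W (t, b) * Wx (t, b) - W (t, a) * Wx (t, a) := by
      apply intervalIntegral.integral_eq_sub_of_hasDerivAt
      · intro x hx
        have hprod := (hdWx t x).fun_mul (hdWxx t x)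
        simpa only [sq] using hprod
      · exact ((hcWxp.fun_pow 2).fun_add (hcW.fun_mul hcWxx)).intervalIntegrable _ _
    have hIBP2 : (∫ x in a..b, Wx (t, x) ^ 2) + (∫ x in a..b, W (t, x) * Wxx (t, x)) = 0 := by
      rw [← intervalIntegral.integral_add ((hcWxp.fun_pow 2).intervalIntegrable _ _)
        ((hcW.fun_mul hcWxx).intervalIntegrable _ _), hIBP, hWa t ht, hWb t ht]
      ring
    have hWx2nn : 0 ≤ ∫ x in a..b, Wx (t, x) ^ 2 :=
      intervalIntegral.integral_nonneg hab' fun x _ => sq_nonneg _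
    have hterm1 : (∫ x in a..b, 2 * W (t, x) * Wxx (t, x)) ≤ 0 := by
      have hc2 : ∫ x in a..b, 2 * W (t, x) * Wxx (t, x) =
          2 * ∫ x in a..b, W (t, x) * Wxx (t, x) := by
        simp_rw [mul_assoc]
        rw [intervalIntegral.integral_const_mul]
      rw [hc2]
      linarith
    have hterm2 : (∫ x in a..b, 2 * W (t, x) * Ft (t, x)) ≤ Φ t + dl t := by
      have hmono : (∫ x in a..b, 2 * W (t, x) * Ft (t, x)) ≤
          ∫ x in a..b, (W (t, x) ^ 2 + Ft (t, x) ^ 2) :=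
        intervalIntegral.integral_mono_on hab'
          (((continuous_const.fun_mul hcW).fun_mul hcFt).intervalIntegrable _ _)
          (((hcW.fun_pow 2).fun_add (hcFt.fun_pow 2)).intervalIntegrable _ _)
          (fun x _ => by nlinarith [sq_nonneg (W (t, x) - Ft (t, x))])
      have hsp : ∫ x in a..b, (W (t, x) ^ 2 + Ft (t, x) ^ 2) = Φ t + dl t :=
        intervalIntegral.integral_add ((hcW.fun_pow 2).intervalIntegrable _ _)
          ((hcFt.fun_pow 2).intervalIntegrable _ _)
      linarith
    rw [h1, hsplit]
    linarith
  -- Gronwall-type bound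
  have hΨd : ∀ s : ℝ, HasDerivAt Ψ (dl s) s := fun s =>
    (hdlc.integral_hasStrictDerivAt 0 s).hasDerivAt
  have hΦbound : ∀ t ∈ Icc (0:ℝ) T, Φ t ≤ E * (Φ 0 + Kt2) := by
    have hHd : ∀ s : ℝ, HasDerivAt (fun r => Real.exp (-r) * Φ r - Ψ r)
        (-Real.exp (-s) * Φ s + Real.exp (-s) * (∫ x in a..b, 2 * W (s, x) * Wt (s, x))
          - dl s) s := by
      intro s
      have h1 : HasDerivAt (fun r : ℝ => Real.exp (-r)) (-Real.exp (-s)) s := by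
        simpa [Function.comp_def] using (Real.hasDerivAt_exp (-s)).comp s (hasDerivAt_neg s)
      exact (h1.fun_mul (hΦd s)).sub (hΨd s)
    have hanti : AntitoneOn (fun r => Real.exp (-r) * Φ r - Ψ r) (Icc 0 T) := by
      apply antitoneOn_of_deriv_nonpos (convex_Icc 0 T)
      · have hdiff : Differentiable ℝ (fun r => Real.exp (-r) * Φ r - Ψ r) := fun s =>
          (hHd s).differentiableAt
        exact hdiff.continuous.continuousOn
      · intro s _
        exact (hHd s).differentiableAt.differentiableWithinAt
      · intro s hs
        rw [interior_Icc] at hs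
        rw [(hHd s).deriv]
        have hle := hΦ'le s hs
        have he1 : Real.exp (-s) ≤ 1 := Real.exp_le_one_iff.mpr (by linarith [hs.1])
        have he0 : 0 < Real.exp (-s) := Real.exp_pos _
        have h3 : Real.exp (-s) * (∫ x in a..b, 2 * W (s, x) * Wt (s, x)) ≤
            Real.exp (-s) * (Φ s + dl s) := mul_le_mul_of_nonneg_left hle he0.le
        have h4 : Real.exp (-s) * dl s ≤ dl s := by nlinarith [hdlnn s]
        nlinarith [hΦnn s]
    intro t ht
    have h0 := hanti (left_mem_Icc.mpr hT') ht ht.1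
    simp only at h0
    have hΨ0 : Ψ 0 = 0 := intervalIntegral.integral_same
    rw [neg_zero, Real.exp_zero, one_mul, hΨ0, sub_zero] at h0
    have hΨt : Ψ t ≤ Kt2 :=
      intervalIntegral.integral_mono_interval le_rfl ht.1 ht.2
        (Filter.Eventually.of_forall fun s => hdlnn s) (hdlc.intervalIntegrable 0 T)
    have hΨtnn : 0 ≤ Ψ t := intervalIntegral.integral_nonneg ht.1 fun s _ => hdlnn s
    have hexpt : Real.exp t ≤ E := Real.exp_le_exp.mpr ht.2
    have h5 : Φ t = Real.exp t * (Real.exp (-t) * Φ t) := by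
      rw [← mul_assoc, ← Real.exp_add]; simp
    have h6 : Real.exp (-t) * Φ t ≤ Φ 0 + Ψ t := by linarith
    calc Φ t = Real.exp t * (Real.exp (-t) * Φ t) := h5
      _ ≤ Real.exp t * (Φ 0 + Ψ t) := mul_le_mul_of_nonneg_left h6 (Real.exp_pos t).le
      _ ≤ E * (Φ 0 + Kt2) := by
          apply mul_le_mul hexpt (by linarith) (by linarith [hΦnn 0]) (by linarith)
  -- initial data
  have hW0 : ∀ x ∈ Ioo a b, W (0, x) = deriv (deriv g) x + F (0, x) := by
    intro x hx
    have hVx0 : ∀ y ∈ Ioo a b, Vx (0, y) = deriv g y := by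
      intro y hy
      have heq : (fun y' => V (0, y')) =ᶠ[𝓝 y] g :=
        Filter.eventually_of_mem (Ioo_mem_nhds hy.1 hy.2) fun z hz => hinit z hz
      rw [← (hdVx 0 y).deriv]
      exact heq.deriv_eq
    have hVxx0 : Vxx (0, x) = deriv (deriv g) x := by
      have heq : (fun y => Vx (0, y)) =ᶠ[𝓝 x] deriv g :=
        Filter.eventually_of_mem (Ioo_mem_nhds hx.1 hx.2) hVx0
      rw [← (hdVxx 0 x).deriv]
      exact heq.deriv_eq
    have hφc : Continuous fun s => W (s, x) - Vxx (s, x) - F (s, x) :=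
      ((hWsm.continuous.comp (continuous_id.prodMk continuous_const)).sub
        (hVxxsm.continuous.comp (continuous_id.prodMk continuous_const))).sub
        (hFc.comp (continuous_id.prodMk continuous_const))
    have hzero : W (0, x) - Vxx (0, x) - F (0, x) = 0 := by
      have h1 : Tendsto (fun s => W (s, x) - Vxx (s, x) - F (s, x)) (𝓝[>] (0:ℝ))
          (𝓝 (W (0, x) - Vxx (0, x) - F (0, x))) :=
        (hφc.tendsto 0).mono_left nhdsWithin_le_nhds
      have h2 : ∀ᶠ s in 𝓝[>] (0:ℝ), W (s, x) - Vxx (s, x) - F (s, x) = 0 :=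
        Filter.eventually_of_mem (Ioc_mem_nhdsGT hT) fun s hs => by
          have := hPDE s hs x hx; linarith
      have h3 : Tendsto (fun s => W (s, x) - Vxx (s, x) - F (s, x)) (𝓝[>] (0:ℝ)) (𝓝 0) := by
        refine Tendsto.congr' ?_ tendsto_const_nhds
        filter_upwards [h2] with s hs
        exact hs.symm
      exact tendsto_nhds_unique h1 h3
    rw [← hVxx0]; linarith
  have hΦ0 : Φ 0 ≤ 2 * Gxx + 2 * Q 0 := by
    have hcW0 : Continuous fun x => W (0, x) :=
      hWsm.continuous.comp (continuous_const.prodMk continuous_id)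
    have hcF0 : Continuous fun x => F (0, x) :=
      hFc.comp (continuous_const.prodMk continuous_id)
    have hmono : Φ 0 ≤ ∫ x in a..b, (2 * (deriv (deriv g) x) ^ 2 + 2 * F (0, x) ^ 2) := by
      apply integral_mono_Ioo hab' ((hcW0.fun_pow 2).intervalIntegrable _ _)
        (((continuous_const.fun_mul (hg''c.fun_pow 2)).fun_add
          (continuous_const.fun_mul (hcF0.fun_pow 2))).intervalIntegrable _ _)
      intro x hx
      rw [hW0 x hx]
      nlinarith [sq_nonneg (deriv (deriv g) x - F (0, x))]
    have hsplit : ∫ x in a..b, (2 * (deriv (deriv g) x) ^ 2 + 2 * F (0, x) ^ 2) =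
        2 * Gxx + 2 * Q 0 := by
      rw [intervalIntegral.integral_add
        ((continuous_const.fun_mul (hg''c.fun_pow 2)).intervalIntegrable _ _)
        ((continuous_const.fun_mul (hcF0.fun_pow 2)).intervalIntegrable _ _),
        intervalIntegral.integral_const_mul, intervalIntegral.integral_const_mul]
    linarith
  -- bound on Q
  have hQb : ∀ t ∈ Icc (0:ℝ) T, Q t ≤ cT * (Kf2 + Kt2) := by
    have hcFtx : ∀ x : ℝ, Continuous fun u => Ft (u, x) := fun x =>
      hFtc.comp (continuous_id.prodMk continuous_const)
    have hRT : Continuous fun x => ∫ u in (0:ℝ)..T, Ft (u, x) ^ 2 := by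
      have hco : Continuous fun p : ℝ × ℝ => Ft (p.2, p.1) ^ 2 :=
        (hFtc.comp (continuous_snd.prodMk continuous_fst)).fun_pow 2
      exact intervalIntegral.continuous_parametric_intervalIntegral_of_continuous'
        (f := fun x u => Ft (u, x) ^ 2) hco 0 T
    have hpoint : ∀ t ∈ Icc (0:ℝ) T, ∀ s ∈ Icc (0:ℝ) T, ∀ x : ℝ,
        F (t, x) ^ 2 ≤ 2 * F (s, x) ^ 2 + 2 * T * ∫ u in (0:ℝ)..T, Ft (u, x) ^ 2 := by
      intro t ht s hs x
      have hftc : ∫ u in s..t, Ft (u, x) = F (t, x) - F (s, x) :=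
        intervalIntegral.integral_eq_sub_of_hasDerivAt (fun u _ => hdF u x)
          ((hcFtx x).intervalIntegrable _ _)
      have hcs : (∫ u in s..t, Ft (u, x)) ^ 2 ≤ T * ∫ u in (0:ℝ)..T, Ft (u, x) ^ 2 := by
        have hnn : 0 ≤ ∫ u in (0:ℝ)..T, Ft (u, x) ^ 2 :=
          intervalIntegral.integral_nonneg hT' fun u _ => sq_nonneg _
        rcases le_total s t with hst | hst
        · have h1 := sq_intervalIntegral_le (hcFtx x) hst
          have h2 : (∫ u in s..t, Ft (u, x) ^ 2) ≤ ∫ u in (0:ℝ)..T, Ft (u, x) ^ 2 :=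
            intervalIntegral.integral_mono_interval hs.1 hst ht.2
              (Filter.Eventually.of_forall fun u => sq_nonneg _)
              (((hcFtx x).fun_pow 2).intervalIntegrable _ _)
          have h3 : 0 ≤ ∫ u in s..t, Ft (u, x) ^ 2 :=
            intervalIntegral.integral_nonneg hst fun u _ => sq_nonneg _
          nlinarith [sub_nonneg.mpr hst, ht.2, hs.1]
        · have hsymm : (∫ u in s..t, Ft (u, x)) ^ 2 = (∫ u in t..s, Ft (u, x)) ^ 2 := by
            rw [intervalIntegral.integral_symm]; ring
          rw [hsymm]
          have h1 := sq_intervalIntegral_le (hcFtx x) hst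
          have h2 : (∫ u in t..s, Ft (u, x) ^ 2) ≤ ∫ u in (0:ℝ)..T, Ft (u, x) ^ 2 :=
            intervalIntegral.integral_mono_interval ht.1 hst hs.2
              (Filter.Eventually.of_forall fun u => sq_nonneg _)
              (((hcFtx x).fun_pow 2).intervalIntegrable _ _)
          have h3 : 0 ≤ ∫ u in t..s, Ft (u, x) ^ 2 :=
            intervalIntegral.integral_nonneg hst fun u _ => sq_nonneg _
          nlinarith [sub_nonneg.mpr hst, hs.2, ht.1]
      have hD : F (t, x) = F (s, x) + ∫ u in s..t, Ft (u, x) := by linarith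
      rw [hD]
      nlinarith [sq_nonneg (F (s, x) - ∫ u in s..t, Ft (u, x)), hcs]
    have hS : (∫ x in a..b, ∫ u in (0:ℝ)..T, Ft (u, x) ^ 2) = Kt2 := by
      have hco : Continuous fun p : ℝ × ℝ => Ft (p.1, p.2) ^ 2 := hFtc.fun_pow 2
      exact intervalIntegral_swap_cont (G := fun u x => Ft (u, x) ^ 2) hco hT' hab'
    have hQt2 : ∀ t ∈ Icc (0:ℝ) T, ∀ s ∈ Icc (0:ℝ) T, Q t ≤ 2 * Q s + 2 * T * Kt2 := by
      intro t ht s hs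
      have hcFt' : Continuous fun x => F (t, x) :=
        hFc.comp (continuous_const.prodMk continuous_id)
      have hcFs : Continuous fun x => F (s, x) :=
        hFc.comp (continuous_const.prodMk continuous_id)
      have hmono : Q t ≤
          ∫ x in a..b, (2 * F (s, x) ^ 2 + 2 * T * ∫ u in (0:ℝ)..T, Ft (u, x) ^ 2) :=
        intervalIntegral.integral_mono_on hab' ((hcFt'.fun_pow 2).intervalIntegrable _ _)
          (((continuous_const.fun_mul (hcFs.fun_pow 2)).add
            (continuous_const.fun_mul hRT)).intervalIntegrable _ _)
          (fun x _ => hpoint t ht s hs x)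
      have hsplit : ∫ x in a..b, (2 * F (s, x) ^ 2 + 2 * T * ∫ u in (0:ℝ)..T, Ft (u, x) ^ 2)
          = 2 * Q s + 2 * T * Kt2 := by
        rw [intervalIntegral.integral_add
          ((continuous_const.fun_mul (hcFs.fun_pow 2)).intervalIntegrable _ _)
          ((continuous_const.fun_mul hRT).intervalIntegrable _ _),
          intervalIntegral.integral_const_mul, intervalIntegral.integral_const_mul, hS]
      linarith
    intro t ht
    have hTQ : T * Q t ≤ 2 * Kf2 + 2 * T ^ 2 * Kt2 := by
      have h1 : ∫ _s in (0:ℝ)..T, Q t = T * Q t := by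
        rw [intervalIntegral.integral_const]; simp [smul_eq_mul]
      have h2 : (∫ _s in (0:ℝ)..T, Q t) ≤ ∫ s in (0:ℝ)..T, (2 * Q s + 2 * T * Kt2) :=
        intervalIntegral.integral_mono_on hT' (intervalIntegrable_const)
          (((continuous_const.fun_mul hQc).fun_add continuous_const).intervalIntegrable _ _)
          (fun s hs => hQt2 t ht s hs)
      have h3 : ∫ s in (0:ℝ)..T, (2 * Q s + 2 * T * Kt2) = 2 * Kf2 + T * (2 * T * Kt2) := by
        rw [intervalIntegral.integral_add ((continuous_const.fun_mul hQc).intervalIntegrable _ _)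
          intervalIntegrable_const, intervalIntegral.integral_const_mul,
          intervalIntegral.integral_const]
        simp only [smul_eq_mul, sub_zero]
        rfl
      nlinarith [h1, h2, h3]
    have hdiv : Q t ≤ (2 * Kf2 + 2 * T ^ 2 * Kt2) / T :=
      (le_div_iff₀ hT).mpr (by linarith)
    have heq2 : (2 * Kf2 + 2 * T ^ 2 * Kt2) / T = 2 / T * Kf2 + 2 * T * Kt2 := by
      field_simp
    rw [hcdef]
    nlinarith [mul_nonneg (by positivity : (0:ℝ) ≤ 2 / T) hKt2nn,
      mul_nonneg (by positivity : (0:ℝ) ≤ 2 * T) hKf2nn, hdiv, heq2]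
  -- elliptic estimate
  have helliptic : ∀ t ∈ Ioo (0:ℝ) T,
      (∫ x in a..b, (V (t, x) ^ 2 + Vx (t, x) ^ 2 + Vxx (t, x) ^ 2)) ≤
        M * (2 * Φ t + 2 * Q t) := by
    intro t ht
    have htIcc : t ∈ Icc (0:ℝ) T := ⟨ht.1.le, ht.2.le⟩
    have hcV : Continuous fun x => V (t, x) :=
      hVsm.continuous.comp (continuous_const.prodMk continuous_id)
    have hcVx : Continuous fun x => Vx (t, x) :=
      hVxsm.continuous.comp (continuous_const.prodMk continuous_id)
    have hcVxx : Continuous fun x => Vxx (t, x) :=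
      hVxxsm.continuous.comp (continuous_const.prodMk continuous_id)
    have hcW : Continuous fun x => W (t, x) :=
      hWsm.continuous.comp (continuous_const.prodMk continuous_id)
    have hcF : Continuous fun x => F (t, x) :=
      hFc.comp (continuous_const.prodMk continuous_id)
    have hva : V (t, a) = 0 := (hbc t htIcc).1
    have hvb : V (t, b) = 0 := (hbc t htIcc).2
    set A := ∫ x in a..b, V (t, x) ^ 2 with hAdef
    set B := ∫ x in a..b, Vx (t, x) ^ 2 with hBdef
    set Cc := ∫ x in a..b, Vxx (t, x) ^ 2 with hCcdef
    have hAnn : 0 ≤ A := intervalIntegral.integral_nonneg hab' fun x _ => sq_nonneg _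
    have hBnn : 0 ≤ B := intervalIntegral.integral_nonneg hab' fun x _ => sq_nonneg _
    have hCcnn : 0 ≤ Cc := intervalIntegral.integral_nonneg hab' fun x _ => sq_nonneg _
    have hrep : ∀ x ∈ Icc a b, V (t, x) = ∫ y in a..x, Vx (t, y) := by
      intro x hx
      have h1 : ∫ y in a..x, Vx (t, y) = V (t, x) - V (t, a) :=
        intervalIntegral.integral_eq_sub_of_hasDerivAt (fun y _ => hdVx t y)
          (hcVx.intervalIntegrable _ _)
      rw [h1, hva, sub_zero]
    have hAB : A ≤ L ^ 2 * B := by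
      have hptw : ∀ x ∈ Icc a b, V (t, x) ^ 2 ≤ L * B := by
        intro x hx
        rw [hrep x hx]
        have h1 := sq_intervalIntegral_le hcVx hx.1
        have h2 : (∫ y in a..x, Vx (t, y) ^ 2) ≤ B :=
          intervalIntegral.integral_mono_interval le_rfl hx.1 hx.2
            (Filter.Eventually.of_forall fun y => sq_nonneg _)
            ((hcVx.fun_pow 2).intervalIntegrable _ _)
        have h3 : 0 ≤ ∫ y in a..x, Vx (t, y) ^ 2 :=
          intervalIntegral.integral_nonneg hx.1 fun _ _ => sq_nonneg _
        have h4 : x - a ≤ L := by rw [hLdef]; linarith [hx.2]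
        nlinarith [sub_nonneg.mpr hx.1]
      have hmm := intervalIntegral.integral_mono_on (μ := volume) hab'
        ((hcV.fun_pow 2).intervalIntegrable _ _)
        ((continuous_const : Continuous fun _ : ℝ => L * B).intervalIntegrable _ _) hptw
      rw [intervalIntegral.integral_const] at hmm
      simp only [smul_eq_mul] at hmm
      calc A ≤ (b - a) * (L * B) := hmm
        _ = L ^ 2 * B := by rw [← hLdef]; ring
    have hIBPv : (∫ x in a..b, (Vx (t, x) ^ 2 + V (t, x) * Vxx (t, x))) =
        V (t, b) * Vx (t, b) - V (t, a) * Vx (t, a) := by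
      apply intervalIntegral.integral_eq_sub_of_hasDerivAt
      · intro x _
        have hprod := (hdVx t x).fun_mul (hdVxx t x)
        simpa only [sq] using hprod
      · exact ((hcVx.fun_pow 2).fun_add (hcV.fun_mul hcVxx)).intervalIntegrable _ _
    have hB2 : B + (∫ x in a..b, V (t, x) * Vxx (t, x)) = 0 := by
      rw [← intervalIntegral.integral_add ((hcVx.fun_pow 2).intervalIntegrable _ _)
        ((hcV.fun_mul hcVxx).intervalIntegrable _ _), hIBPv, hva, hvb]
      ring
    have hL2 : (0:ℝ) < L ^ 2 := pow_pos hL 2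
    have hBC : B ≤ L ^ 2 * Cc := by
      have hneg : (∫ x in a..b, -(V (t, x) * Vxx (t, x))) = B := by
        rw [intervalIntegral.integral_neg]
        linarith
      have hm : (∫ x in a..b, 2 * L ^ 2 * -(V (t, x) * Vxx (t, x))) ≤
          ∫ x in a..b, (V (t, x) ^ 2 + L ^ 4 * Vxx (t, x) ^ 2) :=
        intervalIntegral.integral_mono_on hab'
          ((continuous_const.fun_mul (hcV.fun_mul hcVxx).neg).intervalIntegrable _ _)
          (((hcV.fun_pow 2).fun_add (continuous_const.fun_mul (hcVxx.fun_pow 2))).intervalIntegrable _ _)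
          (fun x _ => by nlinarith [sq_nonneg (V (t, x) + L ^ 2 * Vxx (t, x))])
      have hlhs : (∫ x in a..b, 2 * L ^ 2 * -(V (t, x) * Vxx (t, x))) = 2 * L ^ 2 * B := by
        rw [intervalIntegral.integral_const_mul, hneg]
      have hrhs : ∫ x in a..b, (V (t, x) ^ 2 + L ^ 4 * Vxx (t, x) ^ 2) = A + L ^ 4 * Cc := by
        rw [intervalIntegral.integral_add ((hcV.fun_pow 2).intervalIntegrable _ _)
          ((continuous_const.fun_mul (hcVxx.fun_pow 2)).intervalIntegrable _ _),
          intervalIntegral.integral_const_mul]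
      have hfin : L ^ 2 * B ≤ L ^ 2 * (L ^ 2 * Cc) := by nlinarith [hm, hlhs, hrhs, hAB]
      exact (mul_le_mul_iff_right₀ hL2).mp hfin
    have hCc2 : Cc ≤ 2 * Φ t + 2 * Q t := by
      have hm : Cc ≤ ∫ x in a..b, (2 * W (t, x) ^ 2 + 2 * F (t, x) ^ 2) :=
        integral_mono_Ioo hab' ((hcVxx.fun_pow 2).intervalIntegrable _ _)
          (((continuous_const.fun_mul (hcW.fun_pow 2)).add
            (continuous_const.fun_mul (hcF.fun_pow 2))).intervalIntegrable _ _)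
          (fun x hx => by
            have h := hPDE t ⟨ht.1, ht.2.le⟩ x hx
            have h2 : Vxx (t, x) = W (t, x) - F (t, x) := by linarith
            rw [h2]
            nlinarith [sq_nonneg (W (t, x) + F (t, x))])
      have hsp : ∫ x in a..b, (2 * W (t, x) ^ 2 + 2 * F (t, x) ^ 2) = 2 * Φ t + 2 * Q t := by
        rw [intervalIntegral.integral_add
          ((continuous_const.fun_mul (hcW.fun_pow 2)).intervalIntegrable _ _)
          ((continuous_const.fun_mul (hcF.fun_pow 2)).intervalIntegrable _ _),
          intervalIntegral.integral_const_mul, intervalIntegral.integral_const_mul]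
      linarith
    have htotal : (∫ x in a..b, (V (t, x) ^ 2 + Vx (t, x) ^ 2 + Vxx (t, x) ^ 2)) =
        A + B + Cc := by
      rw [intervalIntegral.integral_add
        (((hcV.fun_pow 2).fun_add (hcVx.fun_pow 2)).intervalIntegrable _ _)
        ((hcVxx.fun_pow 2).intervalIntegrable _ _),
        intervalIntegral.integral_add ((hcV.fun_pow 2).intervalIntegrable _ _)
        ((hcVx.fun_pow 2).intervalIntegrable _ _)]
    rw [htotal]
    have hA4 : A ≤ L ^ 2 * (L ^ 2 * Cc) :=
      le_trans hAB (mul_le_mul_of_nonneg_left hBC (by positivity))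
    have h9 : A + B + Cc ≤ (L ^ 4 + L ^ 2 + 1) * Cc := by nlinarith [hA4, hBC]
    have h10 : (L ^ 4 + L ^ 2 + 1) * Cc ≤ (L ^ 4 + L ^ 2 + 1) * (2 * Φ t + 2 * Q t) :=
      mul_le_mul_of_nonneg_left hCc2 (by positivity)
    rw [hMdef]
    linarith
  -- assemble
  set K : ℝ := Real.sqrt (∫ s in (0:ℝ)..T,
      ((∫ x in a..b, (f s x) ^ 2) + ∫ x in a..b, (pt f s x) ^ 2)) with hKdef
  set G : ℝ := Real.sqrt (∫ x in a..b,
      ((g x) ^ 2 + (deriv g x) ^ 2 + (deriv (deriv g) x) ^ 2)) with hGdef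
  have hKnn : 0 ≤ K := Real.sqrt_nonneg _
  have hGnn : 0 ≤ G := Real.sqrt_nonneg _
  have hKsq : K ^ 2 = Kf2 + Kt2 := by
    have he : ∀ s : ℝ, ((∫ x in a..b, (f s x) ^ 2) + ∫ x in a..b, (pt f s x) ^ 2)
        = Q s + dl s := by
      intro s
      congr 1
      simp_rw [hptf]
      rfl
    have hint : (∫ s in (0:ℝ)..T,
        ((∫ x in a..b, (f s x) ^ 2) + ∫ x in a..b, (pt f s x) ^ 2)) = Kf2 + Kt2 := by
      simp_rw [he]
      exact intervalIntegral.integral_add (hQc.intervalIntegrable _ _)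
        (hdlc.intervalIntegrable _ _)
    rw [hKdef, hint, Real.sq_sqrt (by linarith)]
  have hG2nn : 0 ≤ G2 :=
    intervalIntegral.integral_nonneg hab' fun x _ => by positivity
  have hGsq : G ^ 2 = G2 := by
    rw [hGdef, Real.sq_sqrt hG2nn]
  have hGxxle : Gxx ≤ G2 :=
    intervalIntegral.integral_mono_on hab' ((hg''c.fun_pow 2).intervalIntegrable _ _)
      ((((hgc.fun_pow 2).fun_add (hg'c.fun_pow 2)).fun_add (hg''c.fun_pow 2)).intervalIntegrable _ _)
      (fun x _ => by nlinarith [sq_nonneg (g x), sq_nonneg (deriv g x)])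
  have hGxxnn : 0 ≤ Gxx :=
    intervalIntegral.integral_nonneg hab' fun x _ => sq_nonneg _
  have key : ∀ t ∈ Ioo (0:ℝ) T,
      Real.sqrt (∫ x in a..b, ((v t x) ^ 2 + (px v t x) ^ 2 + (pxx v t x) ^ 2)) ≤
        (Real.sqrt C₀ + 1) * (K + G) := by
    intro t ht
    have htIcc : t ∈ Icc (0:ℝ) T := ⟨ht.1.le, ht.2.le⟩
    have hIval : (∫ x in a..b, ((v t x) ^ 2 + (px v t x) ^ 2 + (pxx v t x) ^ 2)) =
        ∫ x in a..b, (V (t, x) ^ 2 + Vx (t, x) ^ 2 + Vxx (t, x) ^ 2) := by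
      simp_rw [hpxv, hpxxv]
      rfl
    have hIle : (∫ x in a..b, (V (t, x) ^ 2 + Vx (t, x) ^ 2 + Vxx (t, x) ^ 2)) ≤
        C₀ * (K + G) ^ 2 := by
      have h1 := helliptic t ht
      have h2 := hΦbound t htIcc
      have h3 := hQb t htIcc
      have h4 := hQb 0 (left_mem_Icc.mpr hT')
      have h5 : Φ t ≤ E * (2 * G2 + 2 * cT * (Kf2 + Kt2) + Kt2) := by
        have hstep : Φ 0 + Kt2 ≤ 2 * G2 + 2 * cT * (Kf2 + Kt2) + Kt2 := by
          linarith [hΦ0, hGxxle, h4]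
        calc Φ t ≤ E * (Φ 0 + Kt2) := h2
          _ ≤ E * (2 * G2 + 2 * cT * (Kf2 + Kt2) + Kt2) :=
              mul_le_mul_of_nonneg_left hstep (by linarith)
      have h6 : Q t ≤ E * (cT * (Kf2 + Kt2)) := by
        have hnn : (0:ℝ) ≤ cT * (Kf2 + Kt2) := mul_nonneg hc.le (by linarith)
        have hQE : cT * (Kf2 + Kt2) ≤ E * (cT * (Kf2 + Kt2)) :=
          le_mul_of_one_le_left hnn hE
        linarith
      have hstep1 : 2 * G2 + 2 * cT * (Kf2 + Kt2) + Kt2 ≤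
          (3 + 2 * cT) * (G2 + (Kf2 + Kt2)) := by
        linarith [mul_nonneg hc.le hG2nn, hG2nn, hKf2nn, hKt2nn]
      have h5' : Φ t ≤ E * ((3 + 2 * cT) * (G2 + (Kf2 + Kt2))) :=
        le_trans h5 (mul_le_mul_of_nonneg_left hstep1 (by linarith))
      have hstep2 : cT * (Kf2 + Kt2) ≤ cT * (G2 + (Kf2 + Kt2)) :=
        mul_le_mul_of_nonneg_left (by linarith) hc.le
      have h6' : Q t ≤ E * (cT * (G2 + (Kf2 + Kt2))) :=
        le_trans h6 (mul_le_mul_of_nonneg_left hstep2 (by linarith))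
      have h8 : 2 * Φ t + 2 * Q t ≤ 2 * E * ((3 + 3 * cT) * (G2 + (Kf2 + Kt2))) := by
        linarith [h5', h6']
      have h9 : M * (2 * Φ t + 2 * Q t) ≤
          M * (2 * E * ((3 + 3 * cT) * (G2 + (Kf2 + Kt2)))) :=
        mul_le_mul_of_nonneg_left h8 (by linarith)
      have h11 : G2 + (Kf2 + Kt2) ≤ (K + G) ^ 2 := by
        have hexp : (K + G) ^ 2 = K ^ 2 + 2 * (K * G) + G ^ 2 := by ring
        rw [hexp, hKsq, hGsq]
        linarith [mul_nonneg hKnn hGnn]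
      have h12 : C₀ * (G2 + (Kf2 + Kt2)) ≤ C₀ * (K + G) ^ 2 :=
        mul_le_mul_of_nonneg_left h11 hC0.le
      have h13 : M * (2 * E * ((3 + 3 * cT) * (G2 + (Kf2 + Kt2)))) =
          C₀ * (G2 + (Kf2 + Kt2)) := by rw [hC0def]; ring
      linarith
    rw [hIval]
    have hs1 : Real.sqrt (∫ x in a..b, (V (t, x) ^ 2 + Vx (t, x) ^ 2 + Vxx (t, x) ^ 2)) ≤
        Real.sqrt (C₀ * (K + G) ^ 2) := Real.sqrt_le_sqrt hIle
    rw [Real.sqrt_mul hC0.le, Real.sqrt_sq (by positivity)] at hs1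
    have hfin2 : Real.sqrt C₀ * (K + G) ≤ (Real.sqrt C₀ + 1) * (K + G) := by
      have : (Real.sqrt C₀ + 1) * (K + G) = Real.sqrt C₀ * (K + G) + (K + G) := by ring
      rw [this]
      linarith [hKnn, hGnn]
    linarith [hs1, hfin2]
  -- essSup step
  have hne : volume.restrict (Icc (0:ℝ) T) ≠ 0 := by
    intro h0
    have h1 : (volume.restrict (Icc (0:ℝ) T)) (Icc 0 T) = volume (Icc (0:ℝ) T) :=
      Measure.restrict_apply_self _ _
    rw [h0] at h1
    simp only [Measure.coe_zero, Pi.zero_apply, Real.volume_Icc, sub_zero] at h1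
    have := ENNReal.ofReal_eq_zero.mp h1.symm
    linarith
  haveI : (ae (volume.restrict (Icc (0:ℝ) T))).NeBot := ae_neBot.2 hne
  have hae : ∀ᵐ t ∂(volume.restrict (Icc (0:ℝ) T)),
      Real.sqrt (∫ x in a..b, ((v t x) ^ 2 + (px v t x) ^ 2 + (pxx v t x) ^ 2)) ≤
        (Real.sqrt C₀ + 1) * (K + G) := by
    rw [ae_restrict_iff' measurableSet_Icc]
    filter_upwards [measure_eq_zero_iff_ae_notMem.mp
      ((Set.toFinite ({0, T} : Set ℝ)).measure_zero volume)] with t htne htIcc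
    simp only [mem_insert_iff, mem_singleton_iff, not_or] at htne
    exact key t ⟨lt_of_le_of_ne htIcc.1 (Ne.symm htne.1), lt_of_le_of_ne htIcc.2 htne.2⟩
  exact Filter.limsup_le_of_le
    (Filter.isCoboundedUnder_le_of_le _ fun t => Real.sqrt_nonneg _) hae

end Stmt2
end

section
/- Under the Burgers-equation error setup, the difference w satisfies the differential inequality d/dt ‖w(t)‖₂² + ‖w_x(t)‖₂² ≤ C ( ‖u_x(t)‖₂² ‖w(t)‖₂² + ‖f(t)‖₂² ) for all t ∈ [0,T], where C is a constant depending only on Ω. -/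
open MeasureTheory Set
open intervalIntegral

namespace Stmt3

/-- time derivative of a function of (time, space). -/
noncomputable def pt (v : ℝ → ℝ → ℝ) (t x : ℝ) : ℝ := deriv (fun s => v s x) t

/-- first spatial derivative. -/
noncomputable def px (v : ℝ → ℝ → ℝ) (t x : ℝ) : ℝ := deriv (fun y => v t y) x

/-- second spatial derivative. -/
noncomputable def pxx (v : ℝ → ℝ → ℝ) (t x : ℝ) : ℝ := deriv (deriv (fun y => v t y)) x

/-- mixed derivative: spatial derivative of the time derivative. -/
noncomputable def pxt (v : ℝ → ℝ → ℝ) (t x : ℝ) : ℝ :=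
  deriv (fun y => deriv (fun s => v s y) t) x

/-! ### Auxiliary machinery -/

noncomputable def pdx (V : ℝ × ℝ → ℝ) (p : ℝ × ℝ) : ℝ := fderiv ℝ V p (0, 1)
noncomputable def pdt (V : ℝ × ℝ → ℝ) (p : ℝ × ℝ) : ℝ := fderiv ℝ V p (1, 0)

theorem contDiff_pdx {V : ℝ × ℝ → ℝ} (hV : ContDiff ℝ (⊤ : ℕ∞) V) : ContDiff ℝ (⊤ : ℕ∞) (pdx V) :=
  (hV.fderiv_right (by simp)).clm_apply contDiff_const

theorem contDiff_pdt {V : ℝ × ℝ → ℝ} (hV : ContDiff ℝ (⊤ : ℕ∞) V) : ContDiff ℝ (⊤ : ℕ∞) (pdt V) :=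
  (hV.fderiv_right (by simp)).clm_apply contDiff_const

theorem hasDerivAt_x {V : ℝ × ℝ → ℝ} (hV : ContDiff ℝ (⊤ : ℕ∞) V) (t x : ℝ) :
    HasDerivAt (fun y => V (t, y)) (pdx V (t, x)) x := by
  have h1 : HasDerivAt (fun y : ℝ => ((t, y) : ℝ × ℝ)) (0, 1) x :=
    (hasDerivAt_const x t).prodMk (hasDerivAt_id x)
  exact (hV.differentiable (by simp) (t, x)).hasFDerivAt.comp_hasDerivAt x h1

theorem hasDerivAt_t {V : ℝ × ℝ → ℝ} (hV : ContDiff ℝ (⊤ : ℕ∞) V) (t x : ℝ) :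
    HasDerivAt (fun s => V (s, x)) (pdt V (t, x)) t := by
  have h1 : HasDerivAt (fun s : ℝ => ((s, x) : ℝ × ℝ)) (1, 0) t :=
    (hasDerivAt_id t).prodMk (hasDerivAt_const t x)
  exact (hV.differentiable (by simp) (t, x)).hasFDerivAt.comp_hasDerivAt t h1

theorem pdx_sub {V U : ℝ × ℝ → ℝ} (hV : ContDiff ℝ (⊤ : ℕ∞) V) (hU : ContDiff ℝ (⊤ : ℕ∞) U) (p : ℝ × ℝ) :
    pdx (fun q => V q - U q) p = pdx V p - pdx U p := by
  unfold pdx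
  rw [fderiv_fun_sub (hV.differentiable (by simp) p) (hU.differentiable (by simp) p)]
  rfl

theorem pdt_sub {V U : ℝ × ℝ → ℝ} (hV : ContDiff ℝ (⊤ : ℕ∞) V) (hU : ContDiff ℝ (⊤ : ℕ∞) U) (p : ℝ × ℝ) :
    pdt (fun q => V q - U q) p = pdt V p - pdt U p := by
  unfold pdt
  rw [fderiv_fun_sub (hV.differentiable (by simp) p) (hU.differentiable (by simp) p)]
  rfl

theorem pdt_sq {W : ℝ × ℝ → ℝ} (hW : ContDiff ℝ (⊤ : ℕ∞) W) (t x : ℝ) :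
    pdt (fun q => (W q) ^ 2) (t, x) = 2 * W (t, x) * pdt W (t, x) := by
  have h1 := hasDerivAt_t (hW.pow 2) t x
  have h2 := (hasDerivAt_t hW t x).pow 2
  have h3 := h1.unique h2
  rw [h3]; push_cast; ring

theorem hasDerivAt_param_integral {V : ℝ × ℝ → ℝ} (hV : ContDiff ℝ (⊤ : ℕ∞) V) (a b t : ℝ) :
    HasDerivAt (fun s => ∫ x in a..b, V (s, x)) (∫ x in a..b, pdt V (t, x)) t := by
  have hVc : Continuous V := hV.continuous
  have hV'c : Continuous (pdt V) := (contDiff_pdt hV).continuous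
  have hK : IsCompact (Icc (t - 1) (t + 1) ×ˢ uIcc a b) := isCompact_Icc.prod isCompact_uIcc
  obtain ⟨M, hM⟩ := hK.exists_bound_of_continuousOn hV'c.continuousOn
  have main := intervalIntegral.hasDerivAt_integral_of_dominated_loc_of_deriv_le
    (F := fun s x => V (s, x)) (F' := fun s x => pdt V (s, x)) (x₀ := t) (a := a) (b := b)
    (bound := fun _ => M) (μ := volume) (s := Metric.ball t 1) (Metric.ball_mem_nhds t one_pos)
    (Filter.Eventually.of_forall fun s =>
      ((hVc.comp (Continuous.prodMk_right s)).aestronglyMeasurable))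
    ((hVc.comp (Continuous.prodMk_right t)).continuousOn.intervalIntegrable)
    ((hV'c.comp (Continuous.prodMk_right t)).aestronglyMeasurable)
    (Filter.Eventually.of_forall fun x hx s hs => by
      refine hM (s, x) ⟨?_, uIoc_subset_uIcc hx⟩
      have := Metric.mem_ball.mp hs
      rw [Real.dist_eq] at this
      constructor <;> [linarith [abs_lt.mp this]; linarith [abs_lt.mp this]])
    intervalIntegrable_const
    (Filter.Eventually.of_forall fun x _ s _ => hasDerivAt_t hV s x)
  exact main.2

/-- Cauchy–Schwarz for interval integrals of continuous functions. -/
theorem integral_cs {a b : ℝ} (hab : a ≤ b) (f g : ℝ → ℝ)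
    (hf : ContinuousOn f (Icc a b)) (hg : ContinuousOn g (Icc a b)) :
    (∫ x in a..b, f x * g x) ^ 2 ≤ (∫ x in a..b, f x ^ 2) * (∫ x in a..b, g x ^ 2) := by
  have huIcc : uIcc a b = Icc a b := uIcc_of_le hab
  have hif : IntervalIntegrable (fun x => f x ^ 2) volume a b :=
    ((hf.pow 2).mono (le_of_eq huIcc)).intervalIntegrable
  have hig : IntervalIntegrable (fun x => g x ^ 2) volume a b :=
    ((hg.pow 2).mono (le_of_eq huIcc)).intervalIntegrable
  have hifg : IntervalIntegrable (fun x => f x * g x) volume a b :=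
    ((hf.mul hg).mono (le_of_eq huIcc)).intervalIntegrable
  set A := ∫ x in a..b, f x ^ 2 with hA
  set B := ∫ x in a..b, g x ^ 2 with hB
  set I := ∫ x in a..b, f x * g x with hI
  have key : ∀ lam : ℝ, 0 ≤ A * (lam * lam) + (2 * I) * lam + B := by
    intro lam
    have h0 : 0 ≤ ∫ x in a..b, (lam * f x + g x) ^ 2 :=
      integral_nonneg hab fun u _ => sq_nonneg _
    have heq : (∫ x in a..b, (lam * f x + g x) ^ 2)
        = A * (lam * lam) + (2 * I) * lam + B := by
      have hptw : ∀ x, (lam * f x + g x) ^ 2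
          = (lam * lam) * f x ^ 2 + (2 * lam) * (f x * g x) + g x ^ 2 := by
        intro x; ring
      rw [integral_congr (g := fun x => (lam * lam) * f x ^ 2 + (2 * lam) * (f x * g x) + g x ^ 2)
        (fun x _ => hptw x)]
      rw [integral_add ((hif.const_mul _).add (hifg.const_mul _)) hig,
        integral_add (hif.const_mul _) (hifg.const_mul _),
        intervalIntegral.integral_const_mul, intervalIntegral.integral_const_mul]
      ring
    linarith [heq ▸ h0]
  have hd := discrim_le_zero key
  rw [discrim] at hd
  nlinarith [hd]

/-- Pointwise Poincaré-type bound on an interval for a function vanishing at `a`. -/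
theorem poincare_sq {a b x : ℝ} (hab : a ≤ b) (hx : x ∈ Icc a b) (φ φ' : ℝ → ℝ)
    (hd : ∀ y, HasDerivAt φ (φ' y) y) (hc : Continuous φ') (h0 : φ a = 0) :
    (φ x) ^ 2 ≤ (b - a) * ∫ y in a..b, (φ' y) ^ 2 := by
  have hax : a ≤ x := hx.1
  have hxb : x ≤ b := hx.2
  have hftc : φ x = ∫ y in a..x, φ' y := by
    have h := intervalIntegral.integral_eq_sub_of_hasDerivAt (f := φ) (f' := φ')
      (a := a) (b := x) (fun y _ => hd y) (hc.intervalIntegrable a x)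
    rw [h, h0, sub_zero]
  have hcs := integral_cs hax φ' (fun _ => (1 : ℝ)) hc.continuousOn continuous_const.continuousOn
  have h1 : (∫ y in a..x, ((1 : ℝ)) ^ 2) = x - a := by simp
  have h2 : (∫ y in a..x, φ' y * 1) = φ x := by
    simp only [mul_one]; exact hftc.symm
  rw [h1, h2] at hcs
  have hmono : (∫ y in a..x, (φ' y) ^ 2) ≤ ∫ y in a..b, (φ' y) ^ 2 :=
    integral_mono_interval le_rfl hax hxb
      (Filter.Eventually.of_forall fun y => sq_nonneg _)
      ((hc.pow 2).intervalIntegrable a b)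
  have hnn : 0 ≤ ∫ y in a..x, (φ' y) ^ 2 :=
    integral_nonneg hax fun y _ => sq_nonneg _
  nlinarith [hcs, hmono, hnn]

theorem amgm_aux {X Y PP RQ dd : ℝ} (hPP : 0 ≤ PP) (hdd : 0 < dd)
    (hX2 : X ^ 2 = dd * PP) (hY2 : Y ^ 2 = RQ) (hXnn : 0 ≤ X) (hYnn : 0 ≤ Y) :
    X * Y ≤ PP / 2 + (dd / 2) * RQ := by
  have h : 2 * dd * (X * Y) ≤ dd * PP + dd ^ 2 * RQ := by
    nlinarith [sq_nonneg (X - dd * Y)]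
  have h2 : dd * (PP / 2 + (dd / 2) * RQ - X * Y) ≥ 0 := by nlinarith
  nlinarith [h2, hdd]

theorem final_aux {I1 I2 PP RQ S dd : ℝ} (h1 : I1 ≤ PP / 2 + 2 * dd ^ 2 * S)
    (h2 : -I2 ≤ PP / 2 + (dd / 2) * RQ) (hRQ : 0 ≤ RQ) (hS : 0 ≤ S) (hdd : 0 < dd) :
    I1 - I2 - 2 * PP + PP ≤ (2 * dd ^ 2 + dd) * (RQ + S) := by
  nlinarith [mul_nonneg (mul_nonneg hdd.le hdd.le) hRQ, mul_nonneg hdd.le hRQ,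
    mul_nonneg hdd.le hS]

set_option maxHeartbeats 2000000 in
/-- Energy differential inequality for `w = u_nn - u`:
`d/dt ‖w(t)‖₂² + ‖w_x(t)‖₂² ≤ C (‖u_x(t)‖₂² ‖w(t)‖₂² + ‖f(t)‖₂²)`. -/
theorem burgers_L2_differential_inequality (a b : ℝ) (hab : a < b) :
    ∃ C : ℝ, 0 < C ∧
      ∀ (T : ℝ) (u unn f : ℝ → ℝ → ℝ),
        0 < T →
        ContDiff ℝ (⊤ : ℕ∞) (fun p : ℝ × ℝ => u p.1 p.2) →
        ContDiff ℝ (⊤ : ℕ∞) (fun p : ℝ × ℝ => unn p.1 p.2) →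
        ContDiff ℝ (⊤ : ℕ∞) (fun p : ℝ × ℝ => f p.1 p.2) →
        (∀ t ∈ Icc (0 : ℝ) T, ∀ x ∈ Icc a b,
          pt u t x + u t x * px u t x - pxx u t x = 0) →
        (∀ t ∈ Icc (0 : ℝ) T, u t a = 0 ∧ u t b = 0) →
        (∀ t ∈ Icc (0 : ℝ) T, ∀ x ∈ Icc a b,
          pt unn t x + unn t x * px unn t x - pxx unn t x = f t x) →
        (∀ t ∈ Icc (0 : ℝ) T, unn t a = 0 ∧ unn t b = 0) →
        ∀ t ∈ Icc (0 : ℝ) T,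
          deriv (fun s => ∫ x in a..b, (unn s x - u s x) ^ 2) t +
              (∫ x in a..b, (px unn t x - px u t x) ^ 2) ≤
            C * ((∫ x in a..b, (px u t x) ^ 2) *
                (∫ x in a..b, (unn t x - u t x) ^ 2) +
              ∫ x in a..b, (f t x) ^ 2) := by
  have hd : (0:ℝ) < b - a := by linarith
  set d := b - a with hd_def
  refine ⟨2 * d ^ 2 + d, by positivity, ?_⟩
  intro T u unn f hT hu hn hf hpu hbu hpn hbn t ht
  have habl : a ≤ b := le_of_lt hab
  have huIcc : uIcc a b = Icc a b := uIcc_of_le habl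
  set U : ℝ × ℝ → ℝ := fun p => u p.1 p.2 with hU_def
  set N : ℝ × ℝ → ℝ := fun p => unn p.1 p.2 with hN_def
  set Fc : ℝ × ℝ → ℝ := fun p => f p.1 p.2 with hF_def
  set W : ℝ × ℝ → ℝ := fun p => N p - U p with hW_def
  have hW : ContDiff ℝ (⊤ : ℕ∞) W := hn.sub hu
  have hW2 : ContDiff ℝ (⊤ : ℕ∞) (fun q => (W q) ^ 2) := hW.pow 2
  -- translation of partial derivatives
  have ept_u : ∀ s x : ℝ, pt u s x = pdt U (s, x) := fun s x => (hasDerivAt_t hu s x).deriv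
  have ept_n : ∀ s x : ℝ, pt unn s x = pdt N (s, x) := fun s x => (hasDerivAt_t hn s x).deriv
  have epx_u : ∀ s x : ℝ, px u s x = pdx U (s, x) := fun s x => (hasDerivAt_x hu s x).deriv
  have epx_n : ∀ s x : ℝ, px unn s x = pdx N (s, x) := fun s x => (hasDerivAt_x hn s x).deriv
  have epxx_u : ∀ s x : ℝ, pxx u s x = pdx (pdx U) (s, x) := by
    intro s x
    show deriv (deriv (fun y => u s y)) x = _
    have h1 : deriv (fun y => u s y) = fun y => pdx U (s, y) :=
      funext fun y => (hasDerivAt_x hu s y).deriv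
    rw [h1]
    exact (hasDerivAt_x (contDiff_pdx hu) s x).deriv
  have epxx_n : ∀ s x : ℝ, pxx unn s x = pdx (pdx N) (s, x) := by
    intro s x
    show deriv (deriv (fun y => unn s y)) x = _
    have h1 : deriv (fun y => unn s y) = fun y => pdx N (s, y) :=
      funext fun y => (hasDerivAt_x hn s y).deriv
    rw [h1]
    exact (hasDerivAt_x (contDiff_pdx hn) s x).deriv
  -- PDEs in capital form
  have hPU : ∀ x ∈ Icc a b,
      pdt U (t, x) + U (t, x) * pdx U (t, x) - pdx (pdx U) (t, x) = 0 := by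
    intro x hx
    have h := hpu t ht x hx
    rwa [ept_u, epx_u, epxx_u] at h
  have hPN : ∀ x ∈ Icc a b,
      pdt N (t, x) + N (t, x) * pdx N (t, x) - pdx (pdx N) (t, x) = Fc (t, x) := by
    intro x hx
    have h := hpn t ht x hx
    rwa [ept_n, epx_n, epxx_n] at h
  -- derivatives of W
  have epdxW : ∀ p : ℝ × ℝ, pdx W p = pdx N p - pdx U p := by
    intro p; rw [hW_def]; exact pdx_sub hn hu p
  have epdtW : ∀ p : ℝ × ℝ, pdt W p = pdt N p - pdt U p := by
    intro p; rw [hW_def]; exact pdt_sub hn hu p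
  have epdxxW : ∀ p : ℝ × ℝ, pdx (pdx W) p = pdx (pdx N) p - pdx (pdx U) p := by
    intro p
    have h1 : pdx W = fun q => pdx N q - pdx U q := by
      rw [hW_def]; exact funext (pdx_sub hn hu)
    rw [h1]
    exact pdx_sub (contDiff_pdx hn) (contDiff_pdx hu) p
  -- boundary values of W
  have hWa : W (t, a) = 0 := by
    show unn t a - u t a = 0
    rw [(hbu t ht).1, (hbn t ht).1, sub_zero]
  have hWb : W (t, b) = 0 := by
    show unn t b - u t b = 0
    rw [(hbu t ht).2, (hbn t ht).2, sub_zero]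
  -- continuity facts
  have cW : Continuous fun x => W (t, x) := hW.continuous.comp (Continuous.prodMk_right t)
  have cWx : Continuous fun x => pdx W (t, x) :=
    (contDiff_pdx hW).continuous.comp (Continuous.prodMk_right t)
  have cWxx : Continuous fun x => pdx (pdx W) (t, x) :=
    (contDiff_pdx (contDiff_pdx hW)).continuous.comp (Continuous.prodMk_right t)
  have cU : Continuous fun x => U (t, x) := hu.continuous.comp (Continuous.prodMk_right t)
  have cUx : Continuous fun x => pdx U (t, x) :=
    (contDiff_pdx hu).continuous.comp (Continuous.prodMk_right t)
  have cF : Continuous fun x => Fc (t, x) := hf.continuous.comp (Continuous.prodMk_right t)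
  -- main quantities
  set P := ∫ x in a..b, (pdx W (t, x)) ^ 2 with hP_def
  set Q := ∫ x in a..b, (W (t, x)) ^ 2 with hQ_def
  set R := ∫ x in a..b, (pdx U (t, x)) ^ 2 with hR_def
  set S := ∫ x in a..b, (Fc (t, x)) ^ 2 with hS_def
  have hPnn : 0 ≤ P := integral_nonneg habl fun x _ => sq_nonneg _
  have hQnn : 0 ≤ Q := integral_nonneg habl fun x _ => sq_nonneg _
  have hRnn : 0 ≤ R := integral_nonneg habl fun x _ => sq_nonneg _
  have hSnn : 0 ≤ S := integral_nonneg habl fun x _ => sq_nonneg _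
  -- Step A : differentiation under the integral sign
  have hDeriv : HasDerivAt (fun s => ∫ x in a..b, (unn s x - u s x) ^ 2)
      (∫ x in a..b, pdt (fun q => (W q) ^ 2) (t, x)) t :=
    hasDerivAt_param_integral hW2 a b t
  have hD2 : (∫ x in a..b, pdt (fun q => (W q) ^ 2) (t, x))
      = ∫ x in a..b, 2 * W (t, x) * pdt W (t, x) :=
    integral_congr fun x _ => pdt_sq hW t x
  -- Step B : pointwise identity
  set G : ℝ → ℝ := fun y =>
    2 * W (t, y) * pdx W (t, y) - U (t, y) * (W (t, y)) ^ 2 - (2/3) * (W (t, y)) ^ 3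
    with hG_def
  set gd : ℝ → ℝ := fun x =>
    2 * (pdx W (t, x)) ^ 2 + 2 * W (t, x) * pdx (pdx W) (t, x)
      - pdx U (t, x) * (W (t, x)) ^ 2 - 2 * U (t, x) * W (t, x) * pdx W (t, x)
      - 2 * (W (t, x)) ^ 2 * pdx W (t, x) with hgd_def
  have cgd : Continuous gd := by
    rw [hgd_def]
    exact ((((continuous_const.mul (cWx.pow 2)).add
      ((continuous_const.mul cW).mul cWxx)).sub
      (cUx.mul (cW.pow 2))).sub
      (((continuous_const.mul cU).mul cW).mul cWx)).sub
      ((continuous_const.mul (cW.pow 2)).mul cWx)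
  have hGder : ∀ x : ℝ, HasDerivAt G (gd x) x := by
    intro x
    have h1 : HasDerivAt (fun y => W (t, y)) (pdx W (t, x)) x := hasDerivAt_x hW t x
    have h2 : HasDerivAt (fun y => pdx W (t, y)) (pdx (pdx W) (t, x)) x :=
      hasDerivAt_x (contDiff_pdx hW) t x
    have h3 : HasDerivAt (fun y => U (t, y)) (pdx U (t, x)) x := hasDerivAt_x hu t x
    have hcomb := (((h1.const_mul (2:ℝ)).mul h2).sub (h3.mul (h1.pow 2))).sub
      ((h1.pow 3).const_mul ((2:ℝ)/3))
    rw [hG_def, hgd_def]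
    refine hcomb.congr_deriv ?_
    simp only [Pi.pow_apply]
    push_cast
    ring
  have hIdent : ∀ x ∈ Icc a b,
      2 * W (t, x) * pdt W (t, x)
        = (2 * W (t, x) * Fc (t, x) - pdx U (t, x) * (W (t, x)) ^ 2
            - 2 * (pdx W (t, x)) ^ 2) + gd x := by
    intro x hx
    have pU := hPU x hx
    have pN := hPN x hx
    have e1 := epdtW (t, x)
    have e2 := epdxW (t, x)
    have e3 := epdxxW (t, x)
    have eN : N (t, x) = U (t, x) + W (t, x) := by
      show N (t, x) = U (t, x) + (N (t, x) - U (t, x)); ring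
    rw [hgd_def]
    have eptN : pdt N (t, x) = Fc (t, x) - N (t, x) * pdx N (t, x) + pdx (pdx N) (t, x) := by
      linarith
    have eptU : pdt U (t, x) = - U (t, x) * pdx U (t, x) + pdx (pdx U) (t, x) := by
      linarith
    have exN : pdx N (t, x) = pdx U (t, x) + pdx W (t, x) := by linarith
    have exxN : pdx (pdx N) (t, x) = pdx (pdx U) (t, x) + pdx (pdx W) (t, x) := by linarith
    rw [e1, eptN, eptU, eN, exN, exxN]
    ring
  -- Step C : integrate the identity
  have iWF : IntervalIntegrable (fun x => 2 * W (t, x) * Fc (t, x)) volume a b :=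
    ((continuous_const.mul cW).mul cF).intervalIntegrable a b
  have iUW2 : IntervalIntegrable (fun x => pdx U (t, x) * (W (t, x)) ^ 2) volume a b :=
    (cUx.mul (cW.pow 2)).intervalIntegrable a b
  have iWx2 : IntervalIntegrable (fun x => (pdx W (t, x)) ^ 2) volume a b :=
    (cWx.pow 2).intervalIntegrable a b
  have igd : IntervalIntegrable gd volume a b := cgd.intervalIntegrable a b
  have hGint : (∫ x in a..b, gd x) = G b - G a :=
    intervalIntegral.integral_eq_sub_of_hasDerivAt (fun x _ => hGder x) igd
  have hGa : G a = 0 := by rw [hG_def]; simp only []; rw [hWa]; ring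
  have hGb : G b = 0 := by rw [hG_def]; simp only []; rw [hWb]; ring
  have hInt1 : (∫ x in a..b, 2 * W (t, x) * pdt W (t, x))
      = (∫ x in a..b, 2 * W (t, x) * Fc (t, x))
        - (∫ x in a..b, pdx U (t, x) * (W (t, x)) ^ 2) - 2 * P := by
    have hEq : EqOn (fun x => 2 * W (t, x) * pdt W (t, x))
        (fun x => (2 * W (t, x) * Fc (t, x) - pdx U (t, x) * (W (t, x)) ^ 2
            - 2 * (pdx W (t, x)) ^ 2) + gd x) (uIcc a b) := by
      intro x hx
      exact hIdent x (huIcc ▸ hx)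
    rw [integral_congr hEq]
    rw [intervalIntegral.integral_add (((iWF.sub iUW2)).sub (iWx2.const_mul 2)) igd,
      intervalIntegral.integral_sub (iWF.sub iUW2) (iWx2.const_mul 2),
      intervalIntegral.integral_sub iWF iUW2,
      intervalIntegral.integral_const_mul, hGint, hGa, hGb]
    rw [hP_def]
    ring
  -- Step D : Poincaré bounds
  have hPoin : ∀ x ∈ Icc a b, (W (t, x)) ^ 2 ≤ d * P := by
    intro x hx
    exact poincare_sq habl hx (fun y => W (t, y)) (fun y => pdx W (t, y))
      (fun y => hasDerivAt_x hW t y) cWx hWa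
  have hQP : Q ≤ d ^ 2 * P := by
    have h1 : Q ≤ ∫ _x in a..b, d * P := by
      refine integral_mono_on habl ((cW.pow 2).intervalIntegrable a b)
        intervalIntegrable_const hPoin
    have h2 : (∫ _x in a..b, d * P) = d * (d * P) := by
      rw [intervalIntegral.integral_const, smul_eq_mul, ← hd_def]
    rw [h2] at h1; nlinarith
  -- Step E1 : bound for the forcing term
  have hE1 : (∫ x in a..b, 2 * W (t, x) * Fc (t, x)) ≤ P / 2 + 2 * d ^ 2 * S := by
    have hptw : ∀ x ∈ Icc a b, 2 * W (t, x) * Fc (t, x)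
        ≤ (1 / (2 * d ^ 2)) * (W (t, x)) ^ 2 + 2 * d ^ 2 * (Fc (t, x)) ^ 2 := by
      intro x _
      have h1 : (0:ℝ) < 2 * d ^ 2 := by positivity
      have h2 := sq_nonneg (W (t, x) - 2 * d ^ 2 * Fc (t, x))
      rw [← sub_nonneg]
      have key : (1 / (2 * d ^ 2)) * (W (t, x)) ^ 2 + 2 * d ^ 2 * (Fc (t, x)) ^ 2
          - 2 * W (t, x) * Fc (t, x)
          = (1 / (2 * d ^ 2)) * (W (t, x) - 2 * d ^ 2 * Fc (t, x)) ^ 2 := by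
        field_simp
        ring
      rw [key]
      positivity
    have hmono : (∫ x in a..b, 2 * W (t, x) * Fc (t, x))
        ≤ ∫ x in a..b, ((1 / (2 * d ^ 2)) * (W (t, x)) ^ 2 + 2 * d ^ 2 * (Fc (t, x)) ^ 2) :=
      integral_mono_on habl iWF
        (((continuous_const.mul (cW.pow 2)).add (continuous_const.mul (cF.pow 2))).intervalIntegrable a b) hptw
    have hsplit : (∫ x in a..b, ((1 / (2 * d ^ 2)) * (W (t, x)) ^ 2
        + 2 * d ^ 2 * (Fc (t, x)) ^ 2))
        = (1 / (2 * d ^ 2)) * Q + 2 * d ^ 2 * S := by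
      rw [intervalIntegral.integral_add (f := fun x => (1 / (2 * d ^ 2)) * (W (t, x)) ^ 2)
          (g := fun x => 2 * d ^ 2 * (Fc (t, x)) ^ 2)
          ((continuous_const.mul (cW.pow 2)).intervalIntegrable a b)
        ((continuous_const.mul (cF.pow 2)).intervalIntegrable a b),
        intervalIntegral.integral_const_mul, intervalIntegral.integral_const_mul]
    rw [hsplit] at hmono
    have hQd : (1 / (2 * d ^ 2)) * Q ≤ P / 2 := by
      rw [mul_comm, mul_one_div, div_le_div_iff₀ (by positivity : (0:ℝ) < 2 * d ^ 2)
        (by norm_num : (0:ℝ) < 2)]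
      nlinarith
    linarith
  -- Step E2 : bound for the convection term
  have hE2 : -(∫ x in a..b, pdx U (t, x) * (W (t, x)) ^ 2) ≤ P / 2 + (d / 2) * (R * Q) := by
    have hsup : ∀ x ∈ Icc a b, |W (t, x)| ≤ Real.sqrt (d * P) := by
      intro x hx
      rw [← Real.sqrt_sq_eq_abs]
      exact Real.sqrt_le_sqrt (hPoin x hx)
    have hptw : ∀ x ∈ Icc a b, -(pdx U (t, x) * (W (t, x)) ^ 2)
        ≤ Real.sqrt (d * P) * (|pdx U (t, x)| * |W (t, x)|) := by
      intro x hx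
      have h1 := hsup x hx
      calc -(pdx U (t, x) * (W (t, x)) ^ 2)
          = (-(pdx U (t, x))) * (W (t, x)) ^ 2 := by ring
        _ ≤ |pdx U (t, x)| * (W (t, x)) ^ 2 :=
            mul_le_mul_of_nonneg_right (neg_le_abs _) (sq_nonneg _)
        _ = |pdx U (t, x)| * (|W (t, x)| * |W (t, x)|) := by
            rw [sq, abs_mul_abs_self]
        _ ≤ |pdx U (t, x)| * (Real.sqrt (d * P) * |W (t, x)|) :=
            mul_le_mul_of_nonneg_left
              (mul_le_mul_of_nonneg_right h1 (abs_nonneg _)) (abs_nonneg _)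
        _ = Real.sqrt (d * P) * (|pdx U (t, x)| * |W (t, x)|) := by ring
    have iabs : IntervalIntegrable (fun x => |pdx U (t, x)| * |W (t, x)|) volume a b :=
      (cUx.abs.mul cW.abs).intervalIntegrable a b
    have hIE2 : -(∫ x in a..b, pdx U (t, x) * (W (t, x)) ^ 2)
        ≤ Real.sqrt (d * P) * ∫ x in a..b, |pdx U (t, x)| * |W (t, x)| := by
      rw [← intervalIntegral.integral_neg, ← intervalIntegral.integral_const_mul]
      exact integral_mono_on habl iUW2.neg (iabs.const_mul _) hptw
    have hCS : (∫ x in a..b, |pdx U (t, x)| * |W (t, x)|) ^ 2 ≤ R * Q := by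
      have h := integral_cs habl (fun x => |pdx U (t, x)|) (fun x => |W (t, x)|)
        cUx.abs.continuousOn cW.abs.continuousOn
      have e1 : (∫ x in a..b, |pdx U (t, x)| ^ 2) = R :=
        integral_congr fun x _ => sq_abs _
      have e2 : (∫ x in a..b, |W (t, x)| ^ 2) = Q :=
        integral_congr fun x _ => sq_abs _
      rw [e1, e2] at h
      exact h
    have hZnn : 0 ≤ ∫ x in a..b, |pdx U (t, x)| * |W (t, x)| :=
      integral_nonneg habl fun x _ => mul_nonneg (abs_nonneg _) (abs_nonneg _)
    have hsqrt : (∫ x in a..b, |pdx U (t, x)| * |W (t, x)|) ≤ Real.sqrt (R * Q) := by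
      rw [← Real.sqrt_sq hZnn]
      exact Real.sqrt_le_sqrt hCS
    have hdPnn : 0 ≤ d * P := mul_nonneg hd.le hPnn
    have hRQnn : 0 ≤ R * Q := mul_nonneg hRnn hQnn
    have hX := Real.sq_sqrt hdPnn
    have hY := Real.sq_sqrt hRQnn
    have hXnn := Real.sqrt_nonneg (d * P)
    have hYnn := Real.sqrt_nonneg (R * Q)
    have hprod : Real.sqrt (d * P) * Real.sqrt (R * Q) ≤ P / 2 + (d / 2) * (R * Q) :=
      amgm_aux hPnn hd hX hY hXnn hYnn
    calc -(∫ x in a..b, pdx U (t, x) * (W (t, x)) ^ 2)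
        ≤ Real.sqrt (d * P) * ∫ x in a..b, |pdx U (t, x)| * |W (t, x)| := hIE2
      _ ≤ Real.sqrt (d * P) * Real.sqrt (R * Q) :=
          mul_le_mul_of_nonneg_left hsqrt hXnn
      _ ≤ P / 2 + (d / 2) * (R * Q) := hprod
  -- final assembly
  have hgoal2 : (∫ x in a..b, (px unn t x - px u t x) ^ 2) = P := by
    rw [hP_def]
    refine integral_congr fun x _ => ?_
    rw [epx_n, epx_u, ← epdxW (t, x)]
  have hgoal3 : (∫ x in a..b, (px u t x) ^ 2) = R := by
    rw [hR_def]
    exact integral_congr fun x _ => by rw [epx_u]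
  rw [hDeriv.deriv, hD2, hInt1, hgoal2, hgoal3]
  have hRQnn : 0 ≤ R * Q := mul_nonneg hRnn hQnn
  exact final_aux hE1 hE2 hRQnn hSnn hd

end Stmt3
end

section
/- Under the Burgers-equation error setup, there is a constant C depending only on Ω such that sup_{0≤t≤T} ‖w(t)‖₂² ≤ C exp(∫₀ᵀ ‖u_x(t)‖₂² dt) ( ‖g‖₂² + ∫₀ᵀ ‖f(t)‖₂² dt ). In particular, sup_{0≤t≤T} ‖w(t)‖₂² → 0 as ‖g‖₂² and ∫₀ᵀ ‖f‖₂² dt tend to 0 (with ∫₀ᵀ ‖u_x‖₂² dt fixed). -/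
open MeasureTheory Set Function intervalIntegral Metric

namespace Stmt4

/-- time derivative of a function of (time, space). -/
noncomputable def pt (v : ℝ → ℝ → ℝ) (t x : ℝ) : ℝ := deriv (fun s => v s x) t

/-- first spatial derivative. -/
noncomputable def px (v : ℝ → ℝ → ℝ) (t x : ℝ) : ℝ := deriv (fun y => v t y) x

/-- second spatial derivative. -/
noncomputable def pxx (v : ℝ → ℝ → ℝ) (t x : ℝ) : ℝ := deriv (deriv (fun y => v t y)) x

/-- mixed derivative: spatial derivative of the time derivative. -/
noncomputable def pxt (v : ℝ → ℝ → ℝ) (t x : ℝ) : ℝ :=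
  deriv (fun y => deriv (fun s => v s y) t) x

lemma pxx_eq (v : ℝ → ℝ → ℝ) : pxx v = px (px v) := rfl

section smoothness

variable {g : ℝ → ℝ → ℝ}

lemma contDiff_curry_right (hg : ContDiff ℝ (⊤ : ℕ∞) (uncurry g)) (t : ℝ) :
    ContDiff ℝ (⊤ : ℕ∞) (fun x => g t x) :=
  hg.comp (contDiff_const.prodMk contDiff_id)

lemma contDiff_curry_left (hg : ContDiff ℝ (⊤ : ℕ∞) (uncurry g)) (x : ℝ) :
    ContDiff ℝ (⊤ : ℕ∞) (fun s => g s x) :=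
  hg.comp (contDiff_id.prodMk contDiff_const)

lemma hasDerivAt_pt (hg : ContDiff ℝ (⊤ : ℕ∞) (uncurry g)) (t x : ℝ) :
    HasDerivAt (fun s => g s x) (pt g t x) t :=
  (((contDiff_curry_left hg x).differentiable (by simp)) t).hasDerivAt

lemma hasDerivAt_px (hg : ContDiff ℝ (⊤ : ℕ∞) (uncurry g)) (t x : ℝ) :
    HasDerivAt (fun y => g t y) (px g t x) x :=
  (((contDiff_curry_right hg t).differentiable (by simp)) x).hasDerivAt

lemma pt_eq_fderiv (hg : ContDiff ℝ (⊤ : ℕ∞) (uncurry g)) (t x : ℝ) :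
    pt g t x = fderiv ℝ (uncurry g) (t, x) (1, 0) := by
  have h1 : HasDerivAt (fun s => (s, x)) ((1 : ℝ), (0 : ℝ)) t :=
    HasDerivAt.prodMk (hasDerivAt_id t) (hasDerivAt_const t x)
  have h2 : HasFDerivAt (uncurry g) (fderiv ℝ (uncurry g) (t, x)) (t, x) :=
    (hg.differentiable (by simp) (t, x)).hasFDerivAt
  exact ((hasDerivAt_pt hg t x).unique (by have h3 := h2.comp_hasDerivAt (f := fun s => (s, x)) t h1; exact h3))

lemma px_eq_fderiv (hg : ContDiff ℝ (⊤ : ℕ∞) (uncurry g)) (t x : ℝ) :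
    px g t x = fderiv ℝ (uncurry g) (t, x) (0, 1) := by
  have h1 : HasDerivAt (fun y => (t, y)) ((0 : ℝ), (1 : ℝ)) x :=
    HasDerivAt.prodMk (hasDerivAt_const x t) (hasDerivAt_id x)
  have h2 : HasFDerivAt (uncurry g) (fderiv ℝ (uncurry g) (t, x)) (t, x) :=
    (hg.differentiable (by simp) (t, x)).hasFDerivAt
  exact ((hasDerivAt_px hg t x).unique (by have h3 := h2.comp_hasDerivAt _ h1; exact h3))

lemma contDiff_pt (hg : ContDiff ℝ (⊤ : ℕ∞) (uncurry g)) : ContDiff ℝ (⊤ : ℕ∞) (uncurry (pt g)) := by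
  have h : ContDiff ℝ (⊤ : ℕ∞) (fun p : ℝ × ℝ => fderiv ℝ (uncurry g) p (1, 0)) :=
    (hg.fderiv_right (le_refl _)).clm_apply contDiff_const
  have e : uncurry (pt g) = fun p : ℝ × ℝ => fderiv ℝ (uncurry g) p (1, 0) := by
    funext p; exact pt_eq_fderiv hg p.1 p.2
  rw [e]; exact h

lemma contDiff_px (hg : ContDiff ℝ (⊤ : ℕ∞) (uncurry g)) : ContDiff ℝ (⊤ : ℕ∞) (uncurry (px g)) := by
  have h : ContDiff ℝ (⊤ : ℕ∞) (fun p : ℝ × ℝ => fderiv ℝ (uncurry g) p (0, 1)) :=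
    (hg.fderiv_right (le_refl _)).clm_apply contDiff_const
  have e : uncurry (px g) = fun p : ℝ × ℝ => fderiv ℝ (uncurry g) p (0, 1) := by
    funext p; exact px_eq_fderiv hg p.1 p.2
  rw [e]; exact h

lemma cont_curry_right (hg : Continuous (uncurry g)) (t : ℝ) : Continuous (fun x => g t x) :=
  hg.comp (continuous_const.prodMk continuous_id)

/-- differentiation under the interval integral, for smooth integrands -/
lemma hasDerivAt_param (hg : ContDiff ℝ (⊤ : ℕ∞) (uncurry g)) (a b t₀ : ℝ) :
    HasDerivAt (fun t => ∫ x in a..b, g t x) (∫ x in a..b, pt g t₀ x) t₀ := by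
  have hcont : Continuous (uncurry g) := hg.continuous
  have hg' : Continuous (uncurry (pt g)) := (contDiff_pt hg).continuous
  obtain ⟨C, hC⟩ : ∃ C, ∀ p ∈ (Icc (t₀ - 1) (t₀ + 1) ×ˢ uIcc a b), ‖uncurry (pt g) p‖ ≤ C :=
    (isCompact_Icc.prod isCompact_uIcc).exists_bound_of_continuousOn hg'.continuousOn
  refine (intervalIntegral.hasDerivAt_integral_of_dominated_loc_of_deriv_le
    (F := fun t x => g t x) (F' := fun t x => pt g t x) (bound := fun _ => C)
    (Metric.ball_mem_nhds t₀ one_pos) ?_ ?_ ?_ ?_ ?_ ?_).2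
  · filter_upwards with t
    exact ((cont_curry_right hcont t).aestronglyMeasurable).restrict
  · exact ((cont_curry_right hcont t₀).intervalIntegrable a b)
  · exact ((cont_curry_right hg' t₀).aestronglyMeasurable).restrict
  · filter_upwards with x hx t ht
    refine hC (t, x) ⟨?_, ?_⟩
    · have := abs_lt.1 (by simpa [Real.dist_eq] using mem_ball.1 ht)
      constructor <;> linarith [this.1, this.2]
    · exact Ioc_subset_Icc_self hx
  · exact intervalIntegrable_const
  · filter_upwards with x hx t ht
    exact hasDerivAt_deriv_iff.2 ((hg.comp (contDiff_id.prodMk contDiff_const)).differentiable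
      (by simp) t)

end smoothness

section integrals

/-- Cauchy–Schwarz for interval integrals of continuous functions. -/
lemma cs_sq {a b : ℝ} (hab : a ≤ b) {f g : ℝ → ℝ} (hf : Continuous f) (hg : Continuous g) :
    (∫ x in a..b, f x * g x) ^ 2 ≤ (∫ x in a..b, f x ^ 2) * (∫ x in a..b, g x ^ 2) := by
  set A := ∫ x in a..b, g x ^ 2 with hA
  set B := ∫ x in a..b, f x * g x with hB
  set Cc := ∫ x in a..b, f x ^ 2 with hC
  have key : ∀ lam : ℝ, 0 ≤ A * (lam * lam) + (-2 * B) * lam + Cc := by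
    intro lam
    have h0 : 0 ≤ ∫ x in a..b, (lam * g x - f x) ^ 2 :=
      intervalIntegral.integral_nonneg hab (fun u _ => sq_nonneg _)
    have hexp : (∫ x in a..b, (lam * g x - f x) ^ 2)
        = A * (lam * lam) + (-2 * B) * lam + Cc := by
      have e1 : ∀ x, (lam * g x - f x) ^ 2
          = (lam * lam) * g x ^ 2 + (-2 * lam) * (f x * g x) + f x ^ 2 := by
        intro x; ring
      rw [intervalIntegral.integral_congr (fun x _ => e1 x)]
      have i1 : IntervalIntegrable (fun x => (lam * lam) * g x ^ 2) volume a b :=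
        (Continuous.intervalIntegrable (by continuity) a b)
      have i2 : IntervalIntegrable (fun x => (-2 * lam) * (f x * g x)) volume a b :=
        (Continuous.intervalIntegrable (by continuity) a b)
      have i3 : IntervalIntegrable (fun x => f x ^ 2) volume a b :=
        (Continuous.intervalIntegrable (by continuity) a b)
      rw [intervalIntegral.integral_add (i1.add i2) i3, intervalIntegral.integral_add i1 i2,
        intervalIntegral.integral_const_mul, intervalIntegral.integral_const_mul]
      ring
    linarith [h0, hexp ▸ h0]
  have hd := discrim_le_zero key
  rw [discrim] at hd
  nlinarith [hd]

lemma cs_sqrt {a b : ℝ} (hab : a ≤ b) {f g : ℝ → ℝ} (hf : Continuous f) (hg : Continuous g) :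
    (∫ x in a..b, f x * g x)
      ≤ Real.sqrt (∫ x in a..b, f x ^ 2) * Real.sqrt (∫ x in a..b, g x ^ 2) := by
  have h1 := cs_sq hab hf hg
  have h2 : 0 ≤ ∫ x in a..b, f x ^ 2 :=
    intervalIntegral.integral_nonneg hab (fun u _ => sq_nonneg _)
  calc (∫ x in a..b, f x * g x) ≤ |∫ x in a..b, f x * g x| := le_abs_self _
    _ = Real.sqrt ((∫ x in a..b, f x * g x) ^ 2) := (Real.sqrt_sq_eq_abs _).symm
    _ ≤ Real.sqrt ((∫ x in a..b, f x ^ 2) * (∫ x in a..b, g x ^ 2)) := Real.sqrt_le_sqrt h1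
    _ = _ := Real.sqrt_mul h2 _

/-- integration by parts: `∫ u v' = u b v b - u a v a - ∫ u' v` for C¹ functions. -/
lemma ibp_two {a b : ℝ} {u v u' v' : ℝ → ℝ}
    (hu : ∀ x, HasDerivAt u (u' x) x) (hv : ∀ x, HasDerivAt v (v' x) x)
    (cu : Continuous u) (cv : Continuous v) (cu' : Continuous u') (cv' : Continuous v') :
    ∫ x in a..b, u x * v' x = u b * v b - u a * v a - ∫ x in a..b, u' x * v x := by
  have key : ∫ x in a..b, (u' x * v x + u x * v' x) = u b * v b - u a * v a := by
    refine intervalIntegral.integral_eq_sub_of_hasDerivAt (fun x _ => (hu x).mul (hv x)) ?_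
    exact (Continuous.intervalIntegrable (by continuity) a b)
  have hsplit : ∫ x in a..b, (u' x * v x + u x * v' x)
      = (∫ x in a..b, u' x * v x) + ∫ x in a..b, u x * v' x :=
    intervalIntegral.integral_add (Continuous.intervalIntegrable (by continuity) a b)
      (Continuous.intervalIntegrable (by continuity) a b)
  linarith [key, hsplit]

/-- `∫ v² v' = (v b ^ 3 - v a ^ 3)/3`. -/
lemma cube_id {a b : ℝ} {v v' : ℝ → ℝ} (hv : ∀ x, HasDerivAt v (v' x) x)
    (cv : Continuous v) (cv' : Continuous v') :
    ∫ x in a..b, (v x) ^ 2 * v' x = (v b ^ 3 - v a ^ 3) / 3 := by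
  have key : ∫ x in a..b, (3 : ℝ) * (v x) ^ 2 * v' x = v b ^ 3 - v a ^ 3 := by
    refine intervalIntegral.integral_eq_sub_of_hasDerivAt (f := fun x => v x ^ 3)
      (fun x _ => ?_) (Continuous.intervalIntegrable (by continuity) a b)
    simpa [mul_comm, mul_assoc, mul_left_comm] using ((hv x).fun_pow 3)
  have h2 : ∫ x in a..b, (3 : ℝ) * (v x) ^ 2 * v' x
      = 3 * ∫ x in a..b, (v x) ^ 2 * v' x := by
    rw [← intervalIntegral.integral_const_mul]
    congr 1; funext x; ring
  linarith [key, h2 ▸ key]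

/-- FTC: `∫ v' = v b - v a`. -/
lemma ftc_id {a b : ℝ} {v v' : ℝ → ℝ} (hv : ∀ x, HasDerivAt v (v' x) x) (cv' : Continuous v') :
    ∫ x in a..b, v' x = v b - v a :=
  intervalIntegral.integral_eq_sub_of_hasDerivAt (fun x _ => hv x)
    (cv'.intervalIntegrable a b)

end integrals

section realineq

/-- AM-GM for square roots: `√X √Y ≤ X/(2c) + cY/2`. -/
lemma sqrt_mul_le_amgm {X Y c : ℝ} (hX : 0 ≤ X) (hY : 0 ≤ Y) (hc : 0 < c) :
    Real.sqrt X * Real.sqrt Y ≤ X / (2 * c) + c * Y / 2 := by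
  have hx := Real.sq_sqrt hX
  have hy := Real.sq_sqrt hY
  have h1 := sq_nonneg (Real.sqrt X - c * Real.sqrt Y)
  have expand : (Real.sqrt X - c * Real.sqrt Y) ^ 2
      = Real.sqrt X ^ 2 - 2 * c * (Real.sqrt X * Real.sqrt Y) + c ^ 2 * Real.sqrt Y ^ 2 := by
    ring
  rw [expand, hx, hy] at h1
  have h2 : 0 < 2 * c := by linarith
  rw [div_add_div _ _ (ne_of_gt h2) (two_ne_zero), le_div_iff₀ (by linarith : (0:ℝ) < 2 * c * 2)]
  nlinarith [h1]

/-- the choice-of-μ inequality. -/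
lemma mu_choice {L φ : ℝ} (hL : 0 < L) (hφ : 0 ≤ φ) :
    φ / (2 * max (1 / (2 * L)) (φ ^ ((1:ℝ)/3))) + (max (1 / (2 * L)) (φ ^ ((1:ℝ)/3))) ^ 2
      ≤ φ + max 0 ((3/2) * (φ ^ ((1:ℝ)/3)) ^ 2 - φ - 1 / (2 * L ^ 2)) + (3/4) / L ^ 2 := by
  set r := φ ^ ((1:ℝ)/3) with hr
  have hr0 : 0 ≤ r := Real.rpow_nonneg hφ _
  have hr3 : r ^ 3 = φ := by
    rw [hr, ← Real.rpow_natCast (φ ^ ((1:ℝ)/3)) 3, ← Real.rpow_mul hφ]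
    norm_num
  have hL2 : 0 < L ^ 2 := by positivity
  have hmax0 : (0:ℝ) ≤ max 0 ((3/2) * r ^ 2 - φ - 1 / (2 * L ^ 2)) := le_max_left _ _
  rcases le_total r (1 / (2 * L)) with hcase | hcase
  · rw [max_eq_left hcase]
    have hinv : 0 < 1 / (2 * L) := by positivity
    have e1 : φ / (2 * (1 / (2 * L))) = φ * L := by field_simp
    rw [e1]
    have hφle : φ ≤ 1 / (8 * L ^ 3) := by
      have := pow_le_pow_left₀ hr0 hcase 3
      rw [hr3] at this
      calc φ ≤ (1 / (2 * L)) ^ 3 := this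
        _ = 1 / (8 * L ^ 3) := by field_simp; ring
    have h2 : φ * L ≤ 1 / (8 * L ^ 2) := by
      calc φ * L ≤ (1 / (8 * L ^ 3)) * L := by nlinarith
        _ = 1 / (8 * L ^ 2) := by field_simp
    have h3 : (1 / (2 * L)) ^ 2 = 1 / (4 * L ^ 2) := by field_simp; ring
    rw [h3]
    have h4 : 1 / (8 * L ^ 2) + 1 / (4 * L ^ 2) ≤ (3/4) / L ^ 2 := by
      rw [div_add_div _ _ (by positivity) (by positivity), div_le_div_iff₀ (by positivity)
        (by positivity)]
      ring_nf
      nlinarith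
    linarith
  · rw [max_eq_right hcase]
    have hrpos : 0 < r := lt_of_lt_of_le (by positivity) hcase
    have e1 : φ / (2 * r) = r ^ 2 / 2 := by
      rw [← hr3]; field_simp
    rw [e1]
    have hmax : (3/2) * r ^ 2 - φ - 1 / (2 * L ^ 2)
        ≤ max 0 ((3/2) * r ^ 2 - φ - 1 / (2 * L ^ 2)) := le_max_right _ _
    have h5 : 1 / (2 * L ^ 2) ≤ (3/4) / L ^ 2 := by
      rw [div_le_div_iff₀ (by positivity) (by positivity)]; nlinarith
    linarith

/-- the leak is pointwise dominated: `h ≤ 3 L³ φ`. -/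
lemma leak_le {L φ : ℝ} (hL : 0 < L) (hφ : 0 ≤ φ) :
    max 0 ((3/2) * (φ ^ ((1:ℝ)/3)) ^ 2 - φ - 1 / (2 * L ^ 2)) ≤ 3 * L ^ 3 * φ := by
  set r := φ ^ ((1:ℝ)/3) with hr
  have hr0 : 0 ≤ r := Real.rpow_nonneg hφ _
  have hr3 : r ^ 3 = φ := by
    rw [hr, ← Real.rpow_natCast (φ ^ ((1:ℝ)/3)) 3, ← Real.rpow_mul hφ]
    norm_num
  have hL2 : 0 < L ^ 2 := by positivity
  rcases le_or_gt ((3/2) * r ^ 2 - φ - 1 / (2 * L ^ 2)) 0 with hc | hc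
  · rw [max_eq_left hc]; positivity
  · rw [max_eq_right (le_of_lt hc)]
    have hb : (3/2) * r ^ 2 - φ - 1 / (2 * L ^ 2) ≤ 1 / 2 := by
      have hfac : 0 ≤ (r - 1) ^ 2 * (r + 1/2) := by positivity
      have hinv : 0 < 1 / (2 * L ^ 2) := by positivity
      nlinarith [hr3]
    have hk2 : 1 / (3 * L ^ 2) < r ^ 2 := by
      have : 1 / (2 * L ^ 2) < (3/2) * r ^ 2 := by linarith
      rw [div_lt_iff₀ (by positivity)] at this ⊢
      nlinarith
    have hk3 : 1 / 3 < (L ^ 2 * r ^ 2) ^ 3 * 9 := by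
      have h9 : 1 / 3 < L ^ 2 * r ^ 2 := by
        rw [div_lt_iff₀ (by positivity)] at hk2
        nlinarith
      have hcube : (1/3:ℝ) ^ 3 < (L ^ 2 * r ^ 2) ^ 3 :=
        pow_lt_pow_left₀ h9 (by norm_num) (by norm_num)
      nlinarith [hcube]
    have hk4 : 1 / 2 < 3 * L ^ 3 * φ := by
      have hnn : 0 ≤ 3 * L ^ 3 * φ := by positivity
      have hsq : (3 * L ^ 3 * φ) ^ 2 = (L ^ 2 * r ^ 2) ^ 3 * 9 := by
        rw [← hr3]; ring
      nlinarith
    linarith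

/-- if the leak is positive then `φ < 27/8`. -/
lemma leak_pos_phi_lt {L φ : ℝ} (hL : 0 < L) (hφ : 0 ≤ φ)
    (hp : 0 < max 0 ((3/2) * (φ ^ ((1:ℝ)/3)) ^ 2 - φ - 1 / (2 * L ^ 2))) :
    φ < 27 / 8 := by
  set r := φ ^ ((1:ℝ)/3) with hr
  have hr0 : 0 ≤ r := Real.rpow_nonneg hφ _
  have hr3 : r ^ 3 = φ := by
    rw [hr, ← Real.rpow_natCast (φ ^ ((1:ℝ)/3)) 3, ← Real.rpow_mul hφ]
    norm_num
  have hc : 0 < (3/2) * r ^ 2 - φ - 1 / (2 * L ^ 2) := by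
    by_contra hcon
    push_neg at hcon
    rw [max_eq_left hcon] at hp
    exact lt_irrefl _ hp
  have hinv : 0 < 1 / (2 * L ^ 2) := by positivity
  have hrlt : r < 3 / 2 := by nlinarith [hr3]
  calc φ = r ^ 3 := hr3.symm
    _ < (3/2) ^ 3 := by nlinarith
    _ = 27 / 8 := by norm_num

end realineq
set_option maxHeartbeats 1000000

/-- Grönwall bound for `w = u_nn - u` (with `g = w(0,·)`):
`sup_{0≤t≤T} ‖w(t)‖₂² ≤ C exp(∫₀ᵀ ‖u_x‖₂² dt) (‖g‖₂² + ∫₀ᵀ ‖f‖₂² dt)`. -/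
theorem burgers_L2_gronwall_bound (a b : ℝ) (hab : a < b) :
    ∃ C : ℝ, 0 < C ∧
      ∀ (T : ℝ) (u unn f : ℝ → ℝ → ℝ),
        0 < T →
        ContDiff ℝ (⊤ : ℕ∞) (fun p : ℝ × ℝ => u p.1 p.2) →
        ContDiff ℝ (⊤ : ℕ∞) (fun p : ℝ × ℝ => unn p.1 p.2) →
        ContDiff ℝ (⊤ : ℕ∞) (fun p : ℝ × ℝ => f p.1 p.2) →
        (∀ t ∈ Icc (0 : ℝ) T, ∀ x ∈ Icc a b,
          pt u t x + u t x * px u t x - pxx u t x = 0) →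
        (∀ t ∈ Icc (0 : ℝ) T, u t a = 0 ∧ u t b = 0) →
        (∀ t ∈ Icc (0 : ℝ) T, ∀ x ∈ Icc a b,
          pt unn t x + unn t x * px unn t x - pxx unn t x = f t x) →
        (∀ t ∈ Icc (0 : ℝ) T, unn t a = 0 ∧ unn t b = 0) →
        ∀ t ∈ Icc (0 : ℝ) T,
          (∫ x in a..b, (unn t x - u t x) ^ 2) ≤
            C * Real.exp (∫ s in (0 : ℝ)..T, ∫ x in a..b, (px u s x) ^ 2) *
              ((∫ x in a..b, (unn 0 x - u 0 x) ^ 2) +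
                ∫ s in (0 : ℝ)..T, ∫ x in a..b, (f s x) ^ 2) := by
  have hL : 0 < b - a := by linarith
  set L : ℝ := b - a with hLdef
  clear_value L
  refine ⟨Real.exp (6 * L ^ 5) * (1 + L ^ 2), by positivity, ?_⟩
  intro T u unn f hT hu hunn hf hupde hubc hnpde hnbc t htmem
  -- the error function
  set w : ℝ → ℝ → ℝ := fun s y => unn s y - u s y with hwdef
  have hw : ContDiff ℝ (⊤ : ℕ∞) (uncurry w) := hunn.sub hu
  -- basic smoothness facts
  have hwx : ContDiff ℝ (⊤ : ℕ∞) (uncurry (px w)) := contDiff_px hw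
  have hux : ContDiff ℝ (⊤ : ℕ∞) (uncurry (px u)) := contDiff_px hu
  have hnx : ContDiff ℝ (⊤ : ℕ∞) (uncurry (px unn)) := contDiff_px hunn
  -- the main scalar quantities
  set W : ℝ → ℝ := fun s => ∫ x in a..b, (w s x) ^ 2 with hWdef
  set ph : ℝ → ℝ := fun s => ∫ x in a..b, (px u s x) ^ 2 with hphdef
  set Fn : ℝ → ℝ := fun s => ∫ x in a..b, (f s x) ^ 2 with hFndef
  set yy : ℝ → ℝ := fun s => ∫ x in a..b, (u s x) ^ 2 with hyydef
  set hh : ℝ → ℝ :=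
    fun s => max 0 ((3/2) * ((ph s) ^ ((1:ℝ)/3)) ^ 2 - ph s - 1 / (2 * L ^ 2)) with hhdef
  -- nonnegativity
  have hW0 : ∀ s, 0 ≤ W s := fun s =>
    intervalIntegral.integral_nonneg hab.le (fun x _ => sq_nonneg _)
  have hph0 : ∀ s, 0 ≤ ph s := fun s =>
    intervalIntegral.integral_nonneg hab.le (fun x _ => sq_nonneg _)
  have hFn0 : ∀ s, 0 ≤ Fn s := fun s =>
    intervalIntegral.integral_nonneg hab.le (fun x _ => sq_nonneg _)
  have hyy0 : ∀ s, 0 ≤ yy s := fun s =>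
    intervalIntegral.integral_nonneg hab.le (fun x _ => sq_nonneg _)
  have hhh0 : ∀ s, 0 ≤ hh s := fun s => le_max_left _ _
  -- derivative of W
  have hWd : ∀ s, HasDerivAt W (∫ x in a..b, 2 * w s x * pt w s x) s := by
    intro s
    have hsq : ContDiff ℝ (⊤ : ℕ∞) (uncurry (fun s y => (w s y) ^ 2)) := hw.pow 2
    have h0 := hasDerivAt_param hsq a b s
    have e : (∫ x in a..b, pt (fun s y => (w s y) ^ 2) s x)
        = ∫ x in a..b, 2 * w s x * pt w s x := by
      refine intervalIntegral.integral_congr (fun x _ => ?_)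
      have h1 : HasDerivAt (fun s' => w s' x) (pt w s x) s := hasDerivAt_pt hw s x
      have h2 : HasDerivAt (fun s' => (w s' x) ^ 2) (2 * w s x * pt w s x) s := by
        simpa [mul_comm, mul_assoc, mul_left_comm] using h1.fun_pow 2
      exact h2.deriv
    exact e ▸ h0
  -- derivative of yy
  have hyd : ∀ s, HasDerivAt yy (∫ x in a..b, 2 * u s x * pt u s x) s := by
    intro s
    have hsq : ContDiff ℝ (⊤ : ℕ∞) (uncurry (fun s y => (u s y) ^ 2)) := hu.pow 2
    have h0 := hasDerivAt_param hsq a b s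
    have e : (∫ x in a..b, pt (fun s y => (u s y) ^ 2) s x)
        = ∫ x in a..b, 2 * u s x * pt u s x := by
      refine intervalIntegral.integral_congr (fun x _ => ?_)
      have h1 : HasDerivAt (fun s' => u s' x) (pt u s x) s := hasDerivAt_pt hu s x
      have h2 : HasDerivAt (fun s' => (u s' x) ^ 2) (2 * u s x * pt u s x) s := by
        simpa [mul_comm, mul_assoc, mul_left_comm] using h1.fun_pow 2
      exact h2.deriv
    exact e ▸ h0
  -- differentiability/continuity of ph and Fn
  have hphd : ∀ s, HasDerivAt ph (∫ x in a..b, pt (fun s y => (px u s y) ^ 2) s x) s := by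
    intro s
    have hsq : ContDiff ℝ (⊤ : ℕ∞) (uncurry (fun s y => (px u s y) ^ 2)) := hux.pow 2
    exact hasDerivAt_param hsq a b s
  have hph_cont : Continuous ph :=
    continuous_iff_continuousAt.mpr (fun s => (hphd s).continuousAt)
  have hFnd : ∀ s, HasDerivAt Fn (∫ x in a..b, pt (fun s y => (f s y) ^ 2) s x) s := by
    intro s
    have hsq : ContDiff ℝ (⊤ : ℕ∞) (uncurry (fun s y => (f s y) ^ 2)) := hf.pow 2
    exact hasDerivAt_param hsq a b s
  have hFn_cont : Continuous Fn :=
    continuous_iff_continuousAt.mpr (fun s => (hFnd s).continuousAt)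
  have hyy_cont : Continuous yy :=
    continuous_iff_continuousAt.mpr (fun s => (hyd s).continuousAt)
  have hhh_cont : Continuous hh := by
    have h13 : Continuous (fun s => (ph s) ^ ((1:ℝ)/3)) := by
      refine continuous_iff_continuousAt.mpr (fun s => ?_)
      exact (Real.continuousAt_rpow_const (ph s) _ (Or.inr (by norm_num))).comp
        hph_cont.continuousAt
    exact continuous_const.max (((continuous_const.mul (h13.pow 2)).sub hph_cont).sub
      continuous_const)
  -- continuity of curried slices
  have cW : ∀ t', Continuous (fun x => w t' x) := fun t' => (contDiff_curry_right hw t').continuous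
  have cWx : ∀ t', Continuous (fun x => px w t' x) :=
    fun t' => (contDiff_curry_right hwx t').continuous
  have cWxx : ∀ t', Continuous (fun x => pxx w t' x) :=
    fun t' => (contDiff_curry_right (contDiff_px hwx) t').continuous
  have cU : ∀ t', Continuous (fun x => u t' x) := fun t' => (contDiff_curry_right hu t').continuous
  have cUx : ∀ t', Continuous (fun x => px u t' x) :=
    fun t' => (contDiff_curry_right hux t').continuous
  have cUxx : ∀ t', Continuous (fun x => pxx u t' x) :=
    fun t' => (contDiff_curry_right (contDiff_px hux) t').continuous
  have cN : ∀ t', Continuous (fun x => unn t' x) :=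
    fun t' => (contDiff_curry_right hunn t').continuous
  have cNx : ∀ t', Continuous (fun x => px unn t' x) :=
    fun t' => (contDiff_curry_right hnx t').continuous
  have cF : ∀ t', Continuous (fun x => f t' x) := fun t' => (contDiff_curry_right hf t').continuous
  -- pointwise spatial derivatives
  have dW1 : ∀ t' x, HasDerivAt (fun y => w t' y) (px w t' x) x := fun t' x => hasDerivAt_px hw t' x
  have dW2 : ∀ t' x, HasDerivAt (fun y => px w t' y) (pxx w t' x) x :=
    fun t' x => hasDerivAt_px hwx t' x
  have dU1 : ∀ t' x, HasDerivAt (fun y => u t' y) (px u t' x) x := fun t' x => hasDerivAt_px hu t' x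
  have dU2 : ∀ t' x, HasDerivAt (fun y => px u t' y) (pxx u t' x) x :=
    fun t' x => hasDerivAt_px hux t' x
  have dN1 : ∀ t' x, HasDerivAt (fun y => unn t' y) (px unn t' x) x :=
    fun t' x => hasDerivAt_px hunn t' x
  -- boundary values
  have hwa : ∀ t' ∈ Icc (0:ℝ) T, w t' a = 0 := by
    intro t' ht'
    have := (hnbc t' ht').1
    have := (hubc t' ht').1
    simp only [hwdef]
    linarith [(hnbc t' ht').1, (hubc t' ht').1]
  have hwb : ∀ t' ∈ Icc (0:ℝ) T, w t' b = 0 := by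
    intro t' ht'
    simp only [hwdef]
    linarith [(hnbc t' ht').2, (hubc t' ht').2]
  -- PDE satisfied by w
  have hpdew : ∀ t' ∈ Icc (0:ℝ) T, ∀ x ∈ Icc a b, pt w t' x
      = pxx w t' x - (unn t' x * px unn t' x - u t' x * px u t' x) + f t' x := by
    intro t' ht' x hx
    have h1 := hnpde t' ht' x hx
    have h2 := hupde t' ht' x hx
    have e1 : pt w t' x = pt unn t' x - pt u t' x :=
      ((hasDerivAt_pt hunn t' x).sub (hasDerivAt_pt hu t' x)).deriv
    have e2' : (fun y => px w t' y) = (fun y => px unn t' y - px u t' y) :=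
      funext (fun y => ((hasDerivAt_px hunn t' y).sub (hasDerivAt_px hu t' y)).deriv)
    have e3 : pxx w t' x = pxx unn t' x - pxx u t' x := by
      have h3 : HasDerivAt (fun y => px unn t' y - px u t' y)
          (pxx unn t' x - pxx u t' x) x := (hasDerivAt_px hnx t' x).sub (hasDerivAt_px hux t' x)
      have h4 : HasDerivAt (fun y => px w t' y) (pxx unn t' x - pxx u t' x) x := by
        rw [e2']; exact h3
      exact h4.deriv
    rw [e1, e3]
    linarith [h1, h2]
  -- closed form for the derivative of W
  have hWval : ∀ t' ∈ Icc (0:ℝ) T, (∫ x in a..b, 2 * w t' x * pt w t' x)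
      = -2 * (∫ x in a..b, (px w t' x) ^ 2) - (∫ x in a..b, px u t' x * (w t' x) ^ 2)
        + 2 * (∫ x in a..b, f t' x * w t' x) := by
    intro t' ht'
    have hcongr : (∫ x in a..b, 2 * w t' x * pt w t' x)
        = ∫ x in a..b, (2 * (w t' x * pxx w t' x)
            - (w t' x * (2 * unn t' x * px unn t' x - 2 * u t' x * px u t' x))
            + 2 * (f t' x * w t' x)) := by
      refine intervalIntegral.integral_congr (fun x hx => ?_)
      rw [uIcc_of_le hab.le] at hx
      rw [hpdew t' ht' x hx]; ring
    have i1 : IntervalIntegrable (fun x => 2 * (w t' x * pxx w t' x)) volume a b :=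
      Continuous.intervalIntegrable (continuous_const.mul ((cW t').mul (cWxx t'))) a b
    have i2 : IntervalIntegrable
        (fun x => w t' x * (2 * unn t' x * px unn t' x - 2 * u t' x * px u t' x)) volume a b :=
      Continuous.intervalIntegrable ((cW t').mul (((continuous_const.mul (cN t')).mul
        (cNx t')).sub ((continuous_const.mul (cU t')).mul (cUx t')))) a b
    have i3 : IntervalIntegrable (fun x => 2 * (f t' x * w t' x)) volume a b :=
      Continuous.intervalIntegrable (continuous_const.mul ((cF t').mul (cW t'))) a b
    rw [hcongr, intervalIntegral.integral_add (i1.sub i2) i3,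
      intervalIntegral.integral_sub i1 i2, intervalIntegral.integral_const_mul,
      intervalIntegral.integral_const_mul]
    -- first piece : integration by parts
    have hI1 : (∫ x in a..b, w t' x * pxx w t' x) = -(∫ x in a..b, (px w t' x) ^ 2) := by
      have := ibp_two (a := a) (b := b) (u := fun x => w t' x) (v := fun x => px w t' x)
        (u' := fun x => px w t' x) (v' := fun x => pxx w t' x)
        (dW1 t') (dW2 t') (cW t') (cWx t') (cWx t') (cWxx t')
      simp only [hwa t' ht', hwb t' ht', zero_mul, mul_zero, sub_zero, zero_sub] at this
      rw [this]
      congr 1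
      refine intervalIntegral.integral_congr (fun x _ => ?_)
      ring
    -- second piece
    have hI2 : (∫ x in a..b,
        w t' x * (2 * unn t' x * px unn t' x - 2 * u t' x * px u t' x))
        = ∫ x in a..b, px u t' x * (w t' x) ^ 2 := by
      -- ψ = unn² - u²
      have hps : ∀ x, HasDerivAt (fun y => (unn t' y) ^ 2 - (u t' y) ^ 2)
          (2 * unn t' x * px unn t' x - 2 * u t' x * px u t' x) x := by
        intro x
        have h1 := (dN1 t' x).fun_pow 2
        have h2 := (dU1 t' x).fun_pow 2
        have := h1.fun_sub h2
        simpa [pow_one, mul_comm, mul_assoc, mul_left_comm] using this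
      have cps : Continuous (fun y => (unn t' y) ^ 2 - (u t' y) ^ 2) :=
        ((cN t').pow 2).sub ((cU t').pow 2)
      have cps' : Continuous (fun x => 2 * unn t' x * px unn t' x - 2 * u t' x * px u t' x) :=
        ((continuous_const.mul (cN t')).mul (cNx t')).sub
          ((continuous_const.mul (cU t')).mul (cUx t'))
      have hibp := ibp_two (a := a) (b := b) (u := fun x => w t' x)
        (v := fun y => (unn t' y) ^ 2 - (u t' y) ^ 2)
        (u' := fun x => px w t' x)
        (v' := fun x => 2 * unn t' x * px unn t' x - 2 * u t' x * px u t' x)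
        (dW1 t') hps (cW t') cps (cWx t') cps'
      simp only [hwa t' ht', hwb t' ht', zero_mul, mul_zero, sub_zero, zero_sub] at hibp
      rw [hibp]
      -- now : -∫ pxw * ψ = ∫ pxu w²
      have hps_eq : ∀ x, (unn t' x) ^ 2 - (u t' x) ^ 2
          = (w t' x) ^ 2 + 2 * u t' x * w t' x := by
        intro x
        simp only [hwdef]
        ring
      have e4 : (∫ x in a..b, px w t' x * ((unn t' x) ^ 2 - (u t' x) ^ 2))
          = (∫ x in a..b, (w t' x) ^ 2 * px w t' x)
            + ∫ x in a..b, u t' x * (2 * w t' x * px w t' x) := by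
        rw [← intervalIntegral.integral_add
          (Continuous.intervalIntegrable (((cW t').fun_pow 2).fun_mul (cWx t')) a b)
          (Continuous.intervalIntegrable ((cU t').fun_mul
            ((continuous_const.fun_mul (cW t')).fun_mul (cWx t'))) a b)]
        refine intervalIntegral.integral_congr (fun x _ => ?_)
        rw [hps_eq x]; ring
      have e5 : (∫ x in a..b, (w t' x) ^ 2 * px w t' x) = 0 := by
        rw [cube_id (dW1 t') (cW t') (cWx t'), hwa t' ht', hwb t' ht']
        norm_num
      have e6 : (∫ x in a..b, u t' x * (2 * w t' x * px w t' x))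
          = -(∫ x in a..b, px u t' x * (w t' x) ^ 2) := by
        have hsq : ∀ x, HasDerivAt (fun y => (w t' y) ^ 2) (2 * w t' x * px w t' x) x := by
          intro x
          simpa [pow_one, mul_comm, mul_assoc, mul_left_comm] using (dW1 t' x).fun_pow 2
        have := ibp_two (a := a) (b := b) (u := fun x => u t' x)
          (v := fun y => (w t' y) ^ 2) (u' := fun x => px u t' x)
          (v' := fun x => 2 * w t' x * px w t' x)
          (dU1 t') hsq (cU t') ((cW t').pow 2) (cUx t')
          ((continuous_const.mul (cW t')).mul (cWx t'))
        simp only [hwa t' ht', hwb t' ht', ne_eq, OfNat.ofNat_ne_zero, not_false_eq_true,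
          zero_pow, mul_zero, zero_mul, sub_zero, zero_sub] at this
        rw [this]
      rw [e4, e5, e6]
      ring
    rw [hI1, hI2]
    ring
  -- closed form for the derivative of yy
  have hyval : ∀ t' ∈ Icc (0:ℝ) T,
      (∫ x in a..b, 2 * u t' x * pt u t' x) = -2 * ph t' := by
    intro t' ht'
    have hcongr : (∫ x in a..b, 2 * u t' x * pt u t' x)
        = ∫ x in a..b, (2 * (u t' x * pxx u t' x) - 2 * ((u t' x) ^ 2 * px u t' x)) := by
      refine intervalIntegral.integral_congr (fun x hx => ?_)
      rw [uIcc_of_le hab.le] at hx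
      have := hupde t' ht' x hx
      have ept : pt u t' x = pxx u t' x - u t' x * px u t' x := by linarith
      rw [ept]; ring
    have i1 : IntervalIntegrable (fun x => 2 * (u t' x * pxx u t' x)) volume a b :=
      Continuous.intervalIntegrable (continuous_const.mul ((cU t').mul (cUxx t'))) a b
    have i2 : IntervalIntegrable (fun x => 2 * ((u t' x) ^ 2 * px u t' x)) volume a b :=
      Continuous.intervalIntegrable (continuous_const.mul (((cU t').pow 2).mul (cUx t'))) a b
    rw [hcongr, intervalIntegral.integral_sub i1 i2, intervalIntegral.integral_const_mul,
      intervalIntegral.integral_const_mul]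
    have hI1 : (∫ x in a..b, u t' x * pxx u t' x) = -(ph t') := by
      have := ibp_two (a := a) (b := b) (u := fun x => u t' x) (v := fun x => px u t' x)
        (u' := fun x => px u t' x) (v' := fun x => pxx u t' x)
        (dU1 t') (dU2 t') (cU t') (cUx t') (cUx t') (cUxx t')
      simp only [(hubc t' ht').1, (hubc t' ht').2, zero_mul, mul_zero, sub_zero,
        zero_sub] at this
      rw [this]
      congr 1
      refine intervalIntegral.integral_congr (fun x _ => ?_)
      ring
    have hI2 : (∫ x in a..b, (u t' x) ^ 2 * px u t' x) = 0 := by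
      rw [cube_id (dU1 t') (cU t') (cUx t'), (hubc t' ht').1, (hubc t' ht').2]
      norm_num
    rw [hI1, hI2]
    ring
  -- generic Poincaré inequality on [a,b] with zero left boundary value
  have poin : ∀ (v v' : ℝ → ℝ), (∀ x, HasDerivAt v (v' x) x) → Continuous v →
      Continuous v' → v a = 0 →
      (∫ x in a..b, (v x) ^ 2) ≤ L ^ 2 * ∫ x in a..b, (v' x) ^ 2 := by
    intro v v' hv cv cv' hva
    set D := ∫ x in a..b, (v' x) ^ 2 with hDdef
    have hD0 : 0 ≤ D := intervalIntegral.integral_nonneg hab.le (fun x _ => sq_nonneg _)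
    have hpt : ∀ x ∈ Icc a b, (v x) ^ 2 ≤ L * D := by
      intro x hx
      have hftc : ∫ y in a..x, v' y = v x - v a := ftc_id hv cv'
      rw [hva, sub_zero] at hftc
      have hcs := cs_sq (a := a) (b := x) hx.1 (continuous_const : Continuous fun _ => (1:ℝ))
        cv'
      have e1 : (∫ y in a..x, (1:ℝ) * v' y) = v x := by
        rw [← hftc]
        refine intervalIntegral.integral_congr (fun y _ => ?_)
        ring
      have e2 : (∫ y in a..x, (1:ℝ) ^ 2) = x - a := by
        simp
      rw [e1, e2] at hcs
      have e3 : (∫ y in a..x, (v' y) ^ 2) ≤ D := by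
        have hsplit : (∫ y in a..x, (v' y) ^ 2) + (∫ y in x..b, (v' y) ^ 2) = D :=
          intervalIntegral.integral_add_adjacent_intervals
            ((cv'.pow 2).intervalIntegrable a x) ((cv'.pow 2).intervalIntegrable x b)
        have hnn : 0 ≤ ∫ y in x..b, (v' y) ^ 2 :=
          intervalIntegral.integral_nonneg hx.2 (fun y _ => sq_nonneg _)
        linarith
      have e4 : 0 ≤ ∫ y in a..x, (v' y) ^ 2 :=
        intervalIntegral.integral_nonneg hx.1 (fun y _ => sq_nonneg _)
      have e5 : x - a ≤ L := by simp only [hLdef]; linarith [hx.2]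
      nlinarith
    calc (∫ x in a..b, (v x) ^ 2) ≤ ∫ x in a..b, L * D :=
          intervalIntegral.integral_mono_on hab.le ((cv.pow 2).intervalIntegrable a b)
            (intervalIntegrable_const) hpt
      _ = (b - a) * (L * D) := by rw [intervalIntegral.integral_const]; simp [smul_eq_mul]
      _ = L ^ 2 * D := by rw [← hLdef]; ring
  -- Poincaré for u
  have hPoinU : ∀ t' ∈ Icc (0:ℝ) T, yy t' ≤ L ^ 2 * ph t' := by
    intro t' ht'
    exact poin (fun x => u t' x) (fun x => px u t' x) (dU1 t') (cU t') (cUx t')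
      (hubc t' ht').1
  -- the fundamental differential inequality
  have hdiff : ∀ t' ∈ Icc (0:ℝ) T, (∫ x in a..b, 2 * w t' x * pt w t' x)
      ≤ (ph t' + hh t') * W t' + L ^ 2 * Fn t' := by
    intro t' ht'
    rw [hWval t' ht']
    have hsqder : ∀ x, HasDerivAt (fun y => (w t' y) ^ 2) (2 * w t' x * px w t' x) x := by
      intro x
      simpa [pow_one, mul_comm, mul_assoc, mul_left_comm] using (dW1 t' x).fun_pow 2
    set D := ∫ x in a..b, (px w t' x) ^ 2 with hDdef
    have hD0 : 0 ≤ D := intervalIntegral.integral_nonneg hab.le (fun x _ => sq_nonneg _)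
    set Q := ∫ x in a..b, |2 * w t' x * px w t' x| with hQdef
    have cQint : Continuous (fun x => |2 * w t' x * px w t' x|) :=
      ((continuous_const.mul (cW t')).mul (cWx t')).abs
    have hQ0 : 0 ≤ Q := intervalIntegral.integral_nonneg hab.le (fun x _ => abs_nonneg _)
    -- pointwise sup bound
    have hptw : ∀ x ∈ Icc a b, (w t' x) ^ 2 ≤ Q := by
      intro x hx
      have hftc : ∫ y in a..x, 2 * w t' y * px w t' y = (w t' x) ^ 2 - (w t' a) ^ 2 :=
        ftc_id hsqder ((continuous_const.mul (cW t')).mul (cWx t'))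
      rw [hwa t' ht'] at hftc
      have h1 : (∫ y in a..x, 2 * w t' y * px w t' y)
          ≤ ∫ y in a..x, |2 * w t' y * px w t' y| :=
        intervalIntegral.integral_mono_on hx.1
          (((continuous_const.mul (cW t')).mul (cWx t')).intervalIntegrable a x)
          (cQint.intervalIntegrable a x) (fun y _ => le_abs_self _)
      have h2 : (∫ y in a..x, |2 * w t' y * px w t' y|) ≤ Q := by
        have hsplit : (∫ y in a..x, |2 * w t' y * px w t' y|)
            + (∫ y in x..b, |2 * w t' y * px w t' y|) = Q :=
          intervalIntegral.integral_add_adjacent_intervals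
            (cQint.intervalIntegrable a x) (cQint.intervalIntegrable x b)
        have hnn : 0 ≤ ∫ y in x..b, |2 * w t' y * px w t' y| :=
          intervalIntegral.integral_nonneg hx.2 (fun y _ => abs_nonneg _)
        linarith
      nlinarith [sq_nonneg (w t' a)]
    -- L⁴-L² bound
    have hw4 : (∫ x in a..b, ((w t' x) ^ 2) ^ 2) ≤ Q * W t' := by
      calc (∫ x in a..b, ((w t' x) ^ 2) ^ 2) ≤ ∫ x in a..b, Q * (w t' x) ^ 2 := by
            refine intervalIntegral.integral_mono_on hab.le
              ((((cW t').pow 2).pow 2).intervalIntegrable a b)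
              ((continuous_const.mul ((cW t').pow 2)).intervalIntegrable a b) ?_
            intro x hx
            have := hptw x hx
            nlinarith [sq_nonneg (w t' x)]
        _ = Q * W t' := intervalIntegral.integral_const_mul _ _
    -- Agmon-type bound for Q
    have hQle : Q ≤ 2 * (Real.sqrt (W t') * Real.sqrt D) := by
      have e1 : Q = 2 * ∫ x in a..b, |w t' x| * |px w t' x| := by
        rw [← intervalIntegral.integral_const_mul]
        refine intervalIntegral.integral_congr (fun x _ => ?_)
        rw [abs_mul, abs_mul, abs_two]
        ring
      have e2 : (∫ x in a..b, |w t' x| * |px w t' x|)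
          ≤ Real.sqrt (∫ x in a..b, |w t' x| ^ 2) * Real.sqrt (∫ x in a..b, |px w t' x| ^ 2) :=
        cs_sqrt hab.le (cW t').abs (cWx t').abs
      have e3 : (∫ x in a..b, |w t' x| ^ 2) = W t' := by
        refine intervalIntegral.integral_congr (fun x _ => ?_)
        rw [sq_abs]
      have e4 : (∫ x in a..b, |px w t' x| ^ 2) = D := by
        refine intervalIntegral.integral_congr (fun x _ => ?_)
        rw [sq_abs]
      rw [e3, e4] at e2
      linarith
    -- Poincaré for w
    have hPoinW : W t' ≤ L ^ 2 * D :=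
      poin (fun x => w t' x) (fun x => px w t' x) (dW1 t') (cW t') (cWx t') (hwa t' ht')
    -- Cauchy–Schwarz for the transport term
    have hJ : -(∫ x in a..b, px u t' x * (w t' x) ^ 2)
        ≤ Real.sqrt (ph t') * Real.sqrt (Q * W t') := by
      have hcs := cs_sq hab.le (cUx t') ((cW t').pow 2)
      have e1 : (∫ x in a..b, (px u t' x) ^ 2) = ph t' := rfl
      rw [e1] at hcs
      have h2 : (∫ x in a..b, px u t' x * (w t' x) ^ 2) ^ 2 ≤ ph t' * (Q * W t') := by
        calc (∫ x in a..b, px u t' x * (w t' x) ^ 2) ^ 2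
            ≤ ph t' * ∫ x in a..b, ((w t' x) ^ 2) ^ 2 := hcs
          _ ≤ ph t' * (Q * W t') := by
              exact mul_le_mul_of_nonneg_left hw4 (hph0 t')
      calc -(∫ x in a..b, px u t' x * (w t' x) ^ 2)
          ≤ |∫ x in a..b, px u t' x * (w t' x) ^ 2| := neg_le_abs _
        _ = Real.sqrt ((∫ x in a..b, px u t' x * (w t' x) ^ 2) ^ 2) :=
            (Real.sqrt_sq_eq_abs _).symm
        _ ≤ Real.sqrt (ph t' * (Q * W t')) := Real.sqrt_le_sqrt h2
        _ = Real.sqrt (ph t') * Real.sqrt (Q * W t') := Real.sqrt_mul (hph0 t') _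
    -- the f term
    have hfw : (∫ x in a..b, f t' x * w t' x)
        ≤ Real.sqrt (Fn t') * Real.sqrt (W t') := cs_sqrt hab.le (cF t') (cW t')
    have hfw2 : Real.sqrt (Fn t') * Real.sqrt (W t') ≤ L ^ 2 * Fn t' / 2 + W t' / (2 * L ^ 2) := by
      have := sqrt_mul_le_amgm (hFn0 t') (hW0 t') (show (0:ℝ) < 1 / L ^ 2 by positivity)
      have e1 : Fn t' / (2 * (1 / L ^ 2)) = L ^ 2 * Fn t' / 2 := by
        rw [mul_one_div, div_div_eq_mul_div, mul_comm (Fn t') (L ^ 2)]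
      have e2 : (1 / L ^ 2) * W t' / 2 = W t' / (2 * L ^ 2) := by
        rw [one_div_mul_eq_div, div_div, mul_comm (L ^ 2) 2]
      rw [e1, e2] at this
      exact this
    -- combine via the μ-trick
    set mu := max (1 / (2 * L)) ((ph t') ^ ((1:ℝ)/3)) with hmu
    have hmupos : 0 < mu := lt_of_lt_of_le (by positivity) (le_max_left _ _)
    have step1 : Real.sqrt (ph t') * Real.sqrt (Q * W t')
        = Real.sqrt (ph t' * W t') * Real.sqrt Q := by
      rw [Real.sqrt_mul hQ0, Real.sqrt_mul (hph0 t')]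
      ring
    have step2 : Real.sqrt (ph t' * W t') * Real.sqrt Q
        ≤ (ph t' * W t') / (2 * mu) + mu * Q / 2 :=
      sqrt_mul_le_amgm (mul_nonneg (hph0 t') (hW0 t')) hQ0 hmupos
    have step4 : mu * Q / 2 ≤ D / 4 + mu ^ 2 * W t' := by
      have h1 : mu * Q / 2 ≤ mu * (Real.sqrt (W t') * Real.sqrt D) := by
        nlinarith [hQle, hmupos.le]
      have h2 : mu * (Real.sqrt (W t') * Real.sqrt D) ≤ D / 4 + mu ^ 2 * W t' := by
        nlinarith [Real.sq_sqrt hD0, Real.sq_sqrt (hW0 t'), sq_nonneg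
          (Real.sqrt D / 2 - mu * Real.sqrt (W t')), Real.sqrt_nonneg D,
          Real.sqrt_nonneg (W t')]
      linarith
    have step5 : ph t' / (2 * mu) + mu ^ 2
        ≤ ph t' + hh t' + (3/4) / L ^ 2 := mu_choice hL (hph0 t')
    have step6 : (ph t' / (2 * mu) + mu ^ 2) * W t'
        ≤ (ph t' + hh t' + (3/4) / L ^ 2) * W t' :=
      mul_le_mul_of_nonneg_right step5 (hW0 t')
    have e7 : ph t' * W t' / (2 * mu) = (ph t' / (2 * mu)) * W t' := by ring
    have e8 : (3/4) / L ^ 2 * W t' = (3/4) * (W t' / L ^ 2) := by ring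
    have e9 : W t' / L ^ 2 ≤ D := by
      rw [div_le_iff₀ (by positivity : (0:ℝ) < L ^ 2)]
      linarith [hPoinW]
    have e10 : W t' / (2 * L ^ 2) = W t' / L ^ 2 / 2 := by
      rw [div_div, mul_comm (L ^ 2) 2]
    -- final assembly
    have hJfull : -(∫ x in a..b, px u t' x * (w t' x) ^ 2)
        ≤ (ph t' + hh t') * W t' + (3/4) * (W t' / L ^ 2) + D / 4 := by
      calc -(∫ x in a..b, px u t' x * (w t' x) ^ 2)
          ≤ Real.sqrt (ph t') * Real.sqrt (Q * W t') := hJ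
        _ = Real.sqrt (ph t' * W t') * Real.sqrt Q := step1
        _ ≤ (ph t' * W t') / (2 * mu) + mu * Q / 2 := step2
        _ ≤ (ph t' * W t') / (2 * mu) + (D / 4 + mu ^ 2 * W t') := by linarith
        _ = (ph t' / (2 * mu) + mu ^ 2) * W t' + D / 4 := by rw [e7]; ring
        _ ≤ (ph t' + hh t' + (3/4) / L ^ 2) * W t' + D / 4 := by linarith [step6]
        _ = (ph t' + hh t') * W t' + (3/4) * (W t' / L ^ 2) + D / 4 := by
            rw [← e8]; ring
    linarith [hJfull, hfw, hfw2, e9]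
  -- Gronwall machinery
  have hrho_cont : Continuous (fun s => ph s + hh s) := hph_cont.add hhh_cont
  have hrho0 : ∀ s, 0 ≤ ph s + hh s := fun s => add_nonneg (hph0 s) (hhh0 s)
  set A : ℝ → ℝ := fun s => ∫ r in (0:ℝ)..s, (ph r + hh r) with hAdef
  have hAd : ∀ s, HasDerivAt A (ph s + hh s) s := by
    intro s
    exact intervalIntegral.integral_hasDerivAt_right
      (hrho_cont.intervalIntegrable 0 s)
      (hrho_cont.stronglyMeasurable.stronglyMeasurableAtFilter)
      hrho_cont.continuousAt
  set B : ℝ → ℝ := fun s => ∫ r in (0:ℝ)..s, L ^ 2 * Fn r with hBdef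
  have hBint_cont : Continuous (fun r => L ^ 2 * Fn r) := continuous_const.mul hFn_cont
  have hBd : ∀ s, HasDerivAt B (L ^ 2 * Fn s) s := by
    intro s
    exact intervalIntegral.integral_hasDerivAt_right
      (hBint_cont.intervalIntegrable 0 s)
      (hBint_cont.stronglyMeasurable.stronglyMeasurableAtFilter)
      hBint_cont.continuousAt
  set G : ℝ → ℝ := fun s => W s * Real.exp (-A s) - B s with hGdef
  have hGd : ∀ s, HasDerivAt G ((∫ x in a..b, 2 * w s x * pt w s x) * Real.exp (-A s)
      + W s * (Real.exp (-A s) * (-(ph s + hh s))) - L ^ 2 * Fn s) s := by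
    intro s
    exact ((hWd s).mul (((hAd s).neg).exp)).sub (hBd s)
  have hGanti : AntitoneOn G (Icc 0 T) := by
    refine antitoneOn_of_deriv_nonpos (convex_Icc 0 T) ?_ ?_ ?_
    · exact (continuous_iff_continuousAt.mpr (fun s => (hGd s).continuousAt)).continuousOn
    · exact fun s _ => ((hGd s).differentiableAt).differentiableWithinAt
    · intro s hs
      rw [interior_Icc] at hs
      have hsIcc : s ∈ Icc 0 T := Ioo_subset_Icc_self hs
      rw [(hGd s).deriv]
      have h1 := hdiff s hsIcc
      have hA0 : 0 ≤ A s := intervalIntegral.integral_nonneg hsIcc.1 (fun r _ => hrho0 r)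
      have hexp1 : Real.exp (-A s) ≤ 1 := by
        have := Real.exp_le_exp.mpr (neg_nonpos_of_nonneg hA0)
        rwa [Real.exp_zero] at this
      have hexppos : (0:ℝ) < Real.exp (-A s) := Real.exp_pos _
      have h2 : (∫ x in a..b, 2 * w s x * pt w s x) - (ph s + hh s) * W s ≤ L ^ 2 * Fn s := by
        linarith [h1]
      have h3 : ((∫ x in a..b, 2 * w s x * pt w s x) - (ph s + hh s) * W s) * Real.exp (-A s)
          ≤ L ^ 2 * Fn s * Real.exp (-A s) := mul_le_mul_of_nonneg_right h2 hexppos.le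
      have h4 : L ^ 2 * Fn s * Real.exp (-A s) ≤ L ^ 2 * Fn s := by
        have hnn : 0 ≤ L ^ 2 * Fn s := mul_nonneg (sq_nonneg L) (hFn0 s)
        nlinarith [hnn, hexp1, hexppos.le]
      have e0 : (∫ x in a..b, 2 * w s x * pt w s x) * Real.exp (-A s)
          + W s * (Real.exp (-A s) * (-(ph s + hh s)))
          = ((∫ x in a..b, 2 * w s x * pt w s x) - (ph s + hh s) * W s) * Real.exp (-A s) := by
        ring
      linarith [e0 ▸ (le_trans h3 h4)]
  have hG0 : G t ≤ G 0 := hGanti (left_mem_Icc.mpr hT.le) htmem htmem.1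
  have hG0val : G 0 = W 0 := by
    simp only [hGdef, hAdef, hBdef, intervalIntegral.integral_same, neg_zero, Real.exp_zero,
      mul_one, sub_zero]
  have hWt : W t ≤ (W 0 + B t) * Real.exp (A t) := by
    have hmul : W t * Real.exp (-A t) ≤ W 0 + B t := by
      have := hG0
      rw [hG0val] at this
      simp only [hGdef] at this
      linarith
    calc W t = (W t * Real.exp (-A t)) * Real.exp (A t) := by
          rw [mul_assoc, ← Real.exp_add]
          simp
      _ ≤ (W 0 + B t) * Real.exp (A t) :=
          mul_le_mul_of_nonneg_right hmul (Real.exp_pos _).le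
  -- bound on B t
  have hBt : B t ≤ L ^ 2 * ∫ s in (0:ℝ)..T, Fn s := by
    have hsplit : B t + (∫ r in t..T, L ^ 2 * Fn r) = ∫ r in (0:ℝ)..T, L ^ 2 * Fn r :=
      intervalIntegral.integral_add_adjacent_intervals
        (hBint_cont.intervalIntegrable 0 t) (hBint_cont.intervalIntegrable t T)
    have hnn : 0 ≤ ∫ r in t..T, L ^ 2 * Fn r :=
      intervalIntegral.integral_nonneg htmem.2
        (fun r _ => mul_nonneg (sq_nonneg L) (hFn0 r))
    have heq : (∫ r in (0:ℝ)..T, L ^ 2 * Fn r) = L ^ 2 * ∫ s in (0:ℝ)..T, Fn s :=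
      intervalIntegral.integral_const_mul _ _
    linarith
  -- the leak bound : ∫₀ᵀ hh ≤ 6 L⁵
  have hkey : ∀ s ∈ Icc (0:ℝ) T, 4 * L ^ 2 ≤ yy s → hh s = 0 := by
    intro s hs hys
    by_contra hcon
    have hpos : 0 < hh s := lt_of_le_of_ne (hhh0 s) (Ne.symm hcon)
    have hlt : ph s < 27 / 8 := leak_pos_phi_lt hL (hph0 s) hpos
    have hp := hPoinU s hs
    nlinarith [pow_pos hL 2]
  have hhle : ∀ s, hh s ≤ 3 * L ^ 3 * ph s := fun s => leak_le hL (hph0 s)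
  have hleak : (∫ s in (0:ℝ)..T, hh s) ≤ 6 * L ^ 5 := by
    by_cases hS : ∃ s ∈ Icc (0:ℝ) T, yy s ≤ 4 * L ^ 2
    · set S : Set ℝ := Icc 0 T ∩ yy ⁻¹' (Iic (4 * L ^ 2)) with hSdef
      have hSclosed : IsClosed S := isClosed_Icc.inter (isClosed_Iic.preimage hyy_cont)
      have hSne : S.Nonempty := by
        obtain ⟨s, hs1, hs2⟩ := hS
        exact ⟨s, hs1, hs2⟩
      have hSbdd : BddBelow S := ⟨0, fun s hs => hs.1.1⟩
      set σ := sInf S with hσdef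
      have hσS : σ ∈ S := hSclosed.csInf_mem hSne hSbdd
      have hσIcc : σ ∈ Icc (0:ℝ) T := hσS.1
      have hyσ : yy σ ≤ 4 * L ^ 2 := hσS.2
      have hzero : ∀ s, 0 ≤ s → s < σ → hh s = 0 := by
        intro s h0s hsσ
        have hsT : s ≤ T := le_trans hsσ.le hσIcc.2
        have hsmem : s ∈ Icc (0:ℝ) T := ⟨h0s, hsT⟩
        have hns : s ∉ S := fun hmem => absurd (csInf_le hSbdd hmem) (not_le.mpr hsσ)
        have hy : ¬ (yy s ≤ 4 * L ^ 2) := fun hy => hns ⟨hsmem, hy⟩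
        exact hkey s hsmem (not_le.mp hy).le
      have hint1 : (∫ s in (0:ℝ)..σ, hh s) = 0 := by
        rcases eq_or_lt_of_le hσIcc.1 with heq | hlt
        · rw [← heq]
          simp
        · have hEq : ∀ s ∈ Icc (0:ℝ) σ, hh s = 0 := by
            intro s hs
            rcases lt_or_eq_of_le hs.2 with h | h
            · exact hzero s hs.1 h
            · have hEqOn : Set.EqOn hh (fun _ => 0) (Ico (0:ℝ) σ) :=
                fun r hr => hzero r hr.1 hr.2
              have hcl : Set.EqOn hh (fun _ => 0) (closure (Ico (0:ℝ) σ)) :=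
                hEqOn.closure hhh_cont continuous_const
              have hmem : σ ∈ closure (Ico (0:ℝ) σ) := by
                rw [closure_Ico (ne_of_lt hlt)]
                exact ⟨hσIcc.1, le_refl σ⟩
              rw [h]
              exact hcl hmem
          rw [intervalIntegral.integral_congr (g := fun _ => (0:ℝ))
            (fun s hs => hEq s (by rwa [uIcc_of_le hσIcc.1] at hs))]
          simp
      have hftc : ∫ s in σ..T, (-2) * ph s = yy T - yy σ := by
        refine intervalIntegral.integral_eq_sub_of_hasDerivAt (fun s hs => ?_)
          ((continuous_const.mul hph_cont).intervalIntegrable σ T)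
        rw [uIcc_of_le hσIcc.2] at hs
        have hsIcc : s ∈ Icc (0:ℝ) T := ⟨le_trans hσIcc.1 hs.1, hs.2⟩
        have hder := hyd s
        rw [hyval s hsIcc] at hder
        exact hder
      have hphint : (∫ s in σ..T, ph s) = (yy σ - yy T) / 2 := by
        have h3 : (∫ s in σ..T, (-2) * ph s) = -2 * ∫ s in σ..T, ph s :=
          intervalIntegral.integral_const_mul _ _
        rw [h3] at hftc
        linarith
      have hint2 : (∫ s in σ..T, hh s) ≤ 3 * L ^ 3 * ((yy σ - yy T) / 2) := by
        calc (∫ s in σ..T, hh s) ≤ ∫ s in σ..T, 3 * L ^ 3 * ph s :=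
              intervalIntegral.integral_mono_on hσIcc.2
                (hhh_cont.intervalIntegrable σ T)
                ((continuous_const.mul hph_cont).intervalIntegrable σ T)
                (fun s _ => hhle s)
          _ = 3 * L ^ 3 * ∫ s in σ..T, ph s := intervalIntegral.integral_const_mul _ _
          _ = 3 * L ^ 3 * ((yy σ - yy T) / 2) := by rw [hphint]
      have hadd : (∫ s in (0:ℝ)..σ, hh s) + (∫ s in σ..T, hh s) = ∫ s in (0:ℝ)..T, hh s :=
        intervalIntegral.integral_add_adjacent_intervals
          (hhh_cont.intervalIntegrable 0 σ) (hhh_cont.intervalIntegrable σ T)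
      have hyT0 : 0 ≤ yy T := hyy0 T
      have hL3 : (0:ℝ) ≤ 3 * L ^ 3 := by positivity
      nlinarith [hint1, hint2, hadd, hyσ, hyT0, hL3, pow_pos hL 3]
    · push_neg at hS
      have hEq : ∀ s ∈ Icc (0:ℝ) T, hh s = 0 :=
        fun s hs => hkey s hs (hS s hs).le
      rw [intervalIntegral.integral_congr (g := fun _ => (0:ℝ))
        (fun s hs => hEq s (by rwa [uIcc_of_le hT.le] at hs))]
      simp
      positivity
  -- bound on A t
  have hAt : A t ≤ (∫ s in (0:ℝ)..T, ph s) + 6 * L ^ 5 := by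
    have h1 : A t ≤ A T := by
      have hsplit : A t + (∫ r in t..T, (ph r + hh r)) = A T :=
        intervalIntegral.integral_add_adjacent_intervals
          (hrho_cont.intervalIntegrable 0 t) (hrho_cont.intervalIntegrable t T)
      have hnn : 0 ≤ ∫ r in t..T, (ph r + hh r) :=
        intervalIntegral.integral_nonneg htmem.2 (fun r _ => hrho0 r)
      linarith
    have h2 : A T = (∫ s in (0:ℝ)..T, ph s) + ∫ s in (0:ℝ)..T, hh s :=
      intervalIntegral.integral_add (hph_cont.intervalIntegrable 0 T)
        (hhh_cont.intervalIntegrable 0 T)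
    linarith [hleak]
  -- final assembly
  have hFnint0 : 0 ≤ ∫ s in (0:ℝ)..T, Fn s :=
    intervalIntegral.integral_nonneg hT.le (fun s _ => hFn0 s)
  have hexpA : Real.exp (A t) ≤ Real.exp (∫ s in (0:ℝ)..T, ph s) * Real.exp (6 * L ^ 5) := by
    rw [← Real.exp_add]
    exact Real.exp_le_exp.mpr hAt
  have final : W t ≤ (Real.exp (6 * L ^ 5) * (1 + L ^ 2))
      * Real.exp (∫ s in (0:ℝ)..T, ph s) * (W 0 + ∫ s in (0:ℝ)..T, Fn s) := by
    have step1 : W t ≤ (W 0 + L ^ 2 * ∫ s in (0:ℝ)..T, Fn s)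
        * (Real.exp (∫ s in (0:ℝ)..T, ph s) * Real.exp (6 * L ^ 5)) := by
      calc W t ≤ (W 0 + B t) * Real.exp (A t) := hWt
        _ ≤ (W 0 + L ^ 2 * ∫ s in (0:ℝ)..T, Fn s)
            * (Real.exp (∫ s in (0:ℝ)..T, ph s) * Real.exp (6 * L ^ 5)) := by
            refine mul_le_mul (by linarith [hBt]) hexpA (Real.exp_pos _).le ?_
            have : 0 ≤ L ^ 2 * ∫ s in (0:ℝ)..T, Fn s := mul_nonneg (sq_nonneg L) hFnint0
            linarith [hW0 0]
    have step2 : (W 0 + L ^ 2 * ∫ s in (0:ℝ)..T, Fn s)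
        ≤ (1 + L ^ 2) * (W 0 + ∫ s in (0:ℝ)..T, Fn s) := by
      nlinarith [hW0 0, hFnint0, sq_nonneg L]
    calc W t ≤ (W 0 + L ^ 2 * ∫ s in (0:ℝ)..T, Fn s)
        * (Real.exp (∫ s in (0:ℝ)..T, ph s) * Real.exp (6 * L ^ 5)) := step1
      _ ≤ ((1 + L ^ 2) * (W 0 + ∫ s in (0:ℝ)..T, Fn s))
          * (Real.exp (∫ s in (0:ℝ)..T, ph s) * Real.exp (6 * L ^ 5)) :=
          mul_le_mul_of_nonneg_right step2
            (mul_nonneg (Real.exp_pos _).le (Real.exp_pos _).le)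
      _ = (Real.exp (6 * L ^ 5) * (1 + L ^ 2))
          * Real.exp (∫ s in (0:ℝ)..T, ph s) * (W 0 + ∫ s in (0:ℝ)..T, Fn s) := by
          ring
  exact final

end Stmt4
end

section
/- Under the Burgers-equation error setup, the spatial derivative w_x satisfies the differential inequality d/dt ‖w_x(t)‖₂² + ‖w_xx(t)‖₂² ≤ C ( (‖w_x(t)‖₂² + ‖u_x(t)‖₂²) ‖w_x(t)‖₂² + ‖f(t)‖₂² ) for all t ∈ [0,T], where C is a constant depending only on Ω. -/
open MeasureTheory Set

namespace Stmt6

section Helpers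
open intervalIntegral

noncomputable def Dx (F : ℝ × ℝ → ℝ) (p : ℝ × ℝ) : ℝ := fderiv ℝ F p (0, 1)
noncomputable def Dt (F : ℝ × ℝ → ℝ) (p : ℝ × ℝ) : ℝ := fderiv ℝ F p (1, 0)

lemma contDiff_Dx {F : ℝ × ℝ → ℝ} (hF : ContDiff ℝ (⊤ : ℕ∞) F) : ContDiff ℝ (⊤ : ℕ∞) (Dx F) :=
  (ContinuousLinearMap.apply ℝ ℝ ((0:ℝ), (1:ℝ))).contDiff.comp (hF.fderiv_right (by simp))

lemma contDiff_Dt {F : ℝ × ℝ → ℝ} (hF : ContDiff ℝ (⊤ : ℕ∞) F) : ContDiff ℝ (⊤ : ℕ∞) (Dt F) :=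
  (ContinuousLinearMap.apply ℝ ℝ ((1:ℝ), (0:ℝ))).contDiff.comp (hF.fderiv_right (by simp))

lemma hasDerivAt_sliceX {F : ℝ × ℝ → ℝ} (hF : ContDiff ℝ (⊤ : ℕ∞) F) (t x : ℝ) :
    HasDerivAt (fun y => F (t, y)) (Dx F (t, x)) x :=
  (hF.differentiable (by simp) (t, x)).hasFDerivAt.comp_hasDerivAt x
    ((hasDerivAt_const x t).prodMk (hasDerivAt_id x))

lemma hasDerivAt_sliceT {F : ℝ × ℝ → ℝ} (hF : ContDiff ℝ (⊤ : ℕ∞) F) (t x : ℝ) :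
    HasDerivAt (fun s => F (s, x)) (Dt F (t, x)) t :=
  (hF.differentiable (by simp) (t, x)).hasFDerivAt.comp_hasDerivAt t
    ((hasDerivAt_id t).prodMk (hasDerivAt_const t x))

lemma Dt_Dx_eq {F : ℝ × ℝ → ℝ} (hF : ContDiff ℝ (⊤ : ℕ∞) F) (p : ℝ × ℝ) :
    Dt (Dx F) p = Dx (Dt F) p := by
  have hG : ContDiff ℝ (⊤ : ℕ∞) (fderiv ℝ F) := hF.fderiv_right (by simp)
  have hfd : ∀ v : ℝ × ℝ, fderiv ℝ (fun q => fderiv ℝ F q v) p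
      = (ContinuousLinearMap.apply ℝ ℝ v).comp (fderiv ℝ (fderiv ℝ F) p) := fun v =>
    ((ContinuousLinearMap.apply ℝ ℝ v).hasFDerivAt.comp p
      (hG.differentiable (by simp) p).hasFDerivAt).fderiv
  have hsym := (hF.contDiffAt (x := p)).isSymmSndFDerivAt (by rw [minSmoothness_of_isRCLikeNormedField]; exact WithTop.coe_le_coe.2 le_top) ((1:ℝ),(0:ℝ)) ((0:ℝ),(1:ℝ))
  have h1 : Dt (Dx F) p = fderiv ℝ (fun q => fderiv ℝ F q (0, 1)) p (1, 0) := rfl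
  have h2 : Dx (Dt F) p = fderiv ℝ (fun q => fderiv ℝ F q (1, 0)) p (0, 1) := rfl
  rw [h1, h2, hfd, hfd]
  simpa using hsym


lemma deriv_zero_of_zero_on_Icc {φ : ℝ → ℝ} {d T t : ℝ} (hφ : HasDerivAt φ d t)
    (h0 : ∀ s ∈ Icc (0:ℝ) T, φ s = 0) (hT : 0 < T) (ht : t ∈ Icc (0:ℝ) T) : d = 0 := by
  have hu : UniqueDiffWithinAt ℝ (Icc (0:ℝ) T) t := (uniqueDiffOn_Icc hT) t ht
  have h1 : HasDerivWithinAt φ d (Icc 0 T) t := hφ.hasDerivWithinAt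
  have h2 : HasDerivWithinAt φ 0 (Icc 0 T) t :=
    (hasDerivWithinAt_const t _ (0:ℝ)).congr (fun y hy => h0 y hy) (h0 t ht)
  exact (h1.derivWithin hu).symm.trans (h2.derivWithin hu)

lemma sq_integral_le (g : ℝ → ℝ) (hg : Continuous g) {a x : ℝ} (hax : a ≤ x) :
    (∫ y in a..x, g y) ^ 2 ≤ (x - a) * ∫ y in a..x, (g y) ^ 2 := by
  set G : ℝ → ℝ := fun X => ∫ y in a..X, g y with hGdef
  set I : ℝ → ℝ := fun X => ∫ y in a..X, (g y) ^ 2 with hIdef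
  have hGd : ∀ X, HasDerivAt G (g X) X := fun X =>
    integral_hasDerivAt_right (hg.intervalIntegrable a X)
      (hg.stronglyMeasurableAtFilter _ _) hg.continuousAt
  have hId : ∀ X, HasDerivAt I ((g X) ^ 2) X := fun X =>
    integral_hasDerivAt_right ((hg.pow 2).intervalIntegrable a X)
      ((hg.pow 2).stronglyMeasurableAtFilter _ _) (hg.pow 2).continuousAt
  set H : ℝ → ℝ := fun X => (X - a) * I X - G X ^ 2 with hHdef
  have hHd : ∀ X, HasDerivAt H ((I X + (X - a) * (g X) ^ 2) - 2 * G X ^ 1 * g X) X := by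
    intro X
    exact (((hasDerivAt_id X).sub_const a).mul (hId X)).congr_deriv (by simp only [id_eq]; ring) |>.sub
      ((hGd X).pow 2)
  have key : ∀ X, a ≤ X → 0 ≤ (I X + (X - a) * (g X) ^ 2) - 2 * G X ^ 1 * g X := by
    intro X hX
    have hint : ∀ y, (g y - g X) ^ 2 = (g y) ^ 2 - 2 * g X * g y + g X ^ 2 := fun y => by ring
    have h1 : (∫ y in a..X, (g y - g X) ^ 2) =
        I X - 2 * g X * G X + (X - a) * g X ^ 2 := by
      rw [hGdef, hIdef]
      simp only [hint]
      rw [integral_add (f := fun y => g y ^ 2 - 2 * g X * g y) (g := fun _ => g X ^ 2) (((hg.pow 2).sub ((continuous_const.mul hg))).intervalIntegrable a X)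
            (continuous_const.intervalIntegrable a X),
          integral_sub (f := fun y => g y ^ 2) (g := fun y => 2 * g X * g y) ((hg.pow 2).intervalIntegrable a X)
            ((continuous_const.mul hg).intervalIntegrable a X),
          intervalIntegral.integral_const_mul, intervalIntegral.integral_const]
      simp only [smul_eq_mul]
    have h2 : 0 ≤ ∫ y in a..X, (g y - g X) ^ 2 :=
      integral_nonneg hX fun y _ => sq_nonneg _
    rw [h1] at h2
    nlinarith [h2]
  have hmono : MonotoneOn H (Icc a x) := by
    apply monotoneOn_of_deriv_nonneg (convex_Icc a x)
      (fun X _ => ((hHd X).continuousAt.continuousWithinAt))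
      (fun X _ => ((hHd X).differentiableAt.differentiableWithinAt))
    intro X hX
    rw [(hHd X).deriv]
    rw [interior_Icc] at hX
    exact key X hX.1.le
  have hHa : H a = 0 := by simp [hHdef, hGdef, hIdef]
  have hfin := hmono (left_mem_Icc.2 hax) (right_mem_Icc.2 hax) hax
  rw [hHa] at hfin
  have : 0 ≤ (x - a) * I x - G x ^ 2 := hfin
  linarith

end Helpers

/-- time derivative of a function of (time, space). -/
noncomputable def pt (v : ℝ → ℝ → ℝ) (t x : ℝ) : ℝ := deriv (fun s => v s x) t

/-- first spatial derivative. -/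
noncomputable def px (v : ℝ → ℝ → ℝ) (t x : ℝ) : ℝ := deriv (fun y => v t y) x

/-- second spatial derivative. -/
noncomputable def pxx (v : ℝ → ℝ → ℝ) (t x : ℝ) : ℝ := deriv (deriv (fun y => v t y)) x

/-- mixed derivative: spatial derivative of the time derivative. -/
noncomputable def pxt (v : ℝ → ℝ → ℝ) (t x : ℝ) : ℝ :=
  deriv (fun y => deriv (fun s => v s y) t) x

set_option maxHeartbeats 1000000 in
/-- Energy differential inequality for `w_x` (`w = u_nn - u`):
`d/dt ‖w_x(t)‖₂² + ‖w_xx(t)‖₂² ≤ C ((‖w_x(t)‖₂² + ‖u_x(t)‖₂²) ‖w_x(t)‖₂² + ‖f(t)‖₂²)`. -/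
theorem burgers_H1_differential_inequality (a b : ℝ) (hab : a < b) :
    ∃ C : ℝ, 0 < C ∧
      ∀ (T : ℝ) (u unn f : ℝ → ℝ → ℝ),
        0 < T →
        ContDiff ℝ (⊤ : ℕ∞) (fun p : ℝ × ℝ => u p.1 p.2) →
        ContDiff ℝ (⊤ : ℕ∞) (fun p : ℝ × ℝ => unn p.1 p.2) →
        ContDiff ℝ (⊤ : ℕ∞) (fun p : ℝ × ℝ => f p.1 p.2) →
        (∀ t ∈ Icc (0 : ℝ) T, ∀ x ∈ Icc a b,
          pt u t x + u t x * px u t x - pxx u t x = 0) →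
        (∀ t ∈ Icc (0 : ℝ) T, u t a = 0 ∧ u t b = 0) →
        (∀ t ∈ Icc (0 : ℝ) T, ∀ x ∈ Icc a b,
          pt unn t x + unn t x * px unn t x - pxx unn t x = f t x) →
        (∀ t ∈ Icc (0 : ℝ) T, unn t a = 0 ∧ unn t b = 0) →
        ∀ t ∈ Icc (0 : ℝ) T,
          deriv (fun s => ∫ x in a..b, (px unn s x - px u s x) ^ 2) t +
              (∫ x in a..b, (pxx unn t x - pxx u t x) ^ 2) ≤
            C * (((∫ x in a..b, (px unn t x - px u t x) ^ 2) +
                  (∫ x in a..b, (px u t x) ^ 2)) *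
                (∫ x in a..b, (px unn t x - px u t x) ^ 2) +
              ∫ x in a..b, (f t x) ^ 2) := by
  refine ⟨8 * (b - a) + 4, by linarith, ?_⟩
  intro T u unn f hT hcu hcv hcf hPDEu hbcu hPDEv hbcv t ht
  have hab' : a ≤ b := hab.le
  have hcU : ContDiff ℝ (⊤ : ℕ∞) (fun p : ℝ × ℝ => u p.1 p.2) := hcu
  set U2 : ℝ × ℝ → ℝ := fun p => u p.1 p.2 with hU2def
  have hcV : ContDiff ℝ (⊤ : ℕ∞) (fun p : ℝ × ℝ => unn p.1 p.2) := hcv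
  set V2 : ℝ × ℝ → ℝ := fun p => unn p.1 p.2 with hV2def
  set W : ℝ × ℝ → ℝ := fun p => V2 p - U2 p with hWdef
  have hcW : ContDiff ℝ (⊤ : ℕ∞) W := hcV.sub hcU
  have contX : ∀ (F : ℝ × ℝ → ℝ), Continuous F → ∀ s : ℝ, Continuous fun y => F (s, y) :=
    fun F hF s => hF.comp (continuous_const.prodMk continuous_id)
  -- first spatial derivative facts
  have hpxu : ∀ s x : ℝ, px u s x = Dx U2 (s, x) := fun s x => (hasDerivAt_sliceX hcU s x).deriv
  have hpxv : ∀ s x : ℝ, px unn s x = Dx V2 (s, x) := fun s x => (hasDerivAt_sliceX hcV s x).deriv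
  have hDxW : ∀ s x : ℝ, Dx W (s, x) = Dx V2 (s, x) - Dx U2 (s, x) := fun s x =>
    (hasDerivAt_sliceX hcW s x).unique
      ((hasDerivAt_sliceX hcV s x).sub (hasDerivAt_sliceX hcU s x))
  have hpxw : ∀ s x : ℝ, px unn s x - px u s x = Dx W (s, x) := fun s x => by
    rw [hpxu, hpxv, hDxW]
  -- second spatial derivative facts
  have hdx_funext : ∀ (F : ℝ × ℝ → ℝ), ContDiff ℝ (⊤ : ℕ∞) F → ∀ s : ℝ,
      deriv (fun y => F (s, y)) = fun y => Dx F (s, y) :=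
    fun F hF s => funext fun x => (hasDerivAt_sliceX hF s x).deriv
  have hpxx : ∀ (F : ℝ × ℝ → ℝ), ContDiff ℝ (⊤ : ℕ∞) F → ∀ x : ℝ,
      deriv (deriv (fun y => F (t, y))) x = Dx (Dx F) (t, x) := fun F hF x => by
    rw [hdx_funext F hF t]
    exact (hasDerivAt_sliceX (contDiff_Dx hF) t x).deriv
  have hpxxu : ∀ x : ℝ, pxx u t x = Dx (Dx U2) (t, x) := fun x => hpxx U2 hcU x
  have hpxxv : ∀ x : ℝ, pxx unn t x = Dx (Dx V2) (t, x) := fun x => hpxx V2 hcV x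
  have hDxDxW : ∀ x : ℝ, Dx (Dx W) (t, x) = Dx (Dx V2) (t, x) - Dx (Dx U2) (t, x) := by
    intro x
    have h1 : HasDerivAt (fun y => Dx W (t, y)) (Dx (Dx W) (t, x)) x :=
      hasDerivAt_sliceX (contDiff_Dx hcW) t x
    have h2 : HasDerivAt (fun y => Dx V2 (t, y) - Dx U2 (t, y))
        (Dx (Dx V2) (t, x) - Dx (Dx U2) (t, x)) x :=
      (hasDerivAt_sliceX (contDiff_Dx hcV) t x).sub (hasDerivAt_sliceX (contDiff_Dx hcU) t x)
    have h3 : (fun y => Dx W (t, y)) = fun y => Dx V2 (t, y) - Dx U2 (t, y) :=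
      funext fun y => hDxW t y
    rw [h3] at h1
    exact h1.unique h2
  have hpxxw : ∀ x : ℝ, pxx unn t x - pxx u t x = Dx (Dx W) (t, x) := fun x => by
    rw [hpxxu, hpxxv, hDxDxW]
  -- time derivative facts
  have hptu : ∀ s x : ℝ, pt u s x = Dt U2 (s, x) := fun s x => (hasDerivAt_sliceT hcU s x).deriv
  have hptv : ∀ s x : ℝ, pt unn s x = Dt V2 (s, x) := fun s x => (hasDerivAt_sliceT hcV s x).deriv
  have hDtW : ∀ s x : ℝ, Dt W (s, x) = Dt V2 (s, x) - Dt U2 (s, x) := fun s x =>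
    (hasDerivAt_sliceT hcW s x).unique
      ((hasDerivAt_sliceT hcV s x).sub (hasDerivAt_sliceT hcU s x))
  -- the nonlinear term
  set Nf : ℝ → ℝ := fun x => V2 (t, x) * Dx V2 (t, x) - U2 (t, x) * Dx U2 (t, x) - f t x
    with hNfdef
  have hNc : Continuous Nf := by
    refine Continuous.sub (Continuous.sub (Continuous.mul ?_ ?_) (Continuous.mul ?_ ?_)) ?_
    · exact contX _ hcV.continuous t
    · exact contX _ (contDiff_Dx hcV).continuous t
    · exact contX _ hcU.continuous t
    · exact contX _ (contDiff_Dx hcU).continuous t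
    · exact contX _ hcf.continuous t
  -- PDE substitution
  have hPDE : ∀ x ∈ Icc a b, Dt W (t, x) = Dx (Dx W) (t, x) - Nf x := by
    intro x hx
    have e1 := hPDEv t ht x hx
    have e2 := hPDEu t ht x hx
    rw [hptv, hpxv, hpxxv] at e1
    rw [hptu, hpxu, hpxxu] at e2
    rw [hDtW, hDxDxW]
    simp only [hNfdef]
    have hV2x : V2 (t, x) = unn t x := rfl
    have hU2x : U2 (t, x) = u t x := rfl
    rw [hV2x, hU2x]
    linarith
  -- continuity abbreviations
  have hcwx : Continuous fun x => Dx W (t, x) := contX _ (contDiff_Dx hcW).continuous t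
  have hcwxx : Continuous fun x => Dx (Dx W) (t, x) :=
    contX _ (contDiff_Dx (contDiff_Dx hcW)).continuous t
  have hcwxt : Continuous fun x => Dx (Dt W) (t, x) :=
    contX _ (contDiff_Dx (contDiff_Dt hcW)).continuous t
  have hcux : Continuous fun x => Dx U2 (t, x) := contX _ (contDiff_Dx hcU).continuous t
  have hcft : Continuous fun x => f t x := contX _ hcf.continuous t
  -- Step A : differentiation under the integral sign
  obtain ⟨M, hM⟩ := ((isCompact_Icc (a := t - 1) (b := t + 1)).prod
      (isCompact_uIcc (a := a) (b := b))).exists_bound_of_continuousOn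
    (f := fun q : ℝ × ℝ => 2 * Dx W q * Dt (Dx W) q)
    (((continuous_const.mul (contDiff_Dx hcW).continuous).mul
      (contDiff_Dt (contDiff_Dx hcW)).continuous).continuousOn)
  have hA := intervalIntegral.hasDerivAt_integral_of_dominated_loc_of_deriv_le
    (F := fun s x => (Dx W (s, x)) ^ 2) (F' := fun s x => 2 * Dx W (s, x) * Dt (Dx W) (s, x))
    (bound := fun _ => M) (μ := volume) (a := a) (b := b) (x₀ := t) (Metric.ball_mem_nhds t one_pos)
    (Filter.Eventually.of_forall fun s =>
      (((contX _ (contDiff_Dx hcW).continuous s).pow 2)).aestronglyMeasurable)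
    (((contX _ (contDiff_Dx hcW).continuous t).pow 2).intervalIntegrable a b)
    (((continuous_const.mul (contX _ (contDiff_Dx hcW).continuous t)).mul
      (contX _ (contDiff_Dt (contDiff_Dx hcW)).continuous t)).aestronglyMeasurable)
    (Filter.Eventually.of_forall fun x hx s hs => by
      refine hM (s, x) ⟨?_, uIoc_subset_uIcc hx⟩
      have : |s - t| < 1 := by
        have := Metric.mem_ball.1 hs
        rwa [Real.dist_eq] at this
      constructor <;> [linarith [abs_lt.1 this |>.1]; linarith [abs_lt.1 this |>.2]])
    intervalIntegrable_const
    (Filter.Eventually.of_forall fun x hx s hs =>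
      ((hasDerivAt_sliceT (contDiff_Dx hcW) s x).pow 2).congr_deriv (by push_cast; ring))
  -- identification of the derivative
  have hEfun : (fun s => ∫ x in a..b, (px unn s x - px u s x) ^ 2)
      = fun s => ∫ x in a..b, (Dx W (s, x)) ^ 2 := by
    funext s
    rw [show (fun x => (px unn s x - px u s x) ^ 2) = fun x => (Dx W (s, x)) ^ 2 from
      funext fun x => by rw [hpxw]]
  have hderiv : deriv (fun s => ∫ x in a..b, (px unn s x - px u s x) ^ 2) t
      = ∫ x in a..b, 2 * Dx W (t, x) * Dt (Dx W) (t, x) := by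
    rw [hEfun]; exact hA.2.deriv
  -- integration by parts
  have hbdry : ∀ c : ℝ, unn t c = 0 → u t c = 0 → (∀ s ∈ Icc (0:ℝ) T, unn s c = 0) →
      (∀ s ∈ Icc (0:ℝ) T, u s c = 0) → Dt W (t, c) = 0 := by
    intro c h1 h2 h3 h4
    refine deriv_zero_of_zero_on_Icc (hasDerivAt_sliceT hcW t c) (fun s hs => ?_) hT ht
    show unn s c - u s c = 0
    rw [h3 s hs, h4 s hs, sub_zero]
  have hbdryA : Dt W (t, a) = 0 :=
    hbdry a (hbcv t ht).1 (hbcu t ht).1 (fun s hs => (hbcv s hs).1) (fun s hs => (hbcu s hs).1)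
  have hbdryB : Dt W (t, b) = 0 :=
    hbdry b (hbcv t ht).2 (hbcu t ht).2 (fun s hs => (hbcv s hs).2) (fun s hs => (hbcu s hs).2)
  have hIBP := intervalIntegral.integral_mul_deriv_eq_deriv_mul
    (u := fun x => Dt W (t, x)) (v := fun x => Dx W (t, x))
    (u' := fun x => Dx (Dt W) (t, x)) (v' := fun x => Dx (Dx W) (t, x))
    (fun x _ => hasDerivAt_sliceX (contDiff_Dt hcW) t x)
    (fun x _ => hasDerivAt_sliceX (contDiff_Dx hcW) t x)
    (hcwxt.intervalIntegrable a b) (hcwxx.intervalIntegrable a b)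
  have hIBP' : (∫ x in a..b, Dx (Dt W) (t, x) * Dx W (t, x))
      = - ∫ x in a..b, Dt W (t, x) * Dx (Dx W) (t, x) := by
    rw [hIBP]
    beta_reduce
    rw [hbdryA, hbdryB]; ring
  have hsubst : (∫ x in a..b, Dt W (t, x) * Dx (Dx W) (t, x))
      = ∫ x in a..b, (Dx (Dx W) (t, x) - Nf x) * Dx (Dx W) (t, x) := by
    apply intervalIntegral.integral_congr
    intro x hx
    rw [uIcc_of_le hab'] at hx
    simp only [hPDE x hx]
  have e2 : deriv (fun s => ∫ x in a..b, (px unn s x - px u s x) ^ 2) t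
      = -2 * ∫ x in a..b, (Dx (Dx W) (t, x) - Nf x) * Dx (Dx W) (t, x) := by
    rw [hderiv,
      show (fun x => 2 * Dx W (t, x) * Dt (Dx W) (t, x))
        = fun x => 2 * (Dx (Dt W) (t, x) * Dx W (t, x)) from
        funext fun x => by rw [Dt_Dx_eq hcW]; ring,
      intervalIntegral.integral_const_mul, hIBP', hsubst]
    ring
  -- rewrite the remaining integrals in the goal
  rw [e2,
    show (fun x => (pxx unn t x - pxx u t x) ^ 2) = fun x => (Dx (Dx W) (t, x)) ^ 2 from
      funext fun x => by rw [hpxxw],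
    show (fun x => (px unn t x - px u t x) ^ 2) = fun x => (Dx W (t, x)) ^ 2 from
      funext fun x => by rw [hpxw],
    show (fun x => (px u t x) ^ 2) = fun x => (Dx U2 (t, x)) ^ 2 from
      funext fun x => by rw [hpxu]]
  -- energy inequality
  have hint1 : IntervalIntegrable (fun x => (Nf x) ^ 2) volume a b :=
    (hNc.pow 2).intervalIntegrable a b
  have hint2 : IntervalIntegrable
      (fun x => 2 * ((Dx (Dx W) (t, x) - Nf x) * Dx (Dx W) (t, x))) volume a b :=
    (continuous_const.mul ((hcwxx.sub hNc).mul hcwxx)).intervalIntegrable a b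
  have hint3 : IntervalIntegrable (fun x => (Dx (Dx W) (t, x)) ^ 2) volume a b :=
    (hcwxx.pow 2).intervalIntegrable a b
  have key1 : -2 * (∫ x in a..b, (Dx (Dx W) (t, x) - Nf x) * Dx (Dx W) (t, x))
      + (∫ x in a..b, (Dx (Dx W) (t, x)) ^ 2) ≤ ∫ x in a..b, (Nf x) ^ 2 := by
    have hnn : 0 ≤ ∫ x in a..b, (Dx (Dx W) (t, x) - Nf x) ^ 2 :=
      intervalIntegral.integral_nonneg hab' fun x _ => sq_nonneg _
    have hid : (∫ x in a..b, (Dx (Dx W) (t, x) - Nf x) ^ 2)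
        = (∫ x in a..b, (Nf x) ^ 2)
          + (∫ x in a..b, 2 * ((Dx (Dx W) (t, x) - Nf x) * Dx (Dx W) (t, x)))
          - (∫ x in a..b, (Dx (Dx W) (t, x)) ^ 2) := by
      rw [← intervalIntegral.integral_add hint1 hint2,
          ← intervalIntegral.integral_sub (hint1.add hint2) hint3]
      apply intervalIntegral.integral_congr
      intro x _
      ring
    rw [intervalIntegral.integral_const_mul] at hid
    linarith
  -- sup bounds
  have hsup : ∀ (F : ℝ × ℝ → ℝ), ContDiff ℝ (⊤ : ℕ∞) F → F (t, a) = 0 → ∀ x ∈ Icc a b,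
      (F (t, x)) ^ 2 ≤ (b - a) * ∫ y in a..b, (Dx F (t, y)) ^ 2 := by
    intro F hF h0 x hx
    have hftc : (∫ y in a..x, Dx F (t, y)) = F (t, x) - F (t, a) :=
      intervalIntegral.integral_eq_sub_of_hasDerivAt (fun y _ => hasDerivAt_sliceX hF t y)
        ((contX _ (contDiff_Dx hF).continuous t).intervalIntegrable a x)
    have hcs := sq_integral_le (fun y => Dx F (t, y))
      (contX _ (contDiff_Dx hF).continuous t) hx.1
    have hmono : (∫ y in a..x, (Dx F (t, y)) ^ 2) ≤ ∫ y in a..b, (Dx F (t, y)) ^ 2 :=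
      intervalIntegral.integral_mono_interval le_rfl hx.1 hx.2
        (Filter.Eventually.of_forall fun y => sq_nonneg _)
        (((contX _ (contDiff_Dx hF).continuous t).pow 2).intervalIntegrable a b)
    have hnn : 0 ≤ ∫ y in a..x, (Dx F (t, y)) ^ 2 :=
      intervalIntegral.integral_nonneg hx.1 fun y _ => sq_nonneg _
    rw [h0, sub_zero] at hftc
    rw [← hftc]
    calc (∫ y in a..x, Dx F (t, y)) ^ 2 ≤ (x - a) * ∫ y in a..x, (Dx F (t, y)) ^ 2 := hcs
      _ ≤ (b - a) * ∫ y in a..b, (Dx F (t, y)) ^ 2 := by nlinarith [hx.1, hx.2]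
  have hWs := hsup W hcW (by
    show unn t a - u t a = 0
    rw [(hbcv t ht).1, (hbcu t ht).1, sub_zero])
  have hUs := hsup U2 hcU (hbcu t ht).1
  -- splitting the nonlinearity
  have hsplit : ∀ x : ℝ, Nf x = U2 (t, x) * Dx W (t, x) + W (t, x) * Dx U2 (t, x)
      + W (t, x) * Dx W (t, x) - f t x := by
    intro x
    have h1 : V2 (t, x) = U2 (t, x) + W (t, x) := by show unn t x = u t x + _; simp [hWdef, hV2def, hU2def]
    have h2 : Dx V2 (t, x) = Dx U2 (t, x) + Dx W (t, x) := by rw [hDxW]; ring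
    rw [hNfdef]
    show V2 (t, x) * Dx V2 (t, x) - U2 (t, x) * Dx U2 (t, x) - f t x = _
    rw [h1, h2]
    ring
  -- pointwise bound for Nf²
  have hptw : ∀ x ∈ Icc a b, (Nf x) ^ 2 ≤
      (4 * (b - a) * ((∫ y in a..b, (Dx U2 (t, y)) ^ 2) + ∫ y in a..b, (Dx W (t, y)) ^ 2))
          * (Dx W (t, x)) ^ 2
        + (4 * (b - a) * ∫ y in a..b, (Dx W (t, y)) ^ 2) * (Dx U2 (t, x)) ^ 2
        + 4 * (f t x) ^ 2 := by
    intro x hx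
    have h1 := hWs x hx
    have h2 := hUs x hx
    have e4 : (Nf x) ^ 2 ≤ 4 * ((U2 (t, x)) ^ 2 * (Dx W (t, x)) ^ 2
        + (W (t, x)) ^ 2 * (Dx U2 (t, x)) ^ 2 + (W (t, x)) ^ 2 * (Dx W (t, x)) ^ 2
        + (f t x) ^ 2) := by
      rw [hsplit x]
      nlinarith [sq_nonneg (U2 (t, x) * Dx W (t, x) - W (t, x) * Dx U2 (t, x)),
        sq_nonneg (U2 (t, x) * Dx W (t, x) - W (t, x) * Dx W (t, x)),
        sq_nonneg (U2 (t, x) * Dx W (t, x) + f t x),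
        sq_nonneg (W (t, x) * Dx U2 (t, x) - W (t, x) * Dx W (t, x)),
        sq_nonneg (W (t, x) * Dx U2 (t, x) + f t x),
        sq_nonneg (W (t, x) * Dx W (t, x) + f t x)]
    have m1 : (U2 (t, x)) ^ 2 * (Dx W (t, x)) ^ 2
        ≤ ((b - a) * ∫ y in a..b, (Dx U2 (t, y)) ^ 2) * (Dx W (t, x)) ^ 2 :=
      mul_le_mul_of_nonneg_right h2 (sq_nonneg _)
    have m2 : (W (t, x)) ^ 2 * (Dx U2 (t, x)) ^ 2
        ≤ ((b - a) * ∫ y in a..b, (Dx W (t, y)) ^ 2) * (Dx U2 (t, x)) ^ 2 :=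
      mul_le_mul_of_nonneg_right h1 (sq_nonneg _)
    have m3 : (W (t, x)) ^ 2 * (Dx W (t, x)) ^ 2
        ≤ ((b - a) * ∫ y in a..b, (Dx W (t, y)) ^ 2) * (Dx W (t, x)) ^ 2 :=
      mul_le_mul_of_nonneg_right h1 (sq_nonneg _)
    linarith
  -- integrate the pointwise bound
  have hRHSint : IntervalIntegrable (fun x =>
      (4 * (b - a) * ((∫ y in a..b, (Dx U2 (t, y)) ^ 2) + ∫ y in a..b, (Dx W (t, y)) ^ 2))
          * (Dx W (t, x)) ^ 2
        + (4 * (b - a) * ∫ y in a..b, (Dx W (t, y)) ^ 2) * (Dx U2 (t, x)) ^ 2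
        + 4 * (f t x) ^ 2) volume a b := by
    apply IntervalIntegrable.add
    apply IntervalIntegrable.add
    · exact (continuous_const.mul (hcwx.pow 2)).intervalIntegrable a b
    · exact (continuous_const.mul (hcux.pow 2)).intervalIntegrable a b
    · exact (continuous_const.mul (hcft.pow 2)).intervalIntegrable a b
  have hNint : (∫ x in a..b, (Nf x) ^ 2)
      ≤ (4 * (b - a) * ((∫ y in a..b, (Dx U2 (t, y)) ^ 2) + ∫ y in a..b, (Dx W (t, y)) ^ 2))
          * (∫ x in a..b, (Dx W (t, x)) ^ 2)
        + (4 * (b - a) * ∫ y in a..b, (Dx W (t, y)) ^ 2) * (∫ x in a..b, (Dx U2 (t, x)) ^ 2)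
        + 4 * ∫ x in a..b, (f t x) ^ 2 := by
    have := intervalIntegral.integral_mono_on hab' hint1 hRHSint hptw
    rwa [intervalIntegral.integral_add (f := fun x => 4 * (b - a) * ((∫ y in a..b, (Dx U2 (t, y)) ^ 2) + ∫ y in a..b, (Dx W (t, y)) ^ 2) * (Dx W (t, x)) ^ 2 + (4 * (b - a) * ∫ y in a..b, (Dx W (t, y)) ^ 2) * (Dx U2 (t, x)) ^ 2) (g := fun x => 4 * (f t x) ^ 2) (((continuous_const.mul (hcwx.pow 2)).intervalIntegrable a b).add
          ((continuous_const.mul (hcux.pow 2)).intervalIntegrable a b))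
        ((continuous_const.mul (hcft.pow 2)).intervalIntegrable a b),
      intervalIntegral.integral_add (f := fun x => 4 * (b - a) * ((∫ y in a..b, (Dx U2 (t, y)) ^ 2) + ∫ y in a..b, (Dx W (t, y)) ^ 2) * (Dx W (t, x)) ^ 2) (g := fun x => (4 * (b - a) * ∫ y in a..b, (Dx W (t, y)) ^ 2) * (Dx U2 (t, x)) ^ 2) ((continuous_const.mul (hcwx.pow 2)).intervalIntegrable a b)
        ((continuous_const.mul (hcux.pow 2)).intervalIntegrable a b),
      intervalIntegral.integral_const_mul, intervalIntegral.integral_const_mul,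
      intervalIntegral.integral_const_mul] at this
  -- conclusion
  have hEwx0 : 0 ≤ ∫ x in a..b, (Dx W (t, x)) ^ 2 :=
    intervalIntegral.integral_nonneg hab' fun x _ => sq_nonneg _
  have hEux0 : 0 ≤ ∫ x in a..b, (Dx U2 (t, x)) ^ 2 :=
    intervalIntegral.integral_nonneg hab' fun x _ => sq_nonneg _
  have hEf0 : 0 ≤ ∫ x in a..b, (f t x) ^ 2 :=
    intervalIntegral.integral_nonneg hab' fun x _ => sq_nonneg _
  have hba : (0:ℝ) < b - a := by linarith
  set Ewx := ∫ x in a..b, (Dx W (t, x)) ^ 2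
  set Eux := ∫ x in a..b, (Dx U2 (t, x)) ^ 2
  set Ef := ∫ x in a..b, (f t x) ^ 2
  nlinarith [key1, hNint, mul_nonneg hEwx0 hEwx0, mul_nonneg hEux0 hEwx0,
    mul_nonneg (mul_nonneg hba.le hEwx0) hEwx0, mul_nonneg (mul_nonneg hba.le hEux0) hEwx0,
    mul_nonneg hba.le hEf0]


end Stmt6
end

section
/- Under the Burgers-equation error setup, integrating the H¹ differential inequality gives a constant C depending only on Ω such that ∫₀ᵀ ‖w_xx(t)‖₂² dt ≤ ‖g_x‖₂² + C ∫₀ᵀ ( (‖w_x(t)‖₂² + ‖u_x(t)‖₂²) ‖w_x(t)‖₂² + ‖f(t)‖₂² ) dt; consequently ∫₀ᵀ ‖w_xx‖₂² dt is bounded by a continuous function of ‖g‖_{H¹(Ω)}², ∫₀ᵀ ‖f‖₂² dt, and ∫₀ᵀ ‖u_x‖₂² dt that tends to 0 as ‖g‖_{H¹(Ω)}² and ∫₀ᵀ ‖f‖₂² dt tend to 0. -/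
open MeasureTheory Set

namespace Stmt8

/-- time derivative of a function of (time, space). -/
noncomputable def pt (v : ℝ → ℝ → ℝ) (t x : ℝ) : ℝ := deriv (fun s => v s x) t

/-- first spatial derivative. -/
noncomputable def px (v : ℝ → ℝ → ℝ) (t x : ℝ) : ℝ := deriv (fun y => v t y) x

/-- second spatial derivative. -/
noncomputable def pxx (v : ℝ → ℝ → ℝ) (t x : ℝ) : ℝ := deriv (deriv (fun y => v t y)) x

/-- mixed derivative: spatial derivative of the time derivative. -/
noncomputable def pxt (v : ℝ → ℝ → ℝ) (t x : ℝ) : ℝ :=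
  deriv (fun y => deriv (fun s => v s y) t) x

section Aux
section Calc
variable {V : ℝ × ℝ → ℝ}

lemma slice_x (hV : ContDiff ℝ (⊤ : ℕ∞) V) (t x : ℝ) :
    HasDerivAt (fun y => V (t, y)) (fderiv ℝ V (t, x) (0, 1)) x :=
  (hV.differentiable (by simp) (t, x)).hasFDerivAt.comp_hasDerivAt x
    ((hasDerivAt_const x t).prodMk (hasDerivAt_id x))

lemma slice_t (hV : ContDiff ℝ (⊤ : ℕ∞) V) (t x : ℝ) :
    HasDerivAt (fun s => V (s, x)) (fderiv ℝ V (t, x) (1, 0)) t :=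
  (hV.differentiable (by simp) (t, x)).hasFDerivAt.comp_hasDerivAt t
    ((hasDerivAt_id t).prodMk (hasDerivAt_const t x))

noncomputable def Dx (V : ℝ × ℝ → ℝ) : ℝ × ℝ → ℝ := fun p => fderiv ℝ V p (0, 1)
noncomputable def Dt (V : ℝ × ℝ → ℝ) : ℝ × ℝ → ℝ := fun p => fderiv ℝ V p (1, 0)

lemma contDiff_Dx (hV : ContDiff ℝ (⊤ : ℕ∞) V) : ContDiff ℝ (⊤ : ℕ∞) (Dx V) :=
  (hV.fderiv_right (by simp)).clm_apply contDiff_const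

lemma contDiff_Dt (hV : ContDiff ℝ (⊤ : ℕ∞) V) : ContDiff ℝ (⊤ : ℕ∞) (Dt V) :=
  (hV.fderiv_right (by simp)).clm_apply contDiff_const

end Calc
section Curried
variable {v : ℝ → ℝ → ℝ}

/-- the uncurried version -/
lemma px_eq (hv : ContDiff ℝ (⊤ : ℕ∞) (fun p : ℝ × ℝ => v p.1 p.2)) (t x : ℝ) :
    px v t x = Dx (fun p : ℝ × ℝ => v p.1 p.2) (t, x) :=
  (slice_x hv t x).deriv

lemma pt_eq (hv : ContDiff ℝ (⊤ : ℕ∞) (fun p : ℝ × ℝ => v p.1 p.2)) (t x : ℝ) :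
    pt v t x = Dt (fun p : ℝ × ℝ => v p.1 p.2) (t, x) :=
  (slice_t hv t x).deriv

lemma hasDerivAt_x (hv : ContDiff ℝ (⊤ : ℕ∞) (fun p : ℝ × ℝ => v p.1 p.2)) (t x : ℝ) :
    HasDerivAt (fun y => v t y) (px v t x) x := by
  rw [px_eq hv]; exact slice_x hv t x

lemma hasDerivAt_t (hv : ContDiff ℝ (⊤ : ℕ∞) (fun p : ℝ × ℝ => v p.1 p.2)) (t x : ℝ) :
    HasDerivAt (fun s => v s x) (pt v t x) t := by
  rw [pt_eq hv]; exact slice_t hv t x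

lemma pxx_eq (hv : ContDiff ℝ (⊤ : ℕ∞) (fun p : ℝ × ℝ => v p.1 p.2)) (t x : ℝ) :
    pxx v t x = Dx (Dx (fun p : ℝ × ℝ => v p.1 p.2)) (t, x) := by
  have h1 : deriv (fun y => v t y) = fun y => Dx (fun p : ℝ × ℝ => v p.1 p.2) (t, y) :=
    funext fun y => px_eq hv t y
  rw [pxx, h1]
  exact (slice_x (contDiff_Dx hv) t x).deriv

lemma hasDerivAt_px_x (hv : ContDiff ℝ (⊤ : ℕ∞) (fun p : ℝ × ℝ => v p.1 p.2)) (t x : ℝ) :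
    HasDerivAt (fun y => px v t y) (pxx v t x) x := by
  rw [pxx_eq hv]
  have h1 : (fun y => px v t y) = fun y => Dx (fun p : ℝ × ℝ => v p.1 p.2) (t, y) :=
    funext fun y => px_eq hv t y
  rw [h1]; exact slice_x (contDiff_Dx hv) t x

lemma pxt_eq (hv : ContDiff ℝ (⊤ : ℕ∞) (fun p : ℝ × ℝ => v p.1 p.2)) (t x : ℝ) :
    pxt v t x = Dx (Dt (fun p : ℝ × ℝ => v p.1 p.2)) (t, x) := by
  have h1 : (fun y => deriv (fun s => v s y) t)
      = fun y => Dt (fun p : ℝ × ℝ => v p.1 p.2) (t, y) :=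
    funext fun y => pt_eq hv t y
  rw [pxt, h1]
  exact (slice_x (contDiff_Dt hv) t x).deriv

lemma hasDerivAt_pt_x (hv : ContDiff ℝ (⊤ : ℕ∞) (fun p : ℝ × ℝ => v p.1 p.2)) (t x : ℝ) :
    HasDerivAt (fun y => pt v t y) (pxt v t x) x := by
  rw [pxt_eq hv]
  have h1 : (fun y => pt v t y) = fun y => Dt (fun p : ℝ × ℝ => v p.1 p.2) (t, y) :=
    funext fun y => pt_eq hv t y
  rw [h1]; exact slice_x (contDiff_Dt hv) t x

/-- Clairaut: the time derivative of `px v` is `pxt v`. -/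
lemma hasDerivAt_px_t (hv : ContDiff ℝ (⊤ : ℕ∞) (fun p : ℝ × ℝ => v p.1 p.2)) (t x : ℝ) :
    HasDerivAt (fun s => px v s x) (pxt v t x) t := by
  set V := fun p : ℝ × ℝ => v p.1 p.2 with hVdef
  have h1 : (fun s => px v s x) = fun s => Dx V (s, x) := funext fun s => px_eq hv s x
  have h2 := slice_t (contDiff_Dx hv) t x
  rw [h1]
  convert h2 using 1
  -- `pxt v t x = fderiv ℝ (Dx V) (t,x) (1,0)`, via symmetry of second derivative
  rw [pxt_eq hv]
  set f'' := fderiv ℝ (fderiv ℝ V) (t, x) with hf''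
  have hdV : ∀ p, HasFDerivAt V (fderiv ℝ V p) p := fun p =>
    (hv.differentiable (by simp) p).hasFDerivAt
  have hdDV : HasFDerivAt (fderiv ℝ V) f'' (t, x) :=
    (((hv.fderiv_right (m := (⊤ : ℕ∞)) (by simp)).differentiable (by simp)) (t, x)).hasFDerivAt
  have hsym := second_derivative_symmetric hdV hdDV
  have hDx : HasFDerivAt (Dx V)
      ((ContinuousLinearMap.apply ℝ ℝ ((0 : ℝ), (1 : ℝ))).comp f'') (t, x) :=
    (ContinuousLinearMap.apply ℝ ℝ ((0 : ℝ), (1 : ℝ))).hasFDerivAt.comp (t, x) hdDV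
  have hDt : HasFDerivAt (Dt V)
      ((ContinuousLinearMap.apply ℝ ℝ ((1 : ℝ), (0 : ℝ))).comp f'') (t, x) :=
    (ContinuousLinearMap.apply ℝ ℝ ((1 : ℝ), (0 : ℝ))).hasFDerivAt.comp (t, x) hdDV
  have e1 : Dx (Dt V) (t, x) = f'' (0, 1) (1, 0) := by
    simp only [Dx, hDt.fderiv, ContinuousLinearMap.coe_comp', Function.comp_apply,
      ContinuousLinearMap.apply_apply]
  have e2 : (((ContinuousLinearMap.apply ℝ ℝ) ((0 : ℝ), (1 : ℝ))).comp f'') (1, 0)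
      = f'' (1, 0) (0, 1) := by
    simp only [ContinuousLinearMap.coe_comp', Function.comp_apply,
      ContinuousLinearMap.apply_apply]
  rw [← hVdef, e1, hDx.fderiv, e2]
  exact hsym _ _

lemma continuous_px (hv : ContDiff ℝ (⊤ : ℕ∞) (fun p : ℝ × ℝ => v p.1 p.2)) :
    Continuous (fun p : ℝ × ℝ => px v p.1 p.2) := by
  have : (fun p : ℝ × ℝ => px v p.1 p.2) = Dx (fun p : ℝ × ℝ => v p.1 p.2) :=
    funext fun p => px_eq hv p.1 p.2
  rw [this]; exact (contDiff_Dx hv).continuous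

lemma continuous_pt (hv : ContDiff ℝ (⊤ : ℕ∞) (fun p : ℝ × ℝ => v p.1 p.2)) :
    Continuous (fun p : ℝ × ℝ => pt v p.1 p.2) := by
  have : (fun p : ℝ × ℝ => pt v p.1 p.2) = Dt (fun p : ℝ × ℝ => v p.1 p.2) :=
    funext fun p => pt_eq hv p.1 p.2
  rw [this]; exact (contDiff_Dt hv).continuous

lemma continuous_pxx (hv : ContDiff ℝ (⊤ : ℕ∞) (fun p : ℝ × ℝ => v p.1 p.2)) :
    Continuous (fun p : ℝ × ℝ => pxx v p.1 p.2) := by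
  have : (fun p : ℝ × ℝ => pxx v p.1 p.2) = Dx (Dx (fun p : ℝ × ℝ => v p.1 p.2)) :=
    funext fun p => pxx_eq hv p.1 p.2
  rw [this]; exact (contDiff_Dx (contDiff_Dx hv)).continuous

lemma continuous_pxt (hv : ContDiff ℝ (⊤ : ℕ∞) (fun p : ℝ × ℝ => v p.1 p.2)) :
    Continuous (fun p : ℝ × ℝ => pxt v p.1 p.2) := by
  have : (fun p : ℝ × ℝ => pxt v p.1 p.2) = Dx (Dt (fun p : ℝ × ℝ => v p.1 p.2)) :=
    funext fun p => pxt_eq hv p.1 p.2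
  rw [this]; exact (contDiff_Dx (contDiff_Dt hv)).continuous

end Curried
section Helpers

lemma deriv_zero_of_zero_on_Icc {φ : ℝ → ℝ} {d T t : ℝ} (hT : 0 < T)
    (h : HasDerivAt φ d t) (hz : ∀ s ∈ Icc (0:ℝ) T, φ s = 0) (ht : t ∈ Icc (0:ℝ) T) :
    d = 0 := by
  have hu : UniqueDiffWithinAt ℝ (Icc (0:ℝ) T) t := uniqueDiffOn_Icc hT t ht
  have h1 : HasDerivWithinAt φ d (Icc (0:ℝ) T) t := h.hasDerivWithinAt
  have h2 : HasDerivWithinAt φ 0 (Icc (0:ℝ) T) t :=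
    (hasDerivWithinAt_const t (Icc (0:ℝ) T) (0:ℝ)).congr hz (hz t ht)
  exact (h1.derivWithin hu).symm.trans (h2.derivWithin hu)

lemma cs_integral {φ : ℝ → ℝ} (hφ : Continuous φ) {c d : ℝ} (hcd : c ≤ d) :
    (∫ x in c..d, φ x) ^ 2 ≤ (d - c) * ∫ x in c..d, φ x ^ 2 := by
  rcases eq_or_lt_of_le hcd with h | h
  · simp [← h]
  · set I := ∫ x in c..d, φ x with hI
    set J := ∫ x in c..d, φ x ^ 2 with hJ
    set m := I / (d - c) with hm
    have key : (0:ℝ) ≤ ∫ x in c..d, (φ x - m) ^ 2 :=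
      intervalIntegral.integral_nonneg hcd fun x _ => sq_nonneg _
    have expand : ∫ x in c..d, (φ x - m) ^ 2 = J - 2 * m * I + m ^ 2 * (d - c) := by
      have e : (fun x => (φ x - m) ^ 2)
          = fun x => (φ x ^ 2 - 2 * m * φ x) + m ^ 2 := funext fun x => by ring
      rw [e, intervalIntegral.integral_add (f := fun x => φ x ^ 2 - 2 * m * φ x) (g := fun _ => m ^ 2) (((hφ.pow 2).sub
            ((continuous_const.mul hφ))).intervalIntegrable c d)
            (continuous_const.intervalIntegrable c d),
        intervalIntegral.integral_sub (f := fun x => φ x ^ 2) (g := fun x => 2 * m * φ x) ((hφ.pow 2).intervalIntegrable c d)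
          ((continuous_const.mul hφ).intervalIntegrable c d),
        intervalIntegral.integral_const_mul, intervalIntegral.integral_const]
      simp only [smul_eq_mul, ← hI, ← hJ]
      ring
    have hdc : (0:ℝ) < d - c := by linarith
    have hmI : m * (d - c) = I := div_mul_cancel₀ I (by linarith)
    rw [expand] at key
    nlinarith [key, hmI]

lemma integral_sq_mono_interval {ψ : ℝ → ℝ} (hψ : Continuous ψ) {a x b : ℝ}
    (h1 : a ≤ x) (h2 : x ≤ b) :
    (∫ y in a..x, ψ y ^ 2) ≤ ∫ y in a..b, ψ y ^ 2 := by
  rw [← intervalIntegral.integral_add_adjacent_intervals (f := fun y => ψ y ^ 2) (μ := volume)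
      (a := a) (b := x) (c := b)
      ((hψ.pow 2).intervalIntegrable a x) ((hψ.pow 2).intervalIntegrable x b)]
  have : (0:ℝ) ≤ ∫ y in x..b, ψ y ^ 2 :=
    intervalIntegral.integral_nonneg h2 fun _ _ => sq_nonneg _
  linarith

lemma sq_le_poincare {φ ψ : ℝ → ℝ} {a b : ℝ} (hab : a < b)
    (hφ : ∀ y, HasDerivAt φ (ψ y) y) (hψ : Continuous ψ) (ha : φ a = 0)
    {x : ℝ} (hx : x ∈ Icc a b) :
    φ x ^ 2 ≤ (b - a) * ∫ y in a..b, ψ y ^ 2 := by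
  have hfi : φ x = ∫ y in a..x, ψ y := by
    rw [intervalIntegral.integral_eq_sub_of_hasDerivAt (fun y _ => hφ y)
      (hψ.intervalIntegrable _ _), ha, sub_zero]
  have h1 : (∫ y in a..x, ψ y) ^ 2 ≤ (x - a) * ∫ y in a..x, ψ y ^ 2 := cs_integral hψ hx.1
  have h2 := integral_sq_mono_interval hψ hx.1 hx.2
  have h3 : (0:ℝ) ≤ ∫ y in a..x, ψ y ^ 2 :=
    intervalIntegral.integral_nonneg hx.1 fun _ _ => sq_nonneg _
  have h4 := hx.1
  have h5 := hx.2
  rw [hfi]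
  nlinarith

lemma hasDerivAt_param {F F' : ℝ → ℝ → ℝ} {a b : ℝ}
    (hF : Continuous fun p : ℝ × ℝ => F p.1 p.2)
    (hF' : Continuous fun p : ℝ × ℝ => F' p.1 p.2)
    (hd : ∀ s x, HasDerivAt (fun s' => F s' x) (F' s x) s) (t : ℝ) :
    HasDerivAt (fun s => ∫ x in a..b, F s x) (∫ x in a..b, F' t x) t := by
  obtain ⟨M, hM⟩ : ∃ M, ∀ p ∈ Icc (t-1) (t+1) ×ˢ uIcc a b,
      ‖(fun p : ℝ × ℝ => F' p.1 p.2) p‖ ≤ M :=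
    (isCompact_Icc.prod isCompact_uIcc).exists_bound_of_continuousOn hF'.continuousOn
  refine (intervalIntegral.hasDerivAt_integral_of_dominated_loc_of_deriv_le
    (F := F) (F' := F') (bound := fun _ => M) (Metric.ball_mem_nhds t one_pos) ?_ ?_ ?_ ?_ ?_ ?_).2
  · exact Filter.Eventually.of_forall fun s =>
      ((hF.comp (Continuous.prodMk_right s)).aestronglyMeasurable).restrict
  · exact (hF.comp (Continuous.prodMk_right t)).intervalIntegrable a b
  · exact ((hF'.comp (Continuous.prodMk_right t)).aestronglyMeasurable).restrict
  · refine Filter.Eventually.of_forall fun x hx s hs => ?_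
    have hs' : s ∈ Icc (t-1) (t+1) := by
      have := abs_lt.1 (by simpa [Real.dist_eq] using hs)
      constructor <;> linarith [this.1, this.2]
    exact hM (s, x) ⟨hs', uIoc_subset_uIcc hx⟩
  · exact continuous_const.intervalIntegrable a b
  · exact Filter.Eventually.of_forall fun x _ s _ => hd s x

end Helpers

end Aux

/-- Integrating the H¹ differential inequality (`w = u_nn - u`, `g = w(0,·)`):
`∫₀ᵀ ‖w_xx‖₂² dt ≤ ‖g_x‖₂² + C ∫₀ᵀ ((‖w_x‖₂² + ‖u_x‖₂²) ‖w_x‖₂² + ‖f‖₂²) dt`. -/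
theorem burgers_H1_second_derivative_integral_bound (a b : ℝ) (hab : a < b) :
    ∃ C : ℝ, 0 < C ∧
      ∀ (T : ℝ) (u unn f : ℝ → ℝ → ℝ),
        0 < T →
        ContDiff ℝ (⊤ : ℕ∞) (fun p : ℝ × ℝ => u p.1 p.2) →
        ContDiff ℝ (⊤ : ℕ∞) (fun p : ℝ × ℝ => unn p.1 p.2) →
        ContDiff ℝ (⊤ : ℕ∞) (fun p : ℝ × ℝ => f p.1 p.2) →
        (∀ t ∈ Icc (0 : ℝ) T, ∀ x ∈ Icc a b,
          pt u t x + u t x * px u t x - pxx u t x = 0) →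
        (∀ t ∈ Icc (0 : ℝ) T, u t a = 0 ∧ u t b = 0) →
        (∀ t ∈ Icc (0 : ℝ) T, ∀ x ∈ Icc a b,
          pt unn t x + unn t x * px unn t x - pxx unn t x = f t x) →
        (∀ t ∈ Icc (0 : ℝ) T, unn t a = 0 ∧ unn t b = 0) →
        (∫ s in (0 : ℝ)..T, ∫ x in a..b, (pxx unn s x - pxx u s x) ^ 2) ≤
          (∫ x in a..b, (px unn 0 x - px u 0 x) ^ 2) +
            C * ∫ s in (0 : ℝ)..T,
              (((∫ x in a..b, (px unn s x - px u s x) ^ 2) +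
                  (∫ x in a..b, (px u s x) ^ 2)) *
                (∫ x in a..b, (px unn s x - px u s x) ^ 2) +
                ∫ x in a..b, (f s x) ^ 2) := by
  have hba : (0:ℝ) < b - a := by linarith
  refine ⟨9 * (b - a) + 3, by nlinarith, ?_⟩
  intro T u unn f hT hu hunn hf pdeu bcu pdeunn bcunn
  set w : ℝ → ℝ → ℝ := fun t x => unn t x - u t x with hwdef
  have hw : ContDiff ℝ (⊤ : ℕ∞) (fun p : ℝ × ℝ => w p.1 p.2) := hunn.sub hu
  -- continuity facts
  have cpxw : Continuous fun p : ℝ × ℝ => px w p.1 p.2 := continuous_px hw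
  have cpxxw : Continuous fun p : ℝ × ℝ => pxx w p.1 p.2 := continuous_pxx hw
  have cptw : Continuous fun p : ℝ × ℝ => pt w p.1 p.2 := continuous_pt hw
  have cpxtw : Continuous fun p : ℝ × ℝ => pxt w p.1 p.2 := continuous_pxt hw
  have cpxu : Continuous fun p : ℝ × ℝ => px u p.1 p.2 := continuous_px hu
  have cpxunn : Continuous fun p : ℝ × ℝ => px unn p.1 p.2 := continuous_px hunn
  have cf : Continuous fun p : ℝ × ℝ => f p.1 p.2 := hf.continuous
  have cunn : Continuous fun p : ℝ × ℝ => unn p.1 p.2 := hunn.continuous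
  have cw : Continuous fun p : ℝ × ℝ => w p.1 p.2 := hw.continuous
  -- derivative decompositions
  have px_w : ∀ t x, px w t x = px unn t x - px u t x := fun t x =>
    ((hasDerivAt_x hunn t x).sub (hasDerivAt_x hu t x)).deriv
  have pt_w : ∀ t x, pt w t x = pt unn t x - pt u t x := fun t x =>
    ((hasDerivAt_t hunn t x).sub (hasDerivAt_t hu t x)).deriv
  have pxx_w : ∀ t x, pxx w t x = pxx unn t x - pxx u t x := by
    intro t x
    have h1 : (fun y => px w t y) = fun y => px unn t y - px u t y :=
      funext fun y => px_w t y
    have h2 : HasDerivAt (fun y => px w t y) (pxx unn t x - pxx u t x) x := by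
      rw [h1]; exact (hasDerivAt_px_x hunn t x).sub (hasDerivAt_px_x hu t x)
    exact (hasDerivAt_px_x hw t x).unique h2
  -- rewrite the goal in terms of `w`
  simp only [show ∀ s x, px unn s x - px u s x = px w s x from fun s x => (px_w s x).symm,
    show ∀ s x, pxx unn s x - pxx u s x = pxx w s x from fun s x => (pxx_w s x).symm]
  set A : ℝ → ℝ := fun s => ∫ x in a..b, (px w s x) ^ 2 with hAdef
  set B : ℝ → ℝ := fun s => ∫ x in a..b, (pxx w s x) ^ 2 with hBdef
  set Uq : ℝ → ℝ := fun s => ∫ x in a..b, (px u s x) ^ 2 with hUdef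
  set Fq : ℝ → ℝ := fun s => ∫ x in a..b, (f s x) ^ 2 with hFdef
  set Un : ℝ → ℝ := fun s => ∫ x in a..b, (px unn s x) ^ 2 with hUndef
  set A' : ℝ → ℝ := fun s => ∫ x in a..b, 2 * px w s x * pxt w s x with hA'def
  show (∫ s in (0:ℝ)..T, B s) ≤ A 0 + (9 * (b - a) + 3) * ∫ s in (0:ℝ)..T,
      ((A s + Uq s) * A s + Fq s)
  -- boundary values of w and of pt w
  have bcw : ∀ s ∈ Icc (0:ℝ) T, w s a = 0 ∧ w s b = 0 := by
    intro s hs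
    constructor
    · show unn s a - u s a = 0; rw [(bcunn s hs).1, (bcu s hs).1]; ring
    · show unn s b - u s b = 0; rw [(bcunn s hs).2, (bcu s hs).2]; ring
  have ptw_a : ∀ s ∈ Icc (0:ℝ) T, pt w s a = 0 := fun s hs =>
    deriv_zero_of_zero_on_Icc hT (hasDerivAt_t hw s a) (fun s' hs' => (bcw s' hs').1) hs
  have ptw_b : ∀ s ∈ Icc (0:ℝ) T, pt w s b = 0 := fun s hs =>
    deriv_zero_of_zero_on_Icc hT (hasDerivAt_t hw s b) (fun s' hs' => (bcw s' hs').2) hs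
  -- PDE satisfied by w
  have pdew : ∀ s ∈ Icc (0:ℝ) T, ∀ x ∈ Icc a b,
      pt w s x = pxx w s x - unn s x * px w s x - w s x * px u s x + f s x := by
    intro s hs x hx
    have h1 := pdeunn s hs x hx
    have h2 := pdeu s hs x hx
    rw [pt_w, pxx_w, px_w]
    show _ = _ - _ - (unn s x - u s x) * px u s x + _
    linear_combination h1 - h2
  -- differentiability of A
  have hA'd : ∀ t, HasDerivAt A (A' t) t := fun t =>
    hasDerivAt_param (cpxw.pow 2) ((continuous_const.mul cpxw).mul cpxtw)
      (fun s x => by simpa using (hasDerivAt_px_t hw s x).pow 2) t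
  -- integration by parts
  have ibp : ∀ s ∈ Icc (0:ℝ) T,
      (∫ x in a..b, px w s x * pxt w s x) = - ∫ x in a..b, pxx w s x * pt w s x := by
    intro s hs
    have h := intervalIntegral.integral_mul_deriv_eq_deriv_mul
      (u := fun x => px w s x) (u' := fun x => pxx w s x)
      (v := fun x => pt w s x) (v' := fun x => pxt w s x)
      (fun x _ => hasDerivAt_px_x hw s x) (fun x _ => hasDerivAt_pt_x hw s x)
      ((cpxxw.comp (Continuous.prodMk_right s)).intervalIntegrable a b)
      ((cpxtw.comp (Continuous.prodMk_right s)).intervalIntegrable a b)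
    rw [h]
    simp only [ptw_a s hs, ptw_b s hs]
    ring
  have hA'val : ∀ s ∈ Icc (0:ℝ) T, A' s = -2 * ∫ x in a..b, pxx w s x * pt w s x := by
    intro s hs
    have h0 : A' s = 2 * ∫ x in a..b, px w s x * pxt w s x := by
      show (∫ x in a..b, 2 * px w s x * pxt w s x) = _
      simp_rw [mul_assoc]
      exact intervalIntegral.integral_const_mul 2 _
    rw [h0, ibp s hs]; ring
  -- nonnegativity
  have hAnn : ∀ s, 0 ≤ A s := fun s =>
    intervalIntegral.integral_nonneg hab.le fun x _ => sq_nonneg _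
  have hUnn : ∀ s, 0 ≤ Uq s := fun s =>
    intervalIntegral.integral_nonneg hab.le fun x _ => sq_nonneg _
  have hFnn : ∀ s, 0 ≤ Fq s := fun s =>
    intervalIntegral.integral_nonneg hab.le fun x _ => sq_nonneg _
  -- Un ≤ 2A + 2U
  have hUnle : ∀ s, Un s ≤ 2 * A s + 2 * Uq s := by
    intro s
    have pw : ∀ x ∈ Icc a b, (px unn s x) ^ 2 ≤ 2 * (px w s x) ^ 2 + 2 * (px u s x) ^ 2 := by
      intro x hx
      have h' : px unn s x = px w s x + px u s x := by
        have := px_w s x; linarith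
      rw [h']
      nlinarith [sq_nonneg (px w s x - px u s x)]
    have j0 : IntervalIntegrable (fun x => (px unn s x) ^ 2) volume a b :=
      ((cpxunn.comp (Continuous.prodMk_right s)).pow 2).intervalIntegrable a b
    have j3 : IntervalIntegrable
        (fun x => 2 * (px w s x) ^ 2 + 2 * (px u s x) ^ 2) volume a b :=
      ((continuous_const.mul ((cpxw.comp (Continuous.prodMk_right s)).pow 2)).add
        (continuous_const.mul ((cpxu.comp (Continuous.prodMk_right s)).pow 2))).intervalIntegrable a b
    have mono := intervalIntegral.integral_mono_on hab.le j0 j3 pw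
    have j1 : IntervalIntegrable (fun x => 2 * (px w s x) ^ 2) volume a b :=
      (continuous_const.mul ((cpxw.comp (Continuous.prodMk_right s)).pow 2)).intervalIntegrable a b
    have j2 : IntervalIntegrable (fun x => 2 * (px u s x) ^ 2) volume a b :=
      (continuous_const.mul ((cpxu.comp (Continuous.prodMk_right s)).pow 2)).intervalIntegrable a b
    have e : (∫ x in a..b, (2 * (px w s x) ^ 2 + 2 * (px u s x) ^ 2))
        = 2 * A s + 2 * Uq s := by
      rw [intervalIntegral.integral_add j1 j2,
        intervalIntegral.integral_const_mul, intervalIntegral.integral_const_mul]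
    rw [e] at mono
    exact mono
  -- energy inequality
  have energy : ∀ s ∈ Icc (0:ℝ) T,
      B s + A' s ≤ 3 * (b - a) * Un s * A s + (3 * (b - a) * A s * Uq s + 3 * Fq s) := by
    intro s hs
    have intg1 : IntervalIntegrable
        (fun x => (pxx w s x) ^ 2 - 2 * (pxx w s x * pt w s x)) volume a b :=
      (((cpxxw.comp (Continuous.prodMk_right s)).pow 2).sub
        (continuous_const.mul ((cpxxw.comp (Continuous.prodMk_right s)).mul
          (cptw.comp (Continuous.prodMk_right s))))).intervalIntegrable a b
    have intg2 : IntervalIntegrable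
        (fun x => (3 * (b - a) * Un s) * (px w s x) ^ 2 +
          ((3 * (b - a) * A s) * (px u s x) ^ 2 + 3 * (f s x) ^ 2)) volume a b :=
      ((continuous_const.mul ((cpxw.comp (Continuous.prodMk_right s)).pow 2)).add
        ((continuous_const.mul ((cpxu.comp (Continuous.prodMk_right s)).pow 2)).add
          (continuous_const.mul ((cf.comp (Continuous.prodMk_right s)).pow 2)))).intervalIntegrable a b
    have pw : ∀ x ∈ Icc a b, (pxx w s x) ^ 2 - 2 * (pxx w s x * pt w s x)
        ≤ (3 * (b - a) * Un s) * (px w s x) ^ 2 +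
          ((3 * (b - a) * A s) * (px u s x) ^ 2 + 3 * (f s x) ^ 2) := by
      intro x hx
      have hpde := pdew s hs x hx
      have p1 : (unn s x) ^ 2 ≤ (b - a) * Un s :=
        sq_le_poincare hab (fun y => hasDerivAt_x hunn s y)
          (cpxunn.comp (Continuous.prodMk_right s)) (bcunn s hs).1 hx
      have p2 : (w s x) ^ 2 ≤ (b - a) * A s :=
        sq_le_poincare hab (fun y => hasDerivAt_x hw s y)
          (cpxw.comp (Continuous.prodMk_right s)) (bcw s hs).1 hx
      have h1' : (unn s x) ^ 2 * (px w s x) ^ 2 ≤ ((b - a) * Un s) * (px w s x) ^ 2 :=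
        mul_le_mul_of_nonneg_right p1 (sq_nonneg _)
      have h2' : (w s x) ^ 2 * (px u s x) ^ 2 ≤ ((b - a) * A s) * (px u s x) ^ 2 :=
        mul_le_mul_of_nonneg_right p2 (sq_nonneg _)
      rw [hpde]
      have hM : pxx w s x ^ 2 - 2 * (pxx w s x *
            (pxx w s x - unn s x * px w s x - w s x * px u s x + f s x))
          ≤ (unn s x * px w s x + w s x * px u s x - f s x) ^ 2 := by
        nlinarith [sq_nonneg (pxx w s x -
          (unn s x * px w s x + w s x * px u s x - f s x))]
      have hM2 : (unn s x * px w s x + w s x * px u s x - f s x) ^ 2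
          ≤ 3 * ((unn s x) ^ 2 * (px w s x) ^ 2) + 3 * ((w s x) ^ 2 * (px u s x) ^ 2)
            + 3 * (f s x) ^ 2 := by
        nlinarith [sq_nonneg (unn s x * px w s x - w s x * px u s x),
          sq_nonneg (unn s x * px w s x + f s x),
          sq_nonneg (w s x * px u s x + f s x)]
      nlinarith [hM, hM2, h1', h2']
    have mono := intervalIntegral.integral_mono_on hab.le intg1 intg2 pw
    have e1 : (∫ x in a..b, ((pxx w s x) ^ 2 - 2 * (pxx w s x * pt w s x)))
        = B s - 2 * ∫ x in a..b, pxx w s x * pt w s x := by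
      have k1 : IntervalIntegrable (fun x => (pxx w s x) ^ 2) volume a b :=
        ((cpxxw.comp (Continuous.prodMk_right s)).pow 2).intervalIntegrable a b
      have k2 : IntervalIntegrable (fun x => 2 * (pxx w s x * pt w s x)) volume a b :=
        (continuous_const.mul ((cpxxw.comp (Continuous.prodMk_right s)).mul
          (cptw.comp (Continuous.prodMk_right s)))).intervalIntegrable a b
      rw [intervalIntegral.integral_sub k1 k2, intervalIntegral.integral_const_mul]
    have e2 : (∫ x in a..b, ((3 * (b - a) * Un s) * (px w s x) ^ 2 +
          ((3 * (b - a) * A s) * (px u s x) ^ 2 + 3 * (f s x) ^ 2)))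
        = 3 * (b - a) * Un s * A s + (3 * (b - a) * A s * Uq s + 3 * Fq s) := by
      have i1 : IntervalIntegrable (fun x => (3 * (b - a) * Un s) * (px w s x) ^ 2) volume a b :=
        (continuous_const.mul ((cpxw.comp (Continuous.prodMk_right s)).pow 2)).intervalIntegrable a b
      have i2 : IntervalIntegrable (fun x => (3 * (b - a) * A s) * (px u s x) ^ 2) volume a b :=
        (continuous_const.mul ((cpxu.comp (Continuous.prodMk_right s)).pow 2)).intervalIntegrable a b
      have i3 : IntervalIntegrable (fun x => 3 * (f s x) ^ 2) volume a b :=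
        (continuous_const.mul ((cf.comp (Continuous.prodMk_right s)).pow 2)).intervalIntegrable a b
      rw [intervalIntegral.integral_add i1 (i2.add i3),
        intervalIntegral.integral_add i2 i3,
        intervalIntegral.integral_const_mul, intervalIntegral.integral_const_mul,
        intervalIntegral.integral_const_mul]
    have hA' := hA'val s hs
    rw [e1, e2] at mono
    linarith
  -- key pointwise-in-time inequality
  have key : ∀ s ∈ Icc (0:ℝ) T,
      B s ≤ -A' s + (9 * (b - a) + 3) * ((A s + Uq s) * A s + Fq s) := by
    intro s hs
    have h := energy s hs
    have h2 := hUnle s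
    have hA := hAnn s
    have hU := hUnn s
    have hF := hFnn s
    nlinarith [mul_le_mul_of_nonneg_right h2 hA, mul_nonneg hA hU, mul_nonneg hA hA]
  -- continuity in time of all quantities
  have contA : Continuous A :=
    intervalIntegral.continuous_parametric_intervalIntegral_of_continuous'
      (f := fun s x => (px w s x) ^ 2) (by exact cpxw.pow 2) a b
  have contB : Continuous B :=
    intervalIntegral.continuous_parametric_intervalIntegral_of_continuous'
      (f := fun s x => (pxx w s x) ^ 2) (by exact cpxxw.pow 2) a b
  have contU : Continuous Uq :=
    intervalIntegral.continuous_parametric_intervalIntegral_of_continuous'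
      (f := fun s x => (px u s x) ^ 2) (by exact cpxu.pow 2) a b
  have contF : Continuous Fq :=
    intervalIntegral.continuous_parametric_intervalIntegral_of_continuous'
      (f := fun s x => (f s x) ^ 2) (by exact cf.pow 2) a b
  have contA' : Continuous A' :=
    intervalIntegral.continuous_parametric_intervalIntegral_of_continuous'
      (f := fun s x => 2 * px w s x * pxt w s x)
      (by exact (continuous_const.mul cpxw).mul cpxtw) a b
  have contG : Continuous fun s => (A s + Uq s) * A s + Fq s :=
    (((contA.add contU).mul contA).add contF)
  -- integrate in time
  have m1 : IntervalIntegrable B volume 0 T := contB.intervalIntegrable 0 T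
  have m2 : IntervalIntegrable
      (fun s => -A' s + (9 * (b - a) + 3) * ((A s + Uq s) * A s + Fq s)) volume 0 T :=
    (contA'.neg.add (continuous_const.mul contG)).intervalIntegrable 0 T
  have mono2 := intervalIntegral.integral_mono_on hT.le m1 m2 key
  have ftc : (∫ s in (0:ℝ)..T, A' s) = A T - A 0 :=
    intervalIntegral.integral_eq_sub_of_hasDerivAt (fun s _ => hA'd s)
      (contA'.intervalIntegrable 0 T)
  have eG : (∫ s in (0:ℝ)..T, (-A' s + (9 * (b - a) + 3) * ((A s + Uq s) * A s + Fq s)))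
      = -(A T - A 0) + (9 * (b - a) + 3) * ∫ s in (0:ℝ)..T, ((A s + Uq s) * A s + Fq s) := by
    rw [intervalIntegral.integral_add (f := fun s => -A' s)
        (g := fun s => (9 * (b - a) + 3) * ((A s + Uq s) * A s + Fq s)) (contA'.neg.intervalIntegrable 0 T)
        ((continuous_const.mul contG).intervalIntegrable 0 T),
      intervalIntegral.integral_neg, ftc, intervalIntegral.integral_const_mul]
  have hAT : 0 ≤ A T := hAnn T
  rw [eG] at mono2
  linarith

end Stmt8
end
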